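/- arXiv:1010.3965 — 10 statements merged into one kernel-verified Lean document; each statement's English description precedes it below -/
import Mathlib

section
/- For every even positive integer k, the polynomial (x+y)(x+z)(y+z) divides x·y^k + y·x^k + x·z^k + z·x^k + y·z^k + z·y^k in 𝔽₂[x,y,z]; the quotient g_k(x,y,z) is homogeneous of degree k−2. -/
open MvPolynomial

namespace F2aux

noncomputable def f (k : ℕ) : MvPolynomial (Fin 3) (ZMod 2) :=
  X 0 * X 1 ^ k + X 1 * X 0 ^ k + X 0 * X 2 ^ k + X 2 * X 0 ^ k +
    X 1 * X 2 ^ k + X 2 * X 1 ^ k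

lemma h2 : (2 : MvPolynomial (Fin 3) (ZMod 2)) = 0 := by
  exact_mod_cast CharP.cast_eq_zero (MvPolynomial (Fin 3) (ZMod 2)) 2

lemma frec (m : ℕ) :
    f (m + 3) = (X 0 + X 1 + X 2) * f (m + 2)
      + (X 0 * X 1 + X 0 * X 2 + X 1 * X 2) * f (m + 1)
      + (X 0 * X 1 * X 2) * f m := by
  unfold f
  linear_combination
    (-( X 0 * X 1 ^ m * (X 0 * X 1 ^ 2 + X 1 ^ 2 * X 2 + X 0 * X 1 * X 2)
      + X 1 * X 0 ^ m * (X 0 ^ 2 * X 1 + X 0 ^ 2 * X 2 + X 0 * X 1 * X 2)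
      + X 0 * X 2 ^ m * (X 0 * X 2 ^ 2 + X 1 * X 2 ^ 2 + X 0 * X 1 * X 2)
      + X 2 * X 0 ^ m * (X 0 ^ 2 * X 1 + X 0 ^ 2 * X 2 + X 0 * X 1 * X 2)
      + X 1 * X 2 ^ m * (X 0 * X 2 ^ 2 + X 1 * X 2 ^ 2 + X 0 * X 1 * X 2)
      + X 2 * X 1 ^ m * (X 0 * X 1 ^ 2 + X 1 ^ 2 * X 2 + X 0 * X 1 * X 2))) * h2

lemma Qall (m : ℕ) : ∃ g : MvPolynomial (Fin 3) (ZMod 2),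
    (X 0 + X 1) * (X 0 + X 2) * (X 1 + X 2) * g = f m ∧
    g.IsHomogeneous (m - 2) ∧ (m < 2 → g = 0) := by
  induction m using Nat.strong_induction_on with
  | _ m ih =>
    match m with
    | 0 =>
      refine ⟨0, ?_, isHomogeneous_zero _ _ _, fun _ => rfl⟩
      unfold f
      linear_combination (-(X 0 + X 1 + X 2)) * h2
    | 1 =>
      refine ⟨0, ?_, isHomogeneous_zero _ _ _, fun _ => rfl⟩
      unfold f
      linear_combination (-(X 0 * X 1 + X 0 * X 2 + X 1 * X 2)) * h2
    | 2 =>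
      refine ⟨1, ?_, isHomogeneous_one _ _, fun h => absurd h (by omega)⟩
      unfold f
      linear_combination (X 0 * X 1 * X 2) * h2
    | (p + 3) =>
      obtain ⟨g1, hg1, hh1, hz1⟩ := ih (p + 2) (by omega)
      obtain ⟨g2, hg2, hh2, hz2⟩ := ih (p + 1) (by omega)
      obtain ⟨g3, hg3, hh3, hz3⟩ := ih p (by omega)
      have he1 : ((X 0 + X 1 + X 2 : MvPolynomial (Fin 3) (ZMod 2))).IsHomogeneous 1 := by
        apply IsHomogeneous.add
        apply IsHomogeneous.add <;> exact isHomogeneous_X _ _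
        exact isHomogeneous_X _ _
      have he2 : ((X 0 * X 1 + X 0 * X 2 + X 1 * X 2 :
          MvPolynomial (Fin 3) (ZMod 2))).IsHomogeneous 2 := by
        apply IsHomogeneous.add
        apply IsHomogeneous.add <;> exact (isHomogeneous_X _ _).mul (isHomogeneous_X _ _)
        exact (isHomogeneous_X _ _).mul (isHomogeneous_X _ _)
      have he3 : ((X 0 * X 1 * X 2 : MvPolynomial (Fin 3) (ZMod 2))).IsHomogeneous 3 := by
        exact ((isHomogeneous_X _ _).mul (isHomogeneous_X _ _)).mul (isHomogeneous_X _ _)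
      refine ⟨(X 0 + X 1 + X 2) * g1 + (X 0 * X 1 + X 0 * X 2 + X 1 * X 2) * g2
          + (X 0 * X 1 * X 2) * g3, ?_, ?_, fun h => absurd h (by omega)⟩
      · rw [frec, ← hg1, ← hg2, ← hg3]; ring
      · have t1 : ((X 0 + X 1 + X 2) * g1 :
            MvPolynomial (Fin 3) (ZMod 2)).IsHomogeneous (p + 3 - 2) := by
          have := he1.mul hh1
          rwa [show 1 + (p + 2 - 2) = p + 3 - 2 by omega] at this
        have t2 : ((X 0 * X 1 + X 0 * X 2 + X 1 * X 2) * g2 :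
            MvPolynomial (Fin 3) (ZMod 2)).IsHomogeneous (p + 3 - 2) := by
          rcases Nat.lt_or_ge (p + 1) 2 with h | h
          · rw [hz2 h, mul_zero]; exact isHomogeneous_zero _ _ _
          · have := he2.mul hh2
            rwa [show 2 + (p + 1 - 2) = p + 3 - 2 by omega] at this
        have t3 : ((X 0 * X 1 * X 2) * g3 :
            MvPolynomial (Fin 3) (ZMod 2)).IsHomogeneous (p + 3 - 2) := by
          rcases Nat.lt_or_ge p 2 with h | h
          · rw [hz3 h, mul_zero]; exact isHomogeneous_zero _ _ _
          · have := he3.mul hh3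
            rwa [show 3 + (p - 2) = p + 3 - 2 by omega] at this
        exact (t1.add t2).add t3

end F2aux

/-- For every even positive integer `k`, `(x+y)(x+z)(y+z)` divides
`x·y^k + y·x^k + x·z^k + z·x^k + y·z^k + z·y^k` in `𝔽₂[x,y,z]`, and the quotient `g_k`
is homogeneous of degree `k-2`. -/
theorem divides_and_quotient_homogeneous (k : ℕ) (hk_even : Even k) (hk_pos : 0 < k) :
    ∃ g : MvPolynomial (Fin 3) (ZMod 2),
      (X 0 + X 1) * (X 0 + X 2) * (X 1 + X 2) * g =
        X 0 * X 1 ^ k + X 1 * X 0 ^ k + X 0 * X 2 ^ k + X 2 * X 0 ^ k +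
          X 1 * X 2 ^ k + X 2 * X 1 ^ k ∧
      g.IsHomogeneous (k - 2) := by
  obtain ⟨g, hg, hh, -⟩ := F2aux.Qall k
  exact ⟨g, hg, hh⟩
end

section
/- Let k ≥ 4 be an even integer and let g_k(x,y,z) ∈ 𝔽₂[x,y,z] be the homogeneous polynomial of degree k−2 with (x+y)(x+z)(y+z)·g_k(x,y,z) = x·y^k + y·x^k + x·z^k + z·x^k + y·z^k + z·y^k. Then for every e ≥ 1, the number of projective points (x : y : z) of PG(2, 2^e) satisfying g_k(x,y,z) = 0 whose coordinates x, y, z are not pairwise distinct is at most 3k − 2. -/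
open MvPolynomial

private theorem keyA' (F : Type) [Field F] [Algebra (ZMod 2) F] (k : ℕ)
    (hkF : (k : F) = 0) (h2 : (2:F) = 0)
    (g : MvPolynomial (Fin 3) (ZMod 2))
    (hg : (X 0 + X 1) * (X 0 + X 2) * (X 1 + X 2) * g =
        X 0 * X 1 ^ k + X 1 * X 0 ^ k + X 0 * X 2 ^ k + X 2 * X 0 ^ k +
          X 1 * X 2 ^ k + X 2 * X 1 ^ k) (a b : F) :
    (a + b)^2 * eval ![a,a,b] (MvPolynomial.map (algebraMap (ZMod 2) F) g) = a^k + b^k := by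
  have hgF := congrArg (MvPolynomial.map (algebraMap (ZMod 2) F)) hg
  simp only [map_add, map_mul, map_pow, map_X] at hgF
  have hd := congrArg (eval ![a,a,b] ∘ pderiv 1) hgF
  simp only [Function.comp_apply, map_add, pderiv_mul, pderiv_pow, pderiv_X_self,
    pderiv_X_of_ne (by decide : (0:Fin 3) ≠ 1), pderiv_X_of_ne (by decide : (2:Fin 3) ≠ 1),
    map_mul, map_pow, eval_add, eval_mul, eval_pow, eval_X, map_natCast, map_zero, map_one,
    mul_zero, zero_mul, mul_one, one_mul, add_zero, zero_add] at hd
  simp only [Matrix.cons_val_zero, Matrix.cons_val_one, Matrix.head_cons,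
    Matrix.cons_val_two, Matrix.tail_cons, hkF, mul_zero, zero_mul, add_zero, zero_add] at hd
  set G := eval ![a,a,b] ((MvPolynomial.map (algebraMap (ZMod 2) F)) g) with hG
  set G' := eval ![a,a,b] ((pderiv 1) ((MvPolynomial.map (algebraMap (ZMod 2) F)) g)) with hG'
  linear_combination hd - (a*b*G + a*b^2*G' + 2*a^2*b*G' + a^2*G + a^3*G')*h2

private theorem keyB' (F : Type) [Field F] [Algebra (ZMod 2) F] (k : ℕ)
    (hkF : (k : F) = 0) (h2 : (2:F) = 0)
    (g : MvPolynomial (Fin 3) (ZMod 2))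
    (hg : (X 0 + X 1) * (X 0 + X 2) * (X 1 + X 2) * g =
        X 0 * X 1 ^ k + X 1 * X 0 ^ k + X 0 * X 2 ^ k + X 2 * X 0 ^ k +
          X 1 * X 2 ^ k + X 2 * X 1 ^ k) (a b : F) :
    (a + b)^2 * eval ![a,b,b] (MvPolynomial.map (algebraMap (ZMod 2) F) g) = a^k + b^k := by
  have hgF := congrArg (MvPolynomial.map (algebraMap (ZMod 2) F)) hg
  simp only [map_add, map_mul, map_pow, map_X] at hgF
  have hd := congrArg (eval ![a,b,b] ∘ pderiv 1) hgF
  simp only [Function.comp_apply, map_add, pderiv_mul, pderiv_pow, pderiv_X_self,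
    pderiv_X_of_ne (by decide : (0:Fin 3) ≠ 1), pderiv_X_of_ne (by decide : (2:Fin 3) ≠ 1),
    map_mul, map_pow, eval_add, eval_mul, eval_pow, eval_X, map_natCast, map_zero, map_one,
    mul_zero, zero_mul, mul_one, one_mul, add_zero, zero_add] at hd
  simp only [Matrix.cons_val_zero, Matrix.cons_val_one, Matrix.head_cons,
    Matrix.cons_val_two, Matrix.tail_cons, hkF, mul_zero, zero_mul, add_zero, zero_add] at hd
  set G := eval ![a,b,b] ((MvPolynomial.map (algebraMap (ZMod 2) F)) g) with hG
  set G' := eval ![a,b,b] ((pderiv 1) ((MvPolynomial.map (algebraMap (ZMod 2) F)) g)) with hG'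
  linear_combination hd - (a*b*G + 2*a*b^2*G' + a^2*b*G' + b^2*G + b^3*G')*h2

private theorem keyC' (F : Type) [Field F] [Algebra (ZMod 2) F] (k : ℕ)
    (hkF : (k : F) = 0) (h2 : (2:F) = 0)
    (g : MvPolynomial (Fin 3) (ZMod 2))
    (hg : (X 0 + X 1) * (X 0 + X 2) * (X 1 + X 2) * g =
        X 0 * X 1 ^ k + X 1 * X 0 ^ k + X 0 * X 2 ^ k + X 2 * X 0 ^ k +
          X 1 * X 2 ^ k + X 2 * X 1 ^ k) (a b : F) :
    (a + b)^2 * eval ![a,b,a] (MvPolynomial.map (algebraMap (ZMod 2) F) g) = a^k + b^k := by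
  have hgF := congrArg (MvPolynomial.map (algebraMap (ZMod 2) F)) hg
  simp only [map_add, map_mul, map_pow, map_X] at hgF
  have hd := congrArg (eval ![a,b,a] ∘ pderiv 0) hgF
  simp only [Function.comp_apply, map_add, pderiv_mul, pderiv_pow, pderiv_X_self,
    pderiv_X_of_ne (by decide : (1:Fin 3) ≠ 0), pderiv_X_of_ne (by decide : (2:Fin 3) ≠ 0),
    map_mul, map_pow, eval_add, eval_mul, eval_pow, eval_X, map_natCast, map_zero, map_one,
    mul_zero, zero_mul, mul_one, one_mul, add_zero, zero_add] at hd
  simp only [Matrix.cons_val_zero, Matrix.cons_val_one, Matrix.head_cons,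
    Matrix.cons_val_two, Matrix.tail_cons, hkF, mul_zero, zero_mul, add_zero, zero_add] at hd
  set G := eval ![a,b,a] ((MvPolynomial.map (algebraMap (ZMod 2) F)) g) with hG
  set G' := eval ![a,b,a] ((pderiv 0) ((MvPolynomial.map (algebraMap (ZMod 2) F)) g)) with hG'
  linear_combination hd - (a*b*G + a*b^2*G' + 2*a^2*b*G' + a^2*G + a^3*G')*h2

private theorem ratio_injOn (F : Type) [Field F] (i j l : Fin 3)
    (hij : i ≠ j) (hil : i ≠ l) (hjl : j ≠ l) :
    Set.InjOn (fun P : Projectivization F (Fin 3 → F) => P.rep l / P.rep i)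
      {P | P.rep i = P.rep j ∧ P.rep i ≠ 0} := by
  rintro P ⟨hPij, hPi⟩ Q ⟨hQij, hQi⟩ h
  simp only at h
  rw [← Projectivization.mk_rep P, ← Projectivization.mk_rep Q,
    Projectivization.mk_eq_mk_iff]
  refine ⟨Units.mk0 (P.rep i / Q.rep i) (div_ne_zero hPi hQi), ?_⟩
  funext x
  have hx : x = i ∨ x = j ∨ x = l := by
    have h1 := i.isLt; have h2 := j.isLt; have h3 := l.isLt; have h4 := x.isLt
    have e1 : i.val ≠ j.val := fun hc => hij (Fin.ext hc)
    have e2 : i.val ≠ l.val := fun hc => hil (Fin.ext hc)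
    have e3 : j.val ≠ l.val := fun hc => hjl (Fin.ext hc)
    have : x.val = i.val ∨ x.val = j.val ∨ x.val = l.val := by omega
    rcases this with h | h | h
    · exact Or.inl (Fin.ext h)
    · exact Or.inr (Or.inl (Fin.ext h))
    · exact Or.inr (Or.inr (Fin.ext h))
  have hsmul : ∀ y : Fin 3,
      ((Units.mk0 (P.rep i / Q.rep i) (div_ne_zero hPi hQi)) • Q.rep) y
        = (P.rep i / Q.rep i) * Q.rep y := fun y => rfl
  rcases hx with rfl | rfl | rfl
  · rw [hsmul]; field_simp
  · rw [hsmul, ← hPij, ← hQij]; field_simp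
  · rw [hsmul]
    field_simp at h ⊢
    linear_combination -h

private theorem fin3_eta {F : Type} (v : Fin 3 → F) : v = ![v 0, v 1, v 2] := by
  funext x; fin_cases x <;> rfl


/-- Let `k ≥ 4` be even and `g_k ∈ 𝔽₂[x,y,z]` the homogeneous polynomial of
degree `k-2` with `(x+y)(x+z)(y+z)·g_k = x·y^k + y·x^k + x·z^k + z·x^k + y·z^k + z·y^k`.
For every `e ≥ 1`, the number of projective points of `PG(2, 2^e)` lying on `g_k = 0`
whose coordinates are not pairwise distinct is at most `3k - 2`.  (Since `g_k` is
homogeneous and the non-distinctness condition is scaling invariant, both conditions are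
checked on the chosen representative `P.rep`.) -/
theorem points_with_equal_coordinates_bound
    (k : ℕ) (hk_even : Even k) (hk4 : 4 ≤ k) (e : ℕ) (he : 1 ≤ e)
    (g : MvPolynomial (Fin 3) (ZMod 2))
    (hhom : g.IsHomogeneous (k - 2))
    (hg : (X 0 + X 1) * (X 0 + X 2) * (X 1 + X 2) * g =
        X 0 * X 1 ^ k + X 1 * X 0 ^ k + X 0 * X 2 ^ k + X 2 * X 0 ^ k +
          X 1 * X 2 ^ k + X 2 * X 1 ^ k) :
    {P : Projectivization (GaloisField 2 e) (Fin 3 → GaloisField 2 e) |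
        eval P.rep (MvPolynomial.map (algebraMap (ZMod 2) (GaloisField 2 e)) g) = 0 ∧
        (P.rep 0 = P.rep 1 ∨ P.rep 1 = P.rep 2 ∨ P.rep 0 = P.rep 2)}.ncard ≤ 3 * k - 2 := by
  classical
  set F := GaloisField 2 e with hFdef
  haveI hFfin : Finite F := inferInstanceAs (Finite (GaloisField 2 e))
  haveI hPfin : Finite (Projectivization F (Fin 3 → F)) :=
    Quotient.finite _
  obtain ⟨m, hm⟩ := hk_even
  have hm2 : 2 ≤ m := by omega
  have hkF : (k : F) = 0 := by
    rw [← map_natCast (algebraMap (ZMod 2) F)]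
    have : ((k : ℕ) : ZMod 2) = 0 := by
      rw [hm]; push_cast
      have h2z : (2 : ZMod 2) = 0 := rfl
      ring_nf
      rw [h2z, mul_zero]
    rw [this, map_zero]
  have h2 : (2 : F) = 0 := by
    rw [show ((2:F)) = ((2:ℕ):F) by norm_num, ← map_natCast (algebraMap (ZMod 2) F)]
    have : ((2:ℕ) : ZMod 2) = 0 := rfl
    rw [this, map_zero]
  set G := MvPolynomial.map (algebraMap (ZMod 2) F) g with hGdef
  set S : Set (Projectivization F (Fin 3 → F)) :=
    {P | eval P.rep G = 0 ∧ (P.rep 0 = P.rep 1 ∨ P.rep 1 = P.rep 2 ∨ P.rep 0 = P.rep 2)}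
    with hSdef
  set T : Set F := {t | t ^ m = 1} with hTdef
  -- T has at most m elements
  have hT : T.ncard ≤ m := by
    have hsub : T ⊆ ((Polynomial.nthRoots m (1:F)).toFinset : Set F) := by
      intro t ht
      simp only [Finset.coe_sort_coe, Finset.mem_coe, Multiset.mem_toFinset]
      exact (Polynomial.mem_nthRoots (by omega : 0 < m)).mpr ht
    calc T.ncard ≤ (((Polynomial.nthRoots m (1:F)).toFinset : Set F)).ncard :=
          Set.ncard_le_ncard hsub (Set.toFinite _)
      _ = (Polynomial.nthRoots m (1:F)).toFinset.card := Set.ncard_coe_finset _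
      _ ≤ Multiset.card (Polynomial.nthRoots m (1:F)) := Multiset.toFinset_card_le _
      _ ≤ m := Polynomial.card_nthRoots m (1:F)
  -- k-th roots of 1 are m-th roots of 1
  have hroot : ∀ t : F, t ^ k = 1 → t ^ m = 1 := by
    intro t ht
    have hsq : (t ^ m - 1)^2 = 0 := by
      have hpow : t ^ m * t ^ m = 1 := by rw [← pow_add, ← hm, ht]
      linear_combination hpow + (1 - t^m) * h2
    have h0 := pow_eq_zero_iff (n := 2) (by norm_num) |>.mp hsq
    exact sub_eq_zero.mp h0
  -- the three pieces
  have hunion : S ⊆ (S ∩ {P | P.rep 0 = P.rep 1}) ∪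
      ((S ∩ {P | P.rep 1 = P.rep 2}) ∪ (S ∩ {P | P.rep 0 = P.rep 2})) := by
    intro P hP
    rcases hP.2 with h | h | h
    · exact Or.inl ⟨hP, h⟩
    · exact Or.inr (Or.inl ⟨hP, h⟩)
    · exact Or.inr (Or.inr ⟨hP, h⟩)
  -- piece 0 : rep 0 = rep 1
  have hb0 : (S ∩ {P | P.rep 0 = P.rep 1}).ncard ≤ m := by
    have hfact : ∀ P ∈ S ∩ {P | P.rep 0 = P.rep 1},
        P.rep 0 ≠ 0 ∧ (P.rep 2 / P.rep 0) ∈ T := by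
      rintro P ⟨⟨heval, -⟩, h01m⟩
      have h01 : P.rep 0 = P.rep 1 := h01m
      have hrep : P.rep = ![P.rep 0, P.rep 0, P.rep 2] := by
        funext x; fin_cases x <;>
          simp [Matrix.cons_val_zero, Matrix.cons_val_one, Matrix.head_cons, h01.symm]
      have hkey := keyA' F k hkF h2 g hg (P.rep 0) (P.rep 2)
      rw [← hGdef, ← hrep, heval, mul_zero] at hkey
      have hpk : P.rep 2 ^ k = P.rep 0 ^ k := by
        linear_combination -hkey - (P.rep 0 ^ k) * h2
      have h0 : P.rep 0 ≠ 0 := by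
        intro hz
        apply P.rep_nonzero
        have hz2 : P.rep 2 = 0 := by
          have hzz : P.rep 2 ^ k = 0 := by rw [hpk, hz, zero_pow (by omega : k ≠ 0)]
          exact pow_eq_zero_iff (by omega : k ≠ 0) |>.mp hzz
        funext x; fin_cases x <;>
          simp [hz, hz2, ← h01, Pi.zero_apply]
      refine ⟨h0, hroot _ ?_⟩
      rw [div_pow, hpk, div_self (pow_ne_zero _ h0)]
    refine le_trans (Set.ncard_le_ncard_of_injOn (fun P => P.rep 2 / P.rep 0)
      (fun P hP => (hfact P hP).2) ?_ (Set.toFinite T)) hT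
    intro P hP Q hQ hpq
    exact ratio_injOn F 0 1 2 (by decide) (by decide) (by decide)
      ⟨hP.2, (hfact P hP).1⟩ ⟨hQ.2, (hfact Q hQ).1⟩ hpq
  -- piece 1 : rep 1 = rep 2
  have hb1 : (S ∩ {P | P.rep 1 = P.rep 2}).ncard ≤ m := by
    have hfact : ∀ P ∈ S ∩ {P | P.rep 1 = P.rep 2},
        P.rep 1 ≠ 0 ∧ (P.rep 0 / P.rep 1) ∈ T := by
      rintro P ⟨⟨heval, -⟩, h12m⟩
      have h12 : P.rep 1 = P.rep 2 := h12m
      have hrep : P.rep = ![P.rep 0, P.rep 1, P.rep 1] := by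
        funext x; fin_cases x <;>
          simp [Matrix.cons_val_zero, Matrix.cons_val_one, Matrix.head_cons, h12.symm]
      have hkey := keyB' F k hkF h2 g hg (P.rep 0) (P.rep 1)
      rw [← hGdef, ← hrep, heval, mul_zero] at hkey
      have hpk : P.rep 0 ^ k = P.rep 1 ^ k := by
        linear_combination -hkey - (P.rep 1 ^ k) * h2
      have h0 : P.rep 1 ≠ 0 := by
        intro hz
        apply P.rep_nonzero
        have hz2 : P.rep 0 = 0 := by
          have hzz : P.rep 0 ^ k = 0 := by rw [hpk, hz, zero_pow (by omega : k ≠ 0)]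
          exact pow_eq_zero_iff (by omega : k ≠ 0) |>.mp hzz
        funext x; fin_cases x <;>
          simp [hz, hz2, ← h12, Pi.zero_apply]
      refine ⟨h0, hroot _ ?_⟩
      rw [div_pow, hpk, div_self (pow_ne_zero _ h0)]
    refine le_trans (Set.ncard_le_ncard_of_injOn (fun P => P.rep 0 / P.rep 1)
      (fun P hP => (hfact P hP).2) ?_ (Set.toFinite T)) hT
    intro P hP Q hQ hpq
    exact ratio_injOn F 1 2 0 (by decide) (by decide) (by decide)
      ⟨hP.2, (hfact P hP).1⟩ ⟨hQ.2, (hfact Q hQ).1⟩ hpq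
  -- piece 2 : rep 0 = rep 2
  have hb2 : (S ∩ {P | P.rep 0 = P.rep 2}).ncard ≤ m := by
    have hfact : ∀ P ∈ S ∩ {P | P.rep 0 = P.rep 2},
        P.rep 0 ≠ 0 ∧ (P.rep 1 / P.rep 0) ∈ T := by
      rintro P ⟨⟨heval, -⟩, h02m⟩
      have h02 : P.rep 0 = P.rep 2 := h02m
      have hrep : P.rep = ![P.rep 0, P.rep 1, P.rep 0] := by
        funext x; fin_cases x <;>
          simp [Matrix.cons_val_zero, Matrix.cons_val_one, Matrix.head_cons, h02.symm]
      have hkey := keyC' F k hkF h2 g hg (P.rep 0) (P.rep 1)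
      rw [← hGdef, ← hrep, heval, mul_zero] at hkey
      have hpk : P.rep 1 ^ k = P.rep 0 ^ k := by
        linear_combination -hkey - (P.rep 0 ^ k) * h2
      have h0 : P.rep 0 ≠ 0 := by
        intro hz
        apply P.rep_nonzero
        have hz2 : P.rep 1 = 0 := by
          have hzz : P.rep 1 ^ k = 0 := by rw [hpk, hz, zero_pow (by omega : k ≠ 0)]
          exact pow_eq_zero_iff (by omega : k ≠ 0) |>.mp hzz
        funext x; fin_cases x <;>
          simp [hz, hz2, ← h02, Pi.zero_apply]
      refine ⟨h0, hroot _ ?_⟩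
      rw [div_pow, hpk, div_self (pow_ne_zero _ h0)]
    refine le_trans (Set.ncard_le_ncard_of_injOn (fun P => P.rep 1 / P.rep 0)
      (fun P hP => (hfact P hP).2) ?_ (Set.toFinite T)) hT
    intro P hP Q hQ hpq
    exact ratio_injOn F 0 2 1 (by decide) (by decide) (by decide)
      ⟨hP.2, (hfact P hP).1⟩ ⟨hQ.2, (hfact Q hQ).1⟩ hpq
  calc S.ncard ≤ ((S ∩ {P | P.rep 0 = P.rep 1}) ∪
      ((S ∩ {P | P.rep 1 = P.rep 2}) ∪ (S ∩ {P | P.rep 0 = P.rep 2}))).ncard :=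
        Set.ncard_le_ncard hunion (Set.toFinite _)
    _ ≤ (S ∩ {P | P.rep 0 = P.rep 1}).ncard +
        ((S ∩ {P | P.rep 1 = P.rep 2}) ∪ (S ∩ {P | P.rep 0 = P.rep 2})).ncard :=
        Set.ncard_union_le _ _
    _ ≤ (S ∩ {P | P.rep 0 = P.rep 1}).ncard +
        ((S ∩ {P | P.rep 1 = P.rep 2}).ncard + (S ∩ {P | P.rep 0 = P.rep 2}).ncard) := by
        exact Nat.add_le_add_left (Set.ncard_union_le _ _) _
    _ ≤ m + (m + m) := by
        exact Nat.add_le_add hb0 (Nat.add_le_add hb1 hb2)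
    _ ≤ 3 * k - 2 := by omega
end

section
/- Let k = 2^i·ℓ be an even positive integer with ℓ odd and i ≥ 1, and let K be an algebraic closure of 𝔽₂. A point P = (α, β) ∈ K² is a singular point of the affine curve f_k(x,y) = x·y^k + y·x^k + x^k + y^k + x + y if and only if α^ℓ = 1 and β^ℓ = 1. In particular, f_k(x,y) has exactly ℓ² singular points. -/
open MvPolynomial

/-- The algebraic closure of `𝔽₂`. -/
abbrev Kbar : Type := AlgebraicClosure (ZMod 2)

/-- Translation of a bivariate polynomial, `h(x+α, y+β)`. -/
noncomputable def translatePoly (α β : Kbar) (h : MvPolynomial (Fin 2) Kbar) :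
    MvPolynomial (Fin 2) Kbar :=
  aeval ![X 0 + C α, X 1 + C β] h

/-- The multiplicity `m_P(h)` of `h` at the point `P = (α, β)`: the least `m` such that the
degree-`m` homogeneous component of `h(x+α, y+β)` is nonzero. -/
noncomputable def multAt (α β : Kbar) (h : MvPolynomial (Fin 2) Kbar) : ℕ :=
  sInf {m | homogeneousComponent m (translatePoly α β h) ≠ 0}

/-- The affine polynomial `f_k(x,y) = x·y^k + y·x^k + x^k + y^k + x + y` over `Kbar`. -/
noncomputable def fpoly (k : ℕ) : MvPolynomial (Fin 2) Kbar :=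
  X 0 * X 1 ^ k + X 1 * X 0 ^ k + X 0 ^ k + X 1 ^ k + X 0 + X 1

/-! ### Auxiliary lemmas -/

lemma coeff_single_sq_pow (j t : Fin 2) (c : Kbar) (m : ℕ) :
    coeff (Finsupp.single t 1) (((X j : MvPolynomial (Fin 2) Kbar) ^ 2 + C c) ^ m) = 0 := by
  classical
  induction m with
  | zero => simp [coeff_one, Finsupp.single_eq_zero, eq_comm]
  | succ m ih =>
      rw [pow_succ', add_mul, coeff_add, coeff_C_mul, ih, mul_zero, add_zero, sq, mul_assoc,
        coeff_X_mul']
      split_ifs with h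
      · have ht : j = t := by
          simpa [Finsupp.single_apply_eq_zero] using Finsupp.mem_support_iff.mp h
        subst ht
        simp [coeff_X_mul']
      · rfl

lemma coeff_zero_sq_pow (j : Fin 2) (c : Kbar) (m : ℕ) :
    coeff 0 (((X j : MvPolynomial (Fin 2) Kbar) ^ 2 + C c) ^ m) = c ^ m := by
  show constantCoeff _ = _
  simp [map_pow]

lemma frob (j : Fin 2) (c : Kbar) (m : ℕ) :
    ((X j : MvPolynomial (Fin 2) Kbar) + C c) ^ (2 * m) = ((X j) ^ 2 + C (c ^ 2)) ^ m := by
  rw [pow_mul, add_pow_char, ← map_pow]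

lemma translate_eq (α β : Kbar) (k : ℕ) :
    translatePoly α β (fpoly k) =
      (X 0 + C α) * (X 1 + C β) ^ k + (X 1 + C β) * (X 0 + C α) ^ k +
        (X 0 + C α) ^ k + (X 1 + C β) ^ k + (X 0 + C α) + (X 1 + C β) := by
  simp [translatePoly, fpoly]

lemma coeff_zero_translate (α β : Kbar) (k : ℕ) :
    coeff 0 (translatePoly α β (fpoly k)) =
      α * β ^ k + β * α ^ k + α ^ k + β ^ k + α + β := by
  show constantCoeff _ = _
  simp [translatePoly, fpoly]

lemma coeff_e0_translate (α β : Kbar) (m : ℕ) :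
    coeff (Finsupp.single (0 : Fin 2) 1) (translatePoly α β (fpoly (2 * m))) =
      β ^ (2 * m) + 1 := by
  classical
  rw [translate_eq, frob, frob, add_mul, add_mul]
  simp [coeff_add, coeff_X_mul', coeff_C_mul, coeff_single_sq_pow, coeff_zero_sq_pow,
    coeff_X', coeff_C, Finsupp.single_eq_zero, Finsupp.mem_support_iff, Finsupp.single_apply,
    Finsupp.single_eq_single_iff, tsub_self, pow_mul, eq_comm]
  rw [show ((C β : MvPolynomial (Fin 2) Kbar) ^ 2) = C (β ^ 2) from (map_pow _ _ _).symm,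
    show ((C α : MvPolynomial (Fin 2) Kbar) ^ 2) = C (α ^ 2) from (map_pow _ _ _).symm,
    coeff_zero_sq_pow, coeff_single_sq_pow, coeff_single_sq_pow]
  ring

lemma coeff_e1_translate (α β : Kbar) (m : ℕ) :
    coeff (Finsupp.single (1 : Fin 2) 1) (translatePoly α β (fpoly (2 * m))) =
      α ^ (2 * m) + 1 := by
  classical
  rw [translate_eq, frob, frob, add_mul, add_mul]
  simp [coeff_add, coeff_X_mul', coeff_C_mul, coeff_single_sq_pow, coeff_zero_sq_pow,
    coeff_X', coeff_C, Finsupp.single_eq_zero, Finsupp.mem_support_iff, Finsupp.single_apply,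
    Finsupp.single_eq_single_iff, tsub_self, pow_mul, eq_comm]
  rw [show ((C β : MvPolynomial (Fin 2) Kbar) ^ 2) = C (β ^ 2) from (map_pow _ _ _).symm,
    show ((C α : MvPolynomial (Fin 2) Kbar) ^ 2) = C (α ^ 2) from (map_pow _ _ _).symm,
    coeff_zero_sq_pow, coeff_single_sq_pow, coeff_single_sq_pow]
  ring

lemma degree_single (t : Fin 2) : (Finsupp.single t 1).degree = 1 := by
  simp [Finsupp.degree_apply, Finsupp.support_single_ne_zero]

lemma degree_one_cases (d : Fin 2 →₀ ℕ) (hd : d.degree = 1) :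
    d = Finsupp.single 0 1 ∨ d = Finsupp.single 1 1 := by
  have hsum : d 0 + d 1 = 1 := by
    have h1 : d.degree = ∑ i : Fin 2, d i :=
      Finset.sum_subset (Finset.subset_univ _)
        (fun x _ hx => Finsupp.notMem_support_iff.mp hx)
    rw [h1, Fin.sum_univ_two] at hd
    exact hd
  have hc : (d 0 = 1 ∧ d 1 = 0) ∨ (d 0 = 0 ∧ d 1 = 1) := by omega
  rcases hc with ⟨h0, h1⟩ | ⟨h0, h1⟩
  · left; ext a; fin_cases a <;> simp [Finsupp.single_apply, h0, h1]
  · right; ext a; fin_cases a <;> simp [Finsupp.single_apply, h0, h1]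

lemma two_le_multAt_iff (α β : Kbar) (h : MvPolynomial (Fin 2) Kbar)
    (hT : translatePoly α β h ≠ 0) :
    2 ≤ multAt α β h ↔
      coeff 0 (translatePoly α β h) = 0 ∧
      coeff (Finsupp.single 0 1) (translatePoly α β h) = 0 ∧
      coeff (Finsupp.single 1 1) (translatePoly α β h) = 0 := by
  set T := translatePoly α β h with hTdef
  have hdef : multAt α β h = sInf {n | homogeneousComponent n T ≠ 0} := rfl
  have hne : {n | homogeneousComponent n T ≠ 0}.Nonempty := by
    by_contra hcon
    rw [Set.not_nonempty_iff_eq_empty] at hcon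
    apply hT
    have hall : ∀ n, homogeneousComponent n T = 0 := by
      intro n
      by_contra hn
      exact (Set.eq_empty_iff_forall_notMem.mp hcon n) hn
    calc T = ∑ n ∈ Finset.range (T.totalDegree + 1), homogeneousComponent n T :=
          (sum_homogeneousComponent T).symm
      _ = 0 := by simp [hall]
  have hmem := Nat.sInf_mem hne
  constructor
  · intro h2
    rw [hdef] at h2
    have h0 : coeff 0 T = 0 := by
      by_contra hn
      have h0' : (0 : ℕ) ∈ {n | homogeneousComponent n T ≠ 0} := by
        simp only [Set.mem_setOf_eq, homogeneousComponent_zero]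
        intro hc
        exact hn (by simpa using congrArg (coeff 0) hc)
      have := Nat.sInf_le h0'
      omega
    have h1 : ∀ t : Fin 2, coeff (Finsupp.single t 1) T = 0 := by
      intro t
      by_contra hn
      have h1' : (1 : ℕ) ∈ {n | homogeneousComponent n T ≠ 0} := by
        simp only [Set.mem_setOf_eq]
        intro hc
        apply hn
        have := congrArg (coeff (Finsupp.single t 1)) hc
        rwa [coeff_homogeneousComponent, if_pos (degree_single t), coeff_zero] at this
      have := Nat.sInf_le h1'
      omega
    exact ⟨h0, h1 0, h1 1⟩
  · rintro ⟨h0, h1, h2⟩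
    rw [hdef]
    by_contra hlt
    push_neg at hlt
    have hn01 : sInf {n | homogeneousComponent n T ≠ 0} = 0 ∨
        sInf {n | homogeneousComponent n T ≠ 0} = 1 := by omega
    rcases hn01 with hn | hn <;> rw [hn] at hmem
    · exact hmem (by rw [homogeneousComponent_zero, h0, map_zero])
    · apply hmem
      ext d
      rw [coeff_homogeneousComponent, coeff_zero]
      split_ifs with hdeg
      · rcases degree_one_cases d hdeg with rfl | rfl
        · exact h1
        · exact h2
      · rfl

lemma translate_twice (α β : Kbar) (h : MvPolynomial (Fin 2) Kbar) :
    translatePoly α β (translatePoly α β h) = h := by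
  have hcomp := congrFun (congrArg (fun (φ : MvPolynomial (Fin 2) Kbar →ₐ[Kbar]
      MvPolynomial (Fin 2) Kbar) => (φ : MvPolynomial (Fin 2) Kbar → MvPolynomial (Fin 2) Kbar))
      (comp_aeval (f := ![X 0 + C α, X 1 + C β])
        (φ := aeval (R := Kbar) ![X 0 + C α, X 1 + C β]))) h
  simp only [AlgHom.coe_comp, Function.comp_apply] at hcomp
  rw [translatePoly, translatePoly, hcomp]
  have hX : (fun i : Fin 2 => aeval (R := Kbar) ![X 0 + C α, X 1 + C β]
      (![X 0 + C α, X 1 + C β] i)) = X := by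
    funext i
    fin_cases i <;>
      · simp
        rw [add_assoc, ← map_add, CharTwo.add_self_eq_zero, map_zero, add_zero]
  rw [hX, aeval_X_left_apply]

lemma translate_zero_zero (p : MvPolynomial (Fin 2) Kbar) : translatePoly 0 0 p = p := by
  have hX : (![X 0 + C 0, X 1 + C 0] : Fin 2 → MvPolynomial (Fin 2) Kbar) = X := by
    funext i; fin_cases i <;> simp
  rw [translatePoly, hX, aeval_X_left_apply]

lemma fpoly_ne_zero (m : ℕ) (hm : m ≠ 0) : fpoly (2 * m) ≠ 0 := by
  intro h0
  have h := coeff_e0_translate 0 0 m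
  rw [translate_zero_zero, h0] at h
  rw [coeff_zero, zero_pow (by omega : 2 * m ≠ 0), zero_add] at h
  exact one_ne_zero h.symm

lemma translate_ne_zero (α β : Kbar) (p : MvPolynomial (Fin 2) Kbar) (hp : p ≠ 0) :
    translatePoly α β p ≠ 0 := by
  intro h0
  apply hp
  rw [← translate_twice α β p, h0, translatePoly, map_zero]

/-- For `k = 2^i·ℓ` with `ℓ` odd and `i ≥ 1`, a point `P = (α,β) ∈ Kbar²` is a
singular point of `f_k(x,y) = x·y^k + y·x^k + x^k + y^k + x + y` (i.e. `m_P(f_k) ≥ 2`)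
if and only if `α^ℓ = 1` and `β^ℓ = 1`; in particular `f_k` has exactly `ℓ²` singular
points. -/
theorem singular_points_of_f
    (i ℓ k : ℕ) (hi : 1 ≤ i) (hℓ : Odd ℓ) (hk : k = 2 ^ i * ℓ) :
    (∀ α β : Kbar, 2 ≤ multAt α β (fpoly k) ↔ (α ^ ℓ = 1 ∧ β ^ ℓ = 1)) ∧
    {P : Kbar × Kbar | 2 ≤ multAt P.1 P.2 (fpoly k)}.ncard = ℓ ^ 2 := by
  have hℓpos : 0 < ℓ := hℓ.pos
  set m : ℕ := 2 ^ (i - 1) * ℓ with hm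
  have h2i : 2 ^ i = 2 * 2 ^ (i - 1) := by
    rw [← pow_succ']
    congr 1
    omega
  have hk2 : k = 2 * m := by rw [hk, hm, h2i, mul_assoc]
  have hmne : m ≠ 0 := by
    have : 0 < 2 ^ (i - 1) * ℓ := Nat.mul_pos (Nat.pow_pos (by norm_num)) hℓpos
    omega
  have h2 : (2 : Kbar) = 0 := CharP.cast_eq_zero Kbar 2
  have hfrobinj : ∀ x : Kbar, x ^ 2 ^ i = 1 → x = 1 := by
    intro x hx
    have h1 : (x - 1) ^ 2 ^ i = 0 := by
      rw [sub_pow_char_pow, hx, one_pow, sub_self]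
    have h1' : x - 1 = 0 :=
      pow_eq_zero_iff (by positivity : 0 < 2 ^ i).ne' |>.mp h1
    exact sub_eq_zero.mp h1'
  have hpow : ∀ x : Kbar, x ^ k = 1 ↔ x ^ ℓ = 1 := by
    intro x
    constructor
    · intro hx
      have hx' : x ^ (ℓ * 2 ^ i) = 1 := by rw [mul_comm, ← hk]; exact hx
      rw [pow_mul] at hx'
      exact hfrobinj _ hx'
    · intro hx
      rw [hk, mul_comm, pow_mul, hx, one_pow]
  have main : ∀ α β : Kbar, 2 ≤ multAt α β (fpoly k) ↔ (α ^ ℓ = 1 ∧ β ^ ℓ = 1) := by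
    intro α β
    have hTne : translatePoly α β (fpoly k) ≠ 0 :=
      translate_ne_zero α β _ (by rw [hk2]; exact fpoly_ne_zero m hmne)
    rw [two_le_multAt_iff α β _ hTne]
    rw [hk2, coeff_zero_translate, coeff_e0_translate, coeff_e1_translate]
    constructor
    · rintro ⟨h0, hβ, hα⟩
      have hβ1 : β ^ (2 * m) = 1 := by linear_combination hβ - h2
      have hα1 : α ^ (2 * m) = 1 := by linear_combination hα - h2
      constructor
      · exact (hpow α).mp (by rw [hk2]; exact hα1)
      · exact (hpow β).mp (by rw [hk2]; exact hβ1)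
    · rintro ⟨hα, hβ⟩
      have hα1 : α ^ (2 * m) = 1 := by rw [← hk2]; exact (hpow α).mpr hα
      have hβ1 : β ^ (2 * m) = 1 := by rw [← hk2]; exact (hpow β).mpr hβ
      rw [hα1, hβ1]
      refine ⟨by linear_combination (α + β + 1) * h2, by linear_combination h2,
        by linear_combination h2⟩
  refine ⟨main, ?_⟩
  haveI hNe : NeZero ((ℓ : Kbar)) := ⟨by
    rw [Ne, CharP.cast_eq_zero_iff Kbar 2]
    intro hdvd
    exact (Nat.not_even_iff_odd.mpr hℓ) (even_iff_two_dvd.mpr hdvd)⟩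
  have hset : {P : Kbar × Kbar | 2 ≤ multAt P.1 P.2 (fpoly k)} =
      ↑(Polynomial.nthRootsFinset ℓ (1 : Kbar) ×ˢ Polynomial.nthRootsFinset ℓ (1 : Kbar)) := by
    ext P
    simp [main P.1 P.2, Polynomial.mem_nthRootsFinset hℓpos, Finset.mem_product]
  rw [hset, Set.ncard_coe_finset, Finset.card_product]
  obtain ⟨ζ, hζ⟩ := HasEnoughRootsOfUnity.exists_primitiveRoot Kbar ℓ
  rw [hζ.card_nthRootsFinset, sq]
end

section
/- Let k = 2^i·ℓ be an even positive integer with ℓ odd and i ≥ 1, let K be an algebraic closure of 𝔽₂, and let f_k(x,y) = x·y^k + y·x^k + x^k + y^k + x + y ∈ K[x,y]. Then every singular point P = (α, β) of f_k with (α, β) ≠ (1, 1) (i.e., α^ℓ = β^ℓ = 1, (α,β) ≠ (1,1)) has multiplicity m_P(f_k) = 2^i, and the point (1, 1) has multiplicity m_{(1,1)}(f_k) = 2^i + 1. -/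
open MvPolynomial

lemma two_eq_zero_K : (2 : Kbar) = 0 := by
  exact_mod_cast CharP.cast_eq_zero Kbar 2

lemma two_eq_zero_M : (2 : MvPolynomial (Fin 2) Kbar) = 0 := by
  exact_mod_cast CharP.cast_eq_zero (MvPolynomial (Fin 2) Kbar) 2

lemma repT (i ℓ : ℕ) (α β : Kbar) :
    translatePoly α β (fpoly (2 ^ i * ℓ)) =
      X 0 * ((X 1 ^ 2 ^ i + C (β ^ 2 ^ i)) ^ ℓ + 1)
      + X 1 * ((X 0 ^ 2 ^ i + C (α ^ 2 ^ i)) ^ ℓ + 1)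
      + C (α + 1) * ((X 1 ^ 2 ^ i + C (β ^ 2 ^ i)) ^ ℓ + 1)
      + C (β + 1) * ((X 0 ^ 2 ^ i + C (α ^ 2 ^ i)) ^ ℓ + 1) := by
  have hA : (X 0 + C α : MvPolynomial (Fin 2) Kbar) ^ (2 ^ i * ℓ)
      = (X 0 ^ 2 ^ i + C (α ^ 2 ^ i)) ^ ℓ := by
    rw [pow_mul, add_pow_char_pow, ← C_pow]
  have hB : (X 1 + C β : MvPolynomial (Fin 2) Kbar) ^ (2 ^ i * ℓ)
      = (X 1 ^ 2 ^ i + C (β ^ 2 ^ i)) ^ ℓ := by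
    rw [pow_mul, add_pow_char_pow, ← C_pow]
  unfold translatePoly fpoly
  simp only [map_add, map_mul, map_pow, aeval_X, Matrix.cons_val_zero, Matrix.cons_val_one,
    Matrix.head_cons, hA, hB, C_add, C_1]
  linear_combination -two_eq_zero_M

lemma comp_mul_pow {P : MvPolynomial (Fin 2) Kbar} {dP : ℕ} (hP : P.IsHomogeneous dP)
    (s : Fin 2) (c : Kbar) (q ℓ m : ℕ) (hq : q ≠ 0) :
    homogeneousComponent m (P * (X s ^ q + C c) ^ ℓ) =
      if dP ≤ m ∧ q ∣ (m - dP) ∧ (m - dP) / q ≤ ℓ then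
        C ((ℓ.choose ((m - dP) / q) : Kbar) * c ^ (ℓ - (m - dP) / q)) * (P * X s ^ (m - dP))
      else 0 := by
  rw [add_pow, Finset.mul_sum, map_sum]
  have hterm : ∀ j, P * ((X s ^ q) ^ j * C c ^ (ℓ - j) * (ℓ.choose j : MvPolynomial (Fin 2) Kbar))
      = C ((ℓ.choose j : Kbar) * c ^ (ℓ - j)) * (P * X s ^ (q * j)) := by
    intro j
    rw [← pow_mul, ← C_pow, ← map_natCast (C : Kbar →+* MvPolynomial (Fin 2) Kbar)]
    rw [C_mul]
    ring
  have hcomp : ∀ j, homogeneousComponent m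
      (P * ((X s ^ q) ^ j * C c ^ (ℓ - j) * (ℓ.choose j : MvPolynomial (Fin 2) Kbar)))
      = if m = dP + q * j then
          C ((ℓ.choose j : Kbar) * c ^ (ℓ - j)) * (P * X s ^ (q * j)) else 0 := by
    intro j
    rw [hterm j]
    apply homogeneousComponent_of_mem
    rw [mem_homogeneousSubmodule]
    have h1 : (C ((ℓ.choose j : Kbar) * c ^ (ℓ - j)) : MvPolynomial (Fin 2) Kbar).IsHomogeneous 0 :=
      isHomogeneous_C _ _
    have h2 : ((X s : MvPolynomial (Fin 2) Kbar) ^ (q * j)).IsHomogeneous (q * j) := by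
      simpa using (isHomogeneous_X Kbar s).pow (q * j)
    simpa using h1.mul (hP.mul h2)
  simp only [hcomp]
  by_cases h : dP ≤ m ∧ q ∣ (m - dP) ∧ (m - dP) / q ≤ ℓ
  · obtain ⟨h1, h2, h3⟩ := h
    have hqd : q * ((m - dP) / q) = m - dP := Nat.mul_div_cancel' h2
    rw [if_pos ⟨h1, h2, h3⟩, Finset.sum_eq_single ((m - dP) / q)]
    · rw [if_pos (by omega), hqd]
    · intro j hj hne
      rw [if_neg]
      intro hmj
      exact hne (Nat.eq_of_mul_eq_mul_left (Nat.pos_of_ne_zero hq) (by omega))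
    · intro hj
      exact absurd (Finset.mem_range.2 (Nat.lt_succ_of_le h3)) hj
  · rw [if_neg h]
    apply Finset.sum_eq_zero
    intro j hj
    rw [if_neg]
    intro hmj
    apply h
    have hj' : j ≤ ℓ := Nat.lt_succ_iff.1 (Finset.mem_range.1 hj)
    have hdvd : q ∣ (m - dP) := ⟨j, by omega⟩
    refine ⟨by omega, hdvd, ?_⟩
    have : (m - dP) / q = j := by
      rw [show m - dP = q * j by omega, Nat.mul_div_cancel_left _ (Nat.pos_of_ne_zero hq)]
    omega

lemma comp_pow (s : Fin 2) (c : Kbar) (q ℓ m : ℕ) (hq : q ≠ 0) :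
    homogeneousComponent m ((X s ^ q + C c) ^ ℓ) =
      if q ∣ m ∧ m / q ≤ ℓ then
        C ((ℓ.choose (m / q) : Kbar) * c ^ (ℓ - m / q)) * X s ^ m
      else 0 := by
  have := comp_mul_pow (isHomogeneous_one (Fin 2) Kbar) s c q ℓ m hq
  simpa using this

lemma comp_X_mul_pow (t s : Fin 2) (c : Kbar) (q ℓ m : ℕ) (hq : q ≠ 0) :
    homogeneousComponent m (X t * (X s ^ q + C c) ^ ℓ) =
      if 1 ≤ m ∧ q ∣ (m - 1) ∧ (m - 1) / q ≤ ℓ then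
        C ((ℓ.choose ((m - 1) / q) : Kbar) * c ^ (ℓ - (m - 1) / q)) * (X t * X s ^ (m - 1))
      else 0 :=
  comp_mul_pow (isHomogeneous_X Kbar t) s c q ℓ m hq

lemma comp_X (t : Fin 2) (m : ℕ) :
    homogeneousComponent m (X t : MvPolynomial (Fin 2) Kbar) =
      if m = 1 then X t else 0 :=
  homogeneousComponent_of_mem ((mem_homogeneousSubmodule _ _).2 (isHomogeneous_X Kbar t))

lemma comp_one (m : ℕ) :
    homogeneousComponent m (1 : MvPolynomial (Fin 2) Kbar) =
      if m = 0 then 1 else 0 :=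
  homogeneousComponent_of_mem ((mem_homogeneousSubmodule _ _).2 (isHomogeneous_one _ _))

lemma comp_C (r : Kbar) (m : ℕ) :
    homogeneousComponent m (C r : MvPolynomial (Fin 2) Kbar) = if m = 0 then C r else 0 :=
  homogeneousComponent_of_mem ((mem_homogeneousSubmodule _ _).2 (isHomogeneous_C _ _))

lemma key (i ℓ : ℕ) (hi : 1 ≤ i) (hℓ : Odd ℓ) (α β : Kbar) (hα : α ^ ℓ = 1) (hβ : β ^ ℓ = 1) :
    (∀ m < 2 ^ i, homogeneousComponent m (translatePoly α β (fpoly (2 ^ i * ℓ))) = 0) ∧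
    homogeneousComponent (2 ^ i) (translatePoly α β (fpoly (2 ^ i * ℓ)))
      = C ((β + 1) * (α ^ 2 ^ i) ^ (ℓ - 1)) * X 0 ^ 2 ^ i
        + C ((α + 1) * (β ^ 2 ^ i) ^ (ℓ - 1)) * X 1 ^ 2 ^ i ∧
    homogeneousComponent (2 ^ i + 1) (translatePoly α β (fpoly (2 ^ i * ℓ)))
      = C ((β ^ 2 ^ i) ^ (ℓ - 1)) * (X 0 * X 1 ^ 2 ^ i)
        + C ((α ^ 2 ^ i) ^ (ℓ - 1)) * (X 1 * X 0 ^ 2 ^ i) := by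
  have hq2 : 2 ≤ 2 ^ i := by
    calc 2 = 2 ^ 1 := rfl
    _ ≤ 2 ^ i := Nat.pow_le_pow_right (by norm_num) hi
  set q := 2 ^ i with hqdef
  have hq0 : q ≠ 0 := by omega
  have hℓ1 : 1 ≤ ℓ := hℓ.pos
  set a := α ^ q with hadef
  set b := β ^ q with hbdef
  have haℓ : a ^ ℓ = 1 := by rw [hadef, ← pow_mul, mul_comm, pow_mul, hα, one_pow]
  have hbℓ : b ^ ℓ = 1 := by rw [hbdef, ← pow_mul, mul_comm, pow_mul, hβ, one_pow]
  have hℓK : ((ℓ : Kbar)) = 1 := by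
    obtain ⟨n, hn⟩ := hℓ
    subst hn; push_cast; rw [two_eq_zero_K]; ring
  have hcomp : ∀ m, homogeneousComponent m (translatePoly α β (fpoly (q * ℓ))) =
      homogeneousComponent m (X 0 * (X 1 ^ q + C b) ^ ℓ) + homogeneousComponent m (X 0)
      + homogeneousComponent m (X 1 * (X 0 ^ q + C a) ^ ℓ) + homogeneousComponent m (X 1)
      + (C α + 1) * homogeneousComponent m ((X 1 ^ q + C b) ^ ℓ)
      + homogeneousComponent m (C α) + homogeneousComponent m (C 1)
      + (C β + 1) * homogeneousComponent m ((X 0 ^ q + C a) ^ ℓ)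
      + homogeneousComponent m (C β) + homogeneousComponent m (C 1) := by
    intro m
    rw [hqdef, repT i ℓ α β]
    simp only [mul_add, mul_one, add_mul, map_add, homogeneousComponent_C_mul, C_1]
    simp only [one_mul]
    ring
  refine ⟨?_, ?_, ?_⟩
  · -- components below q vanish
    intro m hm
    rw [hcomp m, comp_X_mul_pow 0 1 b q ℓ m hq0, comp_X_mul_pow 1 0 a q ℓ m hq0,
      comp_pow 1 b q ℓ m hq0, comp_pow 0 a q ℓ m hq0, comp_X, comp_X, comp_C, comp_C, comp_C]
    rcases Nat.lt_or_ge m 2 with hm2 | hm2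
    · interval_cases m
      · -- m = 0
        have hc1 : ¬ (1 ≤ 0 ∧ q ∣ (0 - 1) ∧ (0 - 1) / q ≤ ℓ) := by omega
        have hc2 : q ∣ 0 ∧ 0 / q ≤ ℓ := ⟨dvd_zero q, by simp⟩
        simp only [if_pos hc2, if_neg hc1, if_pos rfl, if_true, if_neg (by norm_num : ¬ (0 : ℕ) = 1)]
        simp only [Nat.zero_div, Nat.choose_zero_right, Nat.cast_one, one_mul, Nat.sub_zero,
          haℓ, hbℓ, pow_zero, map_one, mul_one]
        linear_combination (C α + C β + 2 : MvPolynomial (Fin 2) Kbar) * two_eq_zero_M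
      · -- m = 1
        have hc1 : (1 ≤ 1 ∧ q ∣ (1 - 1) ∧ (1 - 1) / q ≤ ℓ) := ⟨le_refl 1, by simp, by simp⟩
        have hc2 : ¬ (q ∣ 1 ∧ 1 / q ≤ ℓ) := by
          rintro ⟨hd, -⟩; have := Nat.le_of_dvd one_pos hd; omega
        simp only [if_pos hc1, if_neg hc2, if_pos rfl, if_true, if_neg (by norm_num : ¬ (1 : ℕ) = 0)]
        simp only [Nat.sub_self, Nat.zero_div, Nat.choose_zero_right, Nat.cast_one, one_mul,
          Nat.sub_zero, haℓ, hbℓ, pow_zero, map_one, mul_one]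
        linear_combination (X 0 + X 1 : MvPolynomial (Fin 2) Kbar) * two_eq_zero_M
    · -- 2 ≤ m < q
      have hc1 : ¬ (1 ≤ m ∧ q ∣ (m - 1) ∧ (m - 1) / q ≤ ℓ) := by
        rintro ⟨-, hd, -⟩
        exact Nat.not_dvd_of_pos_of_lt (by omega) (by omega) hd
      have hc2 : ¬ (q ∣ m ∧ m / q ≤ ℓ) := by
        rintro ⟨hd, -⟩
        exact Nat.not_dvd_of_pos_of_lt (by omega) (by omega) hd
      simp only [if_neg hc1, if_neg hc2, if_neg (by omega : ¬ m = 1), if_neg (by omega : ¬ m = 0)]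
      ring
  · -- component at q
    rw [hcomp q, comp_X_mul_pow 0 1 b q ℓ q hq0, comp_X_mul_pow 1 0 a q ℓ q hq0,
      comp_pow 1 b q ℓ q hq0, comp_pow 0 a q ℓ q hq0, comp_X, comp_X, comp_C, comp_C, comp_C]
    have hc1 : ¬ (1 ≤ q ∧ q ∣ (q - 1) ∧ (q - 1) / q ≤ ℓ) := by
      rintro ⟨-, hd, -⟩
      exact Nat.not_dvd_of_pos_of_lt (by omega) (by omega) hd
    have hc2 : q ∣ q ∧ q / q ≤ ℓ := ⟨dvd_refl q, by rw [Nat.div_self (by omega)]; omega⟩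
    simp only [if_neg hc1, if_pos hc2, if_neg (by omega : ¬ q = 1), if_neg (by omega : ¬ q = 0)]
    rw [Nat.div_self (show 0 < q by omega)]
    simp only [Nat.choose_one_right, hℓK, one_mul, C_mul, C_add, C_1]
    ring
  · -- component at q + 1
    rw [hcomp (q + 1), comp_X_mul_pow 0 1 b q ℓ (q + 1) hq0, comp_X_mul_pow 1 0 a q ℓ (q + 1) hq0,
      comp_pow 1 b q ℓ (q + 1) hq0, comp_pow 0 a q ℓ (q + 1) hq0, comp_X, comp_X, comp_C, comp_C,
      comp_C]
    have hc1 : (1 ≤ q + 1 ∧ q ∣ (q + 1 - 1) ∧ (q + 1 - 1) / q ≤ ℓ) := by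
      refine ⟨by omega, ?_, ?_⟩
      · simpa using dvd_refl q
      · simp only [Nat.add_sub_cancel]
        rw [Nat.div_self (by omega)]; omega
    have hc2 : ¬ (q ∣ (q + 1) ∧ (q + 1) / q ≤ ℓ) := by
      rintro ⟨hd, -⟩
      have h1 : q ∣ 1 := (Nat.dvd_add_right (dvd_refl q)).mp hd
      have := Nat.le_of_dvd one_pos h1
      omega
    simp only [if_pos hc1, if_neg hc2, if_neg (by omega : ¬ q + 1 = 1),
      if_neg (by omega : ¬ q + 1 = 0)]
    simp only [Nat.add_sub_cancel]
    rw [Nat.div_self (show 0 < q by omega)]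
    simp only [Nat.choose_one_right, hℓK, one_mul, C_mul, C_add, C_1]
    ring

lemma pair_pow_ne {c1 c2 : Kbar} (s t : Fin 2) (hst : s ≠ t) (q : ℕ) (hq : q ≠ 0)
    (h1 : c1 ≠ 0) :
    C c1 * (X s : MvPolynomial (Fin 2) Kbar) ^ q + C c2 * X t ^ q ≠ 0 := by
  intro h
  have hco := congrArg (coeff (Finsupp.single s q)) h
  have hne : Finsupp.single t q ≠ Finsupp.single s q := by
    intro hEq
    have h0 := DFunLike.congr_fun hEq t
    simp [Finsupp.single_apply, hst, (Ne.symm hst)] at h0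
    exact hq h0
  rw [coeff_add, coeff_C_mul, coeff_C_mul, X_pow_eq_monomial, X_pow_eq_monomial,
    coeff_monomial, coeff_monomial, if_pos rfl, if_neg hne, coeff_zero] at hco
  simp at hco
  exact h1 hco

lemma pair_mixed_ne {c1 c2 : Kbar} (q : ℕ) (hq : q ≠ 1) (h1 : c1 ≠ 0) :
    C c1 * ((X 0 : MvPolynomial (Fin 2) Kbar) * X 1 ^ q)
      + C c2 * ((X 1 : MvPolynomial (Fin 2) Kbar) * X 0 ^ q) ≠ 0 := by
  intro h
  have e1 : (X 0 : MvPolynomial (Fin 2) Kbar) * X 1 ^ q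
      = monomial (Finsupp.single 0 1 + Finsupp.single 1 q) 1 := by
    rw [← pow_one (X 0 : MvPolynomial (Fin 2) Kbar), X_pow_eq_monomial, X_pow_eq_monomial,
      monomial_mul, one_mul]
  have e2 : (X 1 : MvPolynomial (Fin 2) Kbar) * X 0 ^ q
      = monomial (Finsupp.single 1 1 + Finsupp.single 0 q) 1 := by
    rw [← pow_one (X 1 : MvPolynomial (Fin 2) Kbar), X_pow_eq_monomial, X_pow_eq_monomial,
      monomial_mul, one_mul]
  have hne : (Finsupp.single (1 : Fin 2) 1 + Finsupp.single 0 q)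
      ≠ (Finsupp.single (0 : Fin 2) 1 + Finsupp.single 1 q) := by
    intro hEq
    have h0 := DFunLike.congr_fun hEq 0
    simp [Finsupp.single_apply, show (1 : Fin 2) ≠ 0 by decide] at h0
    exact hq h0
  have hco := congrArg (coeff (Finsupp.single 0 1 + Finsupp.single 1 q)) h
  rw [coeff_add, coeff_C_mul, coeff_C_mul, e1, e2, coeff_monomial, coeff_monomial,
    if_pos rfl, if_neg hne, coeff_zero] at hco
  simp at hco
  exact h1 hco


/-- For `k = 2^i·ℓ` with `ℓ` odd and `i ≥ 1`, every singular point
`P = (α,β) ≠ (1,1)` of `f_k` (i.e. with `α^ℓ = β^ℓ = 1`) has multiplicity `m_P(f_k) = 2^i`,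
and `(1,1)` has multiplicity `2^i + 1`. -/
theorem multiplicity_of_singular_points_of_f
    (i ℓ k : ℕ) (hi : 1 ≤ i) (hℓ : Odd ℓ) (hk : k = 2 ^ i * ℓ)
    (α β : Kbar) (hα : α ^ ℓ = 1) (hβ : β ^ ℓ = 1) :
    ((α, β) ≠ (1, 1) → multAt α β (fpoly k) = 2 ^ i) ∧
    multAt 1 1 (fpoly k) = 2 ^ i + 1 := by
  subst hk
  have hq2 : 2 ≤ 2 ^ i := by
    calc 2 = 2 ^ 1 := rfl
    _ ≤ 2 ^ i := Nat.pow_le_pow_right (by norm_num) hi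
  have hℓ1 : 1 ≤ ℓ := hℓ.pos
  have h11 : (1 : Kbar) + 1 = 0 := by rw [← two_eq_zero_K]; ring
  obtain ⟨k1, k2, k3⟩ := key i ℓ hi hℓ α β hα hβ
  obtain ⟨o1, o2, o3⟩ := key i ℓ hi hℓ 1 1 (one_pow ℓ) (one_pow ℓ)
  unfold multAt
  constructor
  · intro hne
    have hne' : α ≠ 1 ∨ β ≠ 1 := by
      by_contra hcon
      push_neg at hcon
      exact hne (by rw [hcon.1, hcon.2])
    have hα0 : α ≠ 0 := by
      intro h0
      rw [h0, zero_pow (by omega)] at hα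
      exact zero_ne_one hα
    have hβ0 : β ≠ 0 := by
      intro h0
      rw [h0, zero_pow (by omega)] at hβ
      exact zero_ne_one hβ
    have hqne : homogeneousComponent (2 ^ i) (translatePoly α β (fpoly (2 ^ i * ℓ))) ≠ 0 := by
      rw [k2]
      rcases hne' with h | h
      · rw [add_comm]
        refine pair_pow_ne 1 0 (by decide) _ (by omega) (mul_ne_zero ?_ ?_)
        · intro hzero
          exact h (by linear_combination hzero - two_eq_zero_K)
        · exact pow_ne_zero _ (pow_ne_zero _ hβ0)
      · refine pair_pow_ne 0 1 (by decide) _ (by omega) (mul_ne_zero ?_ ?_)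
        · intro hzero
          exact h (by linear_combination hzero - two_eq_zero_K)
        · exact pow_ne_zero _ (pow_ne_zero _ hα0)
    have hmem : (2 ^ i) ∈ {m | homogeneousComponent m (translatePoly α β (fpoly (2 ^ i * ℓ))) ≠ 0} :=
      hqne
    refine le_antisymm (Nat.sInf_le hmem) (le_of_not_gt fun hlt => ?_)
    exact (Nat.sInf_mem ⟨_, hmem⟩) (k1 _ hlt)
  · have hzero : homogeneousComponent (2 ^ i) (translatePoly 1 1 (fpoly (2 ^ i * ℓ))) = 0 := by
      rw [o2, h11]
      simp
    have hone : homogeneousComponent (2 ^ i + 1) (translatePoly 1 1 (fpoly (2 ^ i * ℓ))) ≠ 0 := by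
      rw [o3]
      simp only [one_pow]
      exact pair_mixed_ne _ (by omega) one_ne_zero
    have hmem : (2 ^ i + 1) ∈
        {m | homogeneousComponent m (translatePoly 1 1 (fpoly (2 ^ i * ℓ))) ≠ 0} := hone
    refine le_antisymm (Nat.sInf_le hmem) (le_of_not_gt fun hlt => ?_)
    have hm := Nat.sInf_mem ⟨_, hmem⟩
    rcases Nat.lt_or_ge (sInf {m | homogeneousComponent m
        (translatePoly 1 1 (fpoly (2 ^ i * ℓ))) ≠ 0}) (2 ^ i) with h | h
    · exact hm (o1 _ h)
    · have heq : sInf {m | homogeneousComponent m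
          (translatePoly 1 1 (fpoly (2 ^ i * ℓ))) ≠ 0} = 2 ^ i := by omega
      rw [heq] at hm
      exact hm hzero
end

section
/- Let k = 2^i·ℓ be an even positive integer with ℓ odd and i ≥ 1, let K be an algebraic closure of 𝔽₂, and let g_k(x,y) ∈ K[x,y] be the polynomial of degree k−2 with (x+y)(x+1)(y+1)·g_k(x,y) = x·y^k + y·x^k + x^k + y^k + x + y. For a point P = (α, β) with α^ℓ = β^ℓ = 1: if P = (1,1) (Type I) then m_P(g_k) = 2^i − 2; if P ≠ (1,1) and α = 1 or β = 1 or α = β (Type II) then m_P(g_k) = 2^i − 1; if α ≠ β, α ≠ 1 and β ≠ 1 (Type III) then m_P(g_k) = 2^i. Moreover there are exactly 3(ℓ−1) Type II points and exactly (ℓ−1)(ℓ−2) Type III points. -/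
open MvPolynomial

local notation "R2" => MvPolynomial (Fin 2) Kbar
local notation "hc" => homogeneousComponent (σ := Fin 2) (R := Kbar)

lemma degAdd (u v : Fin 2 →₀ ℕ) : (u+v).degree = u.degree + v.degree := by
  simp [Finsupp.degree_eq_weight_one, map_add]

/-- Lemma A: vanishing of low components of a product. -/
lemma hc_mul_eq_zero {p q : R2} {m n : ℕ}
    (hp : ∀ d < m, hc d p = 0) (hq : ∀ e < n, hc e q = 0) :
    ∀ d < m + n, hc d (p * q) = 0 := by
  intro d hd
  ext c
  rw [coeff_homogeneousComponent]
  split_ifs with hcd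
  · rw [coeff_mul]
    apply Finset.sum_eq_zero
    rintro ⟨u, v⟩ huv
    rw [Finset.HasAntidiagonal.mem_antidiagonal] at huv
    have hdeg : u.degree + v.degree = d := by rw [← degAdd, huv, hcd]
    rcases lt_or_ge u.degree m with h | h
    · have := hp u.degree h
      have : coeff u p = 0 := by
        have h2 := coeff_homogeneousComponent (σ := Fin 2) (R := Kbar) u.degree p u
        rw [this] at h2; simpa using h2.symm
      simp [this]
    · have hv : v.degree < n := by omega
      have := hq v.degree hv
      have : coeff v q = 0 := by
        have h2 := coeff_homogeneousComponent (σ := Fin 2) (R := Kbar) v.degree q v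
        rw [this] at h2; simpa using h2.symm
      simp [this]
  · rfl

/-- Lemma B: lowest component of a product. -/
lemma hc_mul_lowest {p q : R2} {m n : ℕ}
    (hp : ∀ d < m, hc d p = 0) (hq : ∀ e < n, hc e q = 0) :
    hc (m + n) (p * q) = hc m p * hc n q := by
  ext c
  rw [coeff_homogeneousComponent, coeff_mul, coeff_mul]
  have cz : ∀ (u : Fin 2 →₀ ℕ) (r : R2), hc u.degree r = 0 → coeff u r = 0 := by
    intro u r h
    have h2 := coeff_homogeneousComponent (σ := Fin 2) (R := Kbar) u.degree r u
    rw [h] at h2; simpa using h2.symm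
  have key : ∀ u v : Fin 2 →₀ ℕ, u + v = c →
      coeff u (hc m p) * coeff v (hc n q) =
        if c.degree = m + n then coeff u p * coeff v q else 0 := by
    intro u v huv
    rw [coeff_homogeneousComponent, coeff_homogeneousComponent]
    have hdeg : u.degree + v.degree = c.degree := by rw [← degAdd, huv]
    by_cases hu : u.degree = m
    · by_cases hv : v.degree = n
      · have : c.degree = m + n := by omega
        simp [hu, hv, this]
      · have : ¬ c.degree = m + n := by omega
        simp [hv, this]
    · rw [if_neg hu, zero_mul]
      split_ifs with hcdeg
      · rcases lt_or_ge u.degree m with h | h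
        · rw [cz u p (hp u.degree h), zero_mul]
        · have hvlt : v.degree < n := by omega
          rw [cz v q (hq v.degree hvlt), mul_zero]
      · rfl
  rw [Finset.sum_congr rfl fun x hx => key x.1 x.2 (Finset.HasAntidiagonal.mem_antidiagonal.mp hx)]
  split_ifs with h
  · rfl
  · simp

/-- The order: least degree of a nonzero homogeneous component. -/
noncomputable def pord (p : R2) : ℕ := sInf {m | hc m p ≠ 0}

lemma pord_nonempty {p : R2} (hp : p ≠ 0) : {m | hc m p ≠ 0}.Nonempty := by
  by_contra h
  rw [Set.not_nonempty_iff_eq_empty] at h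
  apply hp
  have := sum_homogeneousComponent p
  rw [← this]
  apply Finset.sum_eq_zero
  intro d _
  by_contra hd
  exact Set.eq_empty_iff_forall_notMem.mp h d hd

lemma hc_pord_ne_zero {p : R2} (hp : p ≠ 0) : hc (pord p) p ≠ 0 :=
  Nat.sInf_mem (pord_nonempty hp)

lemma ne_zero_of_hc_ne_zero' {p : R2} {m : ℕ} (h : hc m p ≠ 0) : p ≠ 0 := by
  rintro rfl; simp at h

lemma hc_eq_zero_of_lt_pord {p : R2} {d : ℕ} (hd : d < pord p) : hc d p = 0 := by
  by_contra h
  have : pord p ≤ d := Nat.sInf_le (show d ∈ {m | hc m p ≠ 0} from h)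
  omega

lemma pord_eq {p : R2} {m : ℕ} (h1 : hc m p ≠ 0) (h2 : ∀ d < m, hc d p = 0) :
    pord p = m := by
  have hle : pord p ≤ m := Nat.sInf_le (show m ∈ {m | hc m p ≠ 0} from h1)
  rcases lt_or_eq_of_le hle with h | h
  · exact absurd (h2 _ h) (hc_pord_ne_zero (ne_zero_of_hc_ne_zero' h1))
  · exact h

lemma ne_zero_of_hc_ne_zero {p : R2} {m : ℕ} (h : hc m p ≠ 0) : p ≠ 0 := by
  rintro rfl; simp at h

/-- Multiplicativity of values: lowest component of product. -/
lemma hc_pord_mul {p q : R2} (hp : p ≠ 0) (hq : q ≠ 0) :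
    hc (pord p + pord q) (p * q) = hc (pord p) p * hc (pord q) q :=
  hc_mul_lowest (fun _ h => hc_eq_zero_of_lt_pord h) (fun _ h => hc_eq_zero_of_lt_pord h)

lemma pord_mul {p q : R2} (hp : p ≠ 0) (hq : q ≠ 0) :
    pord (p * q) = pord p + pord q := by
  apply pord_eq
  · rw [hc_pord_mul hp hq]
    exact mul_ne_zero (hc_pord_ne_zero hp) (hc_pord_ne_zero hq)
  · exact hc_mul_eq_zero (fun _ h => hc_eq_zero_of_lt_pord h)
      (fun _ h => hc_eq_zero_of_lt_pord h)

lemma pord_pow {p : R2} (hp : p ≠ 0) (n : ℕ) :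
    pord (p ^ n) = n * pord p ∧ hc (n * pord p) (p ^ n) = (hc (pord p) p) ^ n := by
  induction n with
  | zero =>
    constructor
    · simp [pow_zero]
      apply pord_eq
      · rw [homogeneousComponent_zero]; simp
      · omega
    · simp [pow_zero, homogeneousComponent_zero]
  | succ n ih =>
    have hpn : p ^ n ≠ 0 := pow_ne_zero n hp
    have h1 : pord (p ^ (n+1)) = pord p + n * pord p := by
      rw [pow_succ, pord_mul hpn hp, ih.1]; ring
    constructor
    · rw [h1]; ring
    · rw [pow_succ, pow_succ]
      have := hc_pord_mul hpn hp
      rw [ih.1] at this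
      rw [show (n+1) * pord p = n * pord p + pord p by ring, this, ih.2]

lemma hcX (d : ℕ) (j : Fin 2) : hc d (X j) = if d = 1 then X j else 0 :=
  homogeneousComponent_of_mem ((mem_homogeneousSubmodule _ _).mpr (isHomogeneous_X _ _))

lemma hcC (d : ℕ) (c : Kbar) : hc d (C c) = if d = 0 then C c else 0 :=
  homogeneousComponent_of_mem ((mem_homogeneousSubmodule _ _).mpr (isHomogeneous_C _ _))

lemma C_ne_zero {c : Kbar} (h : c ≠ 0) : (C c : R2) ≠ 0 := by
  simpa using h

lemma X01_ne : (X 0 + X 1 : R2) ≠ 0 := by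
  intro h
  have := congrArg (coeff (Finsupp.single 0 1)) h
  simp [coeff_X', Finsupp.single_eq_single_iff] at this

lemma X01C_ne (c : Kbar) : (X 0 + X 1 + C c : R2) ≠ 0 := by
  intro h
  have := congrArg (coeff (Finsupp.single (0 : Fin 2) 1)) h
  have h0 : (0 : Fin 2 →₀ ℕ) ≠ Finsupp.single (0 : Fin 2) 1 :=
    Ne.symm (fun h => one_ne_zero (Finsupp.single_eq_zero.mp h))
  simp [coeff_X', coeff_C, Finsupp.single_eq_single_iff, if_neg h0] at this

lemma XC_ne (j : Fin 2) (c : Kbar) : (X j + C c : R2) ≠ 0 := by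
  intro h
  have := congrArg (coeff (Finsupp.single j 1)) h
  have h0 : (0 : Fin 2 →₀ ℕ) ≠ Finsupp.single j 1 :=
    Ne.symm (fun h => one_ne_zero (Finsupp.single_eq_zero.mp h))
  simp [coeff_X', coeff_C, if_neg h0] at this

lemma pord_X01C_of_ne {c : Kbar} (h : c ≠ 0) : pord (X 0 + X 1 + C c) = 0 := by
  apply pord_eq
  · simp only [map_add, hcX, hcC, if_neg (by norm_num : (0:ℕ) ≠ 1), if_pos rfl]
    simpa using h
  · omega

lemma pord_X01 : pord (X 0 + X 1 : R2) = 1 := by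
  apply pord_eq
  · simp only [map_add, hcX, if_pos rfl]
    exact X01_ne
  · intro d hd
    interval_cases d
    simp [map_add, hcX]

lemma pord_XC_of_ne {c : Kbar} (j : Fin 2) (h : c ≠ 0) : pord (X j + C c) = 0 := by
  apply pord_eq
  · simp only [map_add, hcX, hcC, if_neg (by norm_num : (0:ℕ) ≠ 1), if_pos rfl]
    simpa using h
  · omega

lemma pord_X (j : Fin 2) : pord (X j : R2) = 1 := by
  apply pord_eq
  · rw [hcX, if_pos rfl]
    exact X_ne_zero j
  · intro d hd
    interval_cases d
    simp [hcX]

lemma cast_odd_eq_one {ℓ : ℕ} (h : Odd ℓ) : (ℓ : Kbar) = 1 := by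
  obtain ⟨m, rfl⟩ := h
  push_cast
  have h2 : (2 : Kbar) = 0 := by exact_mod_cast CharP.cast_eq_zero Kbar 2
  rw [h2]; ring

lemma one_add_one_Kbar : (1 : Kbar) + 1 = 0 := by
  have h2 : (2 : Kbar) = 0 := by exact_mod_cast CharP.cast_eq_zero Kbar 2
  rw [← h2]; norm_num

/-- components of `(X j + C β)^ℓ + 1` for `β^ℓ = 1`, `ℓ` odd. -/
lemma hc0_pbeta {β : Kbar} {ℓ : ℕ} (hβ : β ^ ℓ = 1) (j : Fin 2) :
    hc 0 ((X j + C β) ^ ℓ + 1) = 0 := by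
  rw [homogeneousComponent_zero]
  have : constantCoeff ((X j + C β) ^ ℓ + 1 : R2) = 0 := by
    rw [map_add, map_pow, map_add, constantCoeff_X, constantCoeff_C, map_one, zero_add, hβ]
    exact one_add_one_Kbar
  rw [show (coeff 0 ((X j + C β) ^ ℓ + 1 : R2)) = constantCoeff ((X j + C β) ^ ℓ + 1 : R2) from rfl,
    this, map_zero]

lemma hc1_pbeta {β : Kbar} {ℓ : ℕ} (hℓ : Odd ℓ) (j : Fin 2) :
    hc 1 ((X j + C β) ^ ℓ + 1) = C (β ^ (ℓ - 1)) * X j := by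
  rw [add_pow, map_add, map_sum]
  have hone : hc 1 (1 : R2) = 0 := by
    rw [show (1 : R2) = C 1 from (map_one C).symm, hcC]
    norm_num
  rw [hone, add_zero]
  have hterm : ∀ m ∈ Finset.range (ℓ + 1),
      hc 1 (X j ^ m * C β ^ (ℓ - m) * (ℓ.choose m : R2)) =
        if m = 1 then C (β ^ (ℓ - 1)) * X j else 0 := by
    intro m _
    have hhom : (X j ^ m * C β ^ (ℓ - m) * (ℓ.choose m : R2)).IsHomogeneous m := by
      have h1 : (X j ^ m : R2).IsHomogeneous m := by
        simpa using (isHomogeneous_X (R := Kbar) j).pow m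
      have h2 : (C β ^ (ℓ - m) : R2).IsHomogeneous 0 := by
        simpa using (isHomogeneous_C (σ := Fin 2) (R := Kbar) β).pow (ℓ - m)
      have h3 : ((ℓ.choose m : R2)).IsHomogeneous 0 := by
        have h4 := isHomogeneous_C (σ := Fin 2) (R := Kbar) ((ℓ.choose m : Kbar))
        rwa [C_eq_coe_nat] at h4
      simpa using (h1.mul h2).mul h3
    rw [homogeneousComponent_of_mem ((mem_homogeneousSubmodule _ _).mpr hhom)]
    by_cases hm : m = 1
    · subst hm
      rw [if_pos rfl, if_pos rfl, pow_one, Nat.choose_one_right]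
      have h4 : ((ℓ : R2)) = 1 := by
        rw [← C_eq_coe_nat, cast_odd_eq_one hℓ, map_one]
      rw [h4, mul_one, map_pow]
      ring
    · rw [if_neg (Ne.symm hm), if_neg hm]
  rw [Finset.sum_congr rfl hterm, Finset.sum_ite_eq' (Finset.range (ℓ + 1)) 1]
  rw [if_pos (Finset.mem_range.mpr (by have := hℓ.pos; omega))]

lemma hc_term {c : Kbar} {p w : R2} {Q : ℕ} (hlow : ∀ d < Q, hc d p = 0) (hQ : hc Q p = w)
    (j : Fin 2) :
    (∀ d < Q, hc d ((X j + C c) * p) = 0) ∧ hc Q ((X j + C c) * p) = C c * w := by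
  have hv : ∀ d < 0, hc d (X j + C c : R2) = 0 := by omega
  constructor
  · intro d hd
    exact hc_mul_eq_zero hv hlow d (by omega)
  · have h := hc_mul_lowest hv hlow
    rw [zero_add] at h
    rw [h, hQ]
    congr 1
    rw [map_add, hcX, hcC, if_neg (by norm_num), if_pos rfl, zero_add]

lemma hc_termX {p w : R2} {Q : ℕ} (hlow : ∀ d < Q, hc d p = 0) (hQ : hc Q p = w) (j : Fin 2) :
    (∀ d < Q + 1, hc d (X j * p) = 0) ∧ hc (Q + 1) (X j * p) = X j * w := by
  have hv : ∀ d < 1, hc d (X j : R2) = 0 := by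
    intro d hd; interval_cases d; simp [hcX]
  constructor
  · intro d hd
    exact hc_mul_eq_zero hv hlow d (by omega)
  · have h := hc_mul_lowest hv hlow
    have h2 : hc (Q + 1) (X j * p) = hc 1 (X j) * hc Q p := by
      rw [add_comm Q 1]; exact h
    rw [h2, hQ, hcX, if_pos rfl]

lemma pbeta_facts {β : Kbar} {ℓ : ℕ} (hℓ : Odd ℓ) (hβ : β ^ ℓ = 1) (j : Fin 2) (Q : ℕ) :
    (∀ d < Q, hc d (((X j + C β) ^ ℓ + 1) ^ Q) = 0) ∧
      hc Q (((X j + C β) ^ ℓ + 1) ^ Q) = C ((β ^ (ℓ - 1)) ^ Q) * X j ^ Q := by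
  have hβ0 : β ≠ 0 := by
    rintro rfl
    rw [zero_pow (by have := hℓ.pos; omega)] at hβ
    exact zero_ne_one hβ
  have hne : (C (β ^ (ℓ - 1)) * X j : R2) ≠ 0 :=
    mul_ne_zero (C_ne_zero (pow_ne_zero _ hβ0)) (X_ne_zero j)
  have h1 : hc 1 ((X j + C β) ^ ℓ + 1) = C (β ^ (ℓ - 1)) * X j := hc1_pbeta hℓ j
  have h1ne : hc 1 ((X j + C β) ^ ℓ + 1) ≠ 0 := by rw [h1]; exact hne
  have h0 : ∀ d < 1, hc d ((X j + C β) ^ ℓ + 1) = 0 := by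
    intro d hd; interval_cases d; exact hc0_pbeta hβ j
  have hp : pord ((X j + C β) ^ ℓ + 1) = 1 := pord_eq h1ne h0
  have hpne : ((X j + C β) ^ ℓ + 1 : R2) ≠ 0 := ne_zero_of_hc_ne_zero' h1ne
  obtain ⟨hA, hB⟩ := pord_pow hpne Q
  rw [hp, mul_one] at hA hB
  constructor
  · intro d hd
    exact hc_eq_zero_of_lt_pord (by rw [hA]; exact hd)
  · rw [hB, h1, mul_pow, ← map_pow]

lemma Tf_decomp (α β : Kbar) (i ℓ : ℕ) :
    translatePoly α β (fpoly (2 ^ i * ℓ)) =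
      (X 0 + C (α + 1)) * ((X 1 + C β) ^ ℓ + 1) ^ 2 ^ i
        + (X 1 + C (β + 1)) * ((X 0 + C α) ^ ℓ + 1) ^ 2 ^ i := by
  have hid : fpoly (2 ^ i * ℓ) = (X 0 + 1) * (X 1 ^ (2 ^ i * ℓ) + 1)
      + (X 1 + 1) * (X 0 ^ (2 ^ i * ℓ) + 1) := by
    have h2 : (2 : R2) = 0 := by exact_mod_cast CharP.cast_eq_zero R2 2
    unfold fpoly
    linear_combination -h2
  rw [hid]
  simp only [translatePoly, map_add, map_mul, map_pow, map_one, aeval_X]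
  simp only [Matrix.cons_val_zero, Matrix.cons_val_one, Matrix.head_cons]
  have hchar : ∀ p : R2, (p + 1) ^ 2 ^ i = p ^ 2 ^ i + 1 := fun p => by
    have h := add_pow_char_pow (R := R2) (p := 2) (n := i) (x := p) (y := 1)
    simpa using h
  rw [hchar, hchar, mul_comm (2 ^ i) ℓ, pow_mul, pow_mul]
  ring

lemma coeff_single1Q (a cβ b cα : Kbar) (Q : ℕ) (hQ : Q ≠ 0) :
    coeff (Finsupp.single 1 Q)
      (C (a * cβ ^ Q) * X 1 ^ Q + C (b * cα ^ Q) * X 0 ^ Q : R2) = a * cβ ^ Q := by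
  rw [coeff_add, coeff_C_mul, coeff_C_mul, coeff_X_pow, coeff_X_pow]
  rw [if_pos rfl, if_neg (by
    rw [Finsupp.single_eq_single_iff]
    push_neg
    exact ⟨fun h => absurd h (by decide), fun h => absurd h hQ⟩)]
  ring

lemma coeff_single0Q (a cβ b cα : Kbar) (Q : ℕ) (hQ : Q ≠ 0) :
    coeff (Finsupp.single 0 Q)
      (C (a * cβ ^ Q) * X 1 ^ Q + C (b * cα ^ Q) * X 0 ^ Q : R2) = b * cα ^ Q := by
  rw [coeff_add, coeff_C_mul, coeff_C_mul, coeff_X_pow, coeff_X_pow]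
  rw [if_pos rfl, if_neg (by
    rw [Finsupp.single_eq_single_iff]
    push_neg
    exact ⟨fun h => absurd h (by decide), fun h => absurd h hQ⟩)]
  ring

lemma coeff_typeI (Q : ℕ) (hQ : 2 ≤ Q) :
    coeff (Finsupp.single 0 1 + Finsupp.single 1 Q)
      (X 0 * X 1 ^ Q + X 1 * X 0 ^ Q : R2) = 1 := by
  have e1 : (X 0 * X 1 ^ Q : R2) = monomial (Finsupp.single 0 1 + Finsupp.single 1 Q) 1 := by
    rw [X_pow_eq_monomial, X, monomial_mul, one_mul]
  have e2 : (X 1 * X 0 ^ Q : R2) = monomial (Finsupp.single 1 1 + Finsupp.single 0 Q) 1 := by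
    rw [X_pow_eq_monomial, X, monomial_mul, one_mul]
  rw [coeff_add, e1, e2, coeff_monomial, coeff_monomial, if_pos rfl, if_neg, add_zero]
  intro h
  have h0 := DFunLike.congr_fun h 0
  simp [Finsupp.single_apply] at h0
  omega

lemma add_one_eq_zero_iff {x : Kbar} : x + 1 = 0 ↔ x = 1 := by
  have h2 : (1 : Kbar) + 1 = 0 := one_add_one_Kbar
  constructor
  · intro h
    have h3 : x + 1 + 1 = 0 + 1 := by rw [h]
    rwa [add_assoc, h2, add_zero, zero_add] at h3
  · rintro rfl; exact h2

lemma add_self_Kbar (x : Kbar) : x + x = 0 := by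
  have h2 : (2 : Kbar) = 0 := by exact_mod_cast CharP.cast_eq_zero Kbar 2
  rw [← two_mul, h2, zero_mul]

lemma add_eq_zero_iff_eq {x y : Kbar} : x + y = 0 ↔ x = y := by
  constructor
  · intro h
    have h3 : x + y + y = 0 + y := by rw [h]
    rwa [add_assoc, add_self_Kbar, add_zero, zero_add] at h3
  · rintro rfl; exact add_self_Kbar x

lemma T_mul (α β : Kbar) (p q : R2) :
    translatePoly α β (p * q) = translatePoly α β p * translatePoly α β q :=
  map_mul (aeval ![X 0 + C α, X 1 + C β]) p q

lemma T_eq (α β : Kbar) (g h : R2) (hgh : (X 0 + X 1) * (X 0 + 1) * (X 1 + 1) * g = h) :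
    (X 0 + X 1 + C (α + β)) * (X 0 + C (α + 1)) * (X 1 + C (β + 1)) * translatePoly α β g
      = translatePoly α β h := by
  have h1 : translatePoly α β (X 0 + X 1) = X 0 + X 1 + C (α + β) := by
    simp only [translatePoly, map_add, aeval_X, Matrix.cons_val_zero, Matrix.cons_val_one,
      Matrix.head_cons]
    ring
  have h2 : translatePoly α β (X 0 + 1) = X 0 + C (α + 1) := by
    simp only [translatePoly, map_add, map_one, aeval_X, Matrix.cons_val_zero, C_1]
    ring
  have h3 : translatePoly α β (X 1 + 1) = X 1 + C (β + 1) := by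
    simp only [translatePoly, map_add, map_one, aeval_X, Matrix.cons_val_one, Matrix.head_cons,
      Matrix.cons_val_zero, C_1]
    ring
  rw [← h1, ← h2, ← h3, ← T_mul, ← T_mul, ← T_mul, hgh]

lemma counting_lemma (ℓ : ℕ) (hℓ : Odd ℓ) :
    {P : Kbar × Kbar | P.1 ^ ℓ = 1 ∧ P.2 ^ ℓ = 1 ∧ P ≠ (1, 1) ∧
        (P.1 = 1 ∨ P.2 = 1 ∨ P.1 = P.2)}.ncard = 3 * (ℓ - 1) ∧
    {P : Kbar × Kbar | P.1 ^ ℓ = 1 ∧ P.2 ^ ℓ = 1 ∧ P.1 ≠ P.2 ∧ P.1 ≠ 1 ∧ P.2 ≠ 1}.ncard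
      = (ℓ - 1) * (ℓ - 2) := by
  classical
  have hℓpos : 0 < ℓ := hℓ.pos
  have hNZ : NeZero (ℓ : Kbar) := ⟨by rw [cast_odd_eq_one hℓ]; exact one_ne_zero⟩
  obtain ⟨ζ, hζ⟩ := HasEnoughRootsOfUnity.exists_primitiveRoot Kbar ℓ
  set S := Polynomial.nthRootsFinset ℓ (1 : Kbar) with hS
  have hmem : ∀ x : Kbar, x ∈ S ↔ x ^ ℓ = 1 := fun x =>
    Polynomial.mem_nthRootsFinset hℓpos 1
  have hcard : S.card = ℓ := hζ.card_nthRootsFinset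
  have h1S : (1 : Kbar) ∈ S := (hmem 1).mpr (one_pow ℓ)
  set S' := S.erase 1 with hS'
  have hmem' : ∀ x : Kbar, x ∈ S' ↔ x ≠ 1 ∧ x ^ ℓ = 1 := fun x => by
    rw [hS', Finset.mem_erase, hmem]
  have hcard' : S'.card = ℓ - 1 := by rw [hS', Finset.card_erase_of_mem h1S, hcard]
  constructor
  · have hset : {P : Kbar × Kbar | P.1 ^ ℓ = 1 ∧ P.2 ^ ℓ = 1 ∧ P ≠ (1, 1) ∧
        (P.1 = 1 ∨ P.2 = 1 ∨ P.1 = P.2)} =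
        ↑((({1} : Finset Kbar) ×ˢ S') ∪ (S' ×ˢ ({1} : Finset Kbar))
          ∪ S'.image (fun a => (a, a))) := by
      ext ⟨α, β⟩
      simp only [Set.mem_setOf_eq, Finset.coe_union, Set.mem_union, Finset.mem_coe,
        Finset.mem_union, Finset.mem_product, Finset.mem_singleton, Finset.mem_image,
        hmem', ne_eq, Prod.mk.injEq, Prod.ext_iff]
      constructor
      · rintro ⟨h1, h2, h3, rfl | rfl | rfl⟩ <;> aesop
      · intro h
        aesop
    rw [hset, Set.ncard_coe_finset]
    have not1 : (1 : Kbar) ∉ S' := Finset.notMem_erase 1 S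
    have d1 : Disjoint (({1} : Finset Kbar) ×ˢ S') (S' ×ˢ ({1} : Finset Kbar)) := by
      rw [Finset.disjoint_left]
      rintro ⟨x, y⟩ hx hy
      rw [Finset.mem_product, Finset.mem_singleton] at hx hy
      exact not1 (hx.1 ▸ hy.1)
    have d2 : Disjoint ((({1} : Finset Kbar) ×ˢ S') ∪ (S' ×ˢ ({1} : Finset Kbar)))
        (S'.image (fun a => (a, a))) := by
      rw [Finset.disjoint_right]
      rintro ⟨x, y⟩ hx hy
      rw [Finset.mem_image] at hx
      obtain ⟨a, ha, heq⟩ := hx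
      obtain ⟨rfl, rfl⟩ : a = x ∧ a = y := by simpa [Prod.ext_iff] using heq
      simp only [Finset.mem_union, Finset.mem_product, Finset.mem_singleton] at hy
      rcases hy with h | h
      · exact not1 (h.1 ▸ ha)
      · exact not1 (h.2 ▸ ha)
    rw [Finset.card_union_of_disjoint d2, Finset.card_union_of_disjoint d1,
      Finset.card_product, Finset.card_product,
      Finset.card_image_of_injective _ (fun a b h => (Prod.mk.injEq _ _ _ _ ▸ h).1),
      Finset.card_singleton, hcard']
    ring
  · have hset : {P : Kbar × Kbar | P.1 ^ ℓ = 1 ∧ P.2 ^ ℓ = 1 ∧ P.1 ≠ P.2 ∧ P.1 ≠ 1 ∧ P.2 ≠ 1} =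
        ↑((S' ×ˢ S') \ S'.image (fun a => (a, a))) := by
      ext ⟨α, β⟩
      simp only [Set.mem_setOf_eq, Finset.coe_sdiff, Set.mem_diff, Finset.mem_coe,
        Finset.mem_product, Finset.mem_image, hmem', ne_eq, Prod.mk.injEq, not_exists, not_and]
      constructor
      · rintro ⟨h1, h2, h3, h4, h5⟩
        aesop
      · intro h
        aesop
    rw [hset, Set.ncard_coe_finset]
    have hsub : S'.image (fun a => (a, a)) ⊆ S' ×ˢ S' := by
      intro p hp
      rw [Finset.mem_image] at hp
      obtain ⟨a, ha, rfl⟩ := hp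
      rw [Finset.mem_product]
      exact ⟨ha, ha⟩
    rw [Finset.card_sdiff_of_subset hsub, Finset.card_product,
      Finset.card_image_of_injective _ (fun a b h => (Prod.mk.injEq _ _ _ _ ▸ h).1), hcard']
    have key : ∀ n : ℕ, n * n - n = n * (n - 1) := by
      intro n
      cases n with
      | zero => rfl
      | succ k =>
        rw [Nat.succ_sub_one, Nat.mul_succ]
        exact Nat.add_sub_cancel ..

    have h1 : ℓ - 2 = (ℓ - 1) - 1 := by omega
    rw [h1]
    exact key (ℓ - 1)

/-- For `k = 2^i·ℓ` (`ℓ` odd, `i ≥ 1`) and `g_k` of degree `k-2` with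
`(x+y)(x+1)(y+1)·g_k = f_k`, the multiplicity of `g_k` at a point `P = (α,β)` with
`α^ℓ = β^ℓ = 1` is: `2^i - 2` if `P = (1,1)` (Type I); `2^i - 1` if `P ≠ (1,1)` and
`α = 1` or `β = 1` or `α = β` (Type II); and `2^i` if `α ≠ β`, `α ≠ 1`, `β ≠ 1` (Type III).
Moreover there are exactly `3(ℓ-1)` Type II points and `(ℓ-1)(ℓ-2)` Type III points. -/
theorem multiplicity_of_singular_points_of_g
    (i ℓ k : ℕ) (hi : 1 ≤ i) (hℓ : Odd ℓ) (hk : k = 2 ^ i * ℓ)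
    (g : MvPolynomial (Fin 2) Kbar) (hdeg : g.totalDegree = k - 2)
    (hg : (X 0 + X 1) * (X 0 + 1) * (X 1 + 1) * g = fpoly k) :
    (∀ α β : Kbar, α ^ ℓ = 1 → β ^ ℓ = 1 →
      (((α, β) = ((1 : Kbar), (1 : Kbar)) → multAt α β g = 2 ^ i - 2) ∧
       ((α, β) ≠ ((1 : Kbar), (1 : Kbar)) → (α = 1 ∨ β = 1 ∨ α = β) →
          multAt α β g = 2 ^ i - 1) ∧
       (α ≠ β → α ≠ 1 → β ≠ 1 → multAt α β g = 2 ^ i))) ∧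
    {P : Kbar × Kbar | P.1 ^ ℓ = 1 ∧ P.2 ^ ℓ = 1 ∧ P ≠ (1, 1) ∧
        (P.1 = 1 ∨ P.2 = 1 ∨ P.1 = P.2)}.ncard = 3 * (ℓ - 1) ∧
    {P : Kbar × Kbar | P.1 ^ ℓ = 1 ∧ P.2 ^ ℓ = 1 ∧ P.1 ≠ P.2 ∧ P.1 ≠ 1 ∧ P.2 ≠ 1}.ncard
      = (ℓ - 1) * (ℓ - 2) := by
  subst hk
  have hℓpos : 0 < ℓ := hℓ.pos
  have hQ2 : 2 ≤ 2 ^ i := by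
    calc 2 = 2 ^ 1 := (pow_one 2).symm
    _ ≤ 2 ^ i := Nat.pow_le_pow_right (by norm_num) hi
  have hQ0 : (2 : ℕ) ^ i ≠ 0 := by omega
  refine ⟨?_, ?_, ?_⟩
  · -- multiplicities
    intro α β hα hβ
    have hα0 : α ≠ 0 := by
      rintro rfl; rw [zero_pow (by omega)] at hα; exact zero_ne_one hα
    have hβ0 : β ≠ 0 := by
      rintro rfl; rw [zero_pow (by omega)] at hβ; exact zero_ne_one hβ
    -- general computation of components of Tf
    obtain ⟨hp1low, hp1Q⟩ := pbeta_facts hℓ hβ 1 (2 ^ i)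
    obtain ⟨hp0low, hp0Q⟩ := pbeta_facts hℓ hα 0 (2 ^ i)
    obtain ⟨ht1low, ht1Q⟩ := hc_term (c := α + 1) hp1low hp1Q 0
    obtain ⟨ht2low, ht2Q⟩ := hc_term (c := β + 1) hp0low hp0Q 1
    have hTf := Tf_decomp α β i ℓ
    have hTflow : ∀ d < 2 ^ i, hc d (translatePoly α β (fpoly (2 ^ i * ℓ))) = 0 := by
      intro d hd
      rw [hTf, map_add, ht1low d hd, ht2low d hd, add_zero]
    have hTfQ : hc (2 ^ i) (translatePoly α β (fpoly (2 ^ i * ℓ))) =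
        C ((α + 1) * (β ^ (ℓ - 1)) ^ 2 ^ i) * X 1 ^ 2 ^ i
          + C ((β + 1) * (α ^ (ℓ - 1)) ^ 2 ^ i) * X 0 ^ 2 ^ i := by
      rw [hTf, map_add, ht1Q, ht2Q]
      rw [← mul_assoc, ← C_mul, ← mul_assoc, ← C_mul]
    have hTeq := T_eq α β g (fpoly (2 ^ i * ℓ)) hg
    have hL2ne := XC_ne 0 (α + 1)
    have hL3ne := XC_ne 1 (β + 1)
    have hL1ne := X01C_ne (α + β)
    refine ⟨?_, ?_, ?_⟩
    · -- Type I
      intro hPeq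
      rw [Prod.mk.injEq] at hPeq
      obtain ⟨rfl, rfl⟩ := hPeq
      -- hc (Q+1) computation
      have hC0 : (C ((1 : Kbar) + 1) : R2) = 0 := by rw [one_add_one_Kbar, C_0]
      have hTf' : translatePoly 1 1 (fpoly (2 ^ i * ℓ)) =
          X 0 * ((X 1 + C 1) ^ ℓ + 1) ^ 2 ^ i + X 1 * ((X 0 + C 1) ^ ℓ + 1) ^ 2 ^ i := by
        rw [Tf_decomp, hC0, add_zero, add_zero]
      have hp1Q' : hc (2 ^ i) (((X 1 + C 1) ^ ℓ + 1) ^ 2 ^ i) = X 1 ^ 2 ^ i := by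
        rw [hp1Q, one_pow, one_pow, C_1, one_mul]
      have hp0Q' : hc (2 ^ i) (((X 0 + C 1) ^ ℓ + 1) ^ 2 ^ i) = X 0 ^ 2 ^ i := by
        rw [hp0Q, one_pow, one_pow, C_1, one_mul]
      obtain ⟨hI1low, hI1top⟩ := hc_termX hp1low hp1Q' 0
      obtain ⟨hI2low, hI2top⟩ := hc_termX hp0low hp0Q' 1
      have hlow : ∀ d < 2 ^ i + 1, hc d (translatePoly 1 1 (fpoly (2 ^ i * ℓ))) = 0 := by
        intro d hd
        rw [hTf', map_add, hI1low d hd, hI2low d hd, add_zero]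
      have htop : hc (2 ^ i + 1) (translatePoly 1 1 (fpoly (2 ^ i * ℓ))) =
          X 0 * X 1 ^ 2 ^ i + X 1 * X 0 ^ 2 ^ i := by
        rw [hTf', map_add, hI1top, hI2top]
      have htopne : hc (2 ^ i + 1) (translatePoly 1 1 (fpoly (2 ^ i * ℓ))) ≠ 0 := by
        rw [htop]
        intro h
        have h2 := congrArg (coeff (Finsupp.single 0 1 + Finsupp.single 1 (2 ^ i))) h
        rw [coeff_typeI (2 ^ i) hQ2, coeff_zero] at h2
        exact one_ne_zero h2
      have hpTf : pord (translatePoly 1 1 (fpoly (2 ^ i * ℓ))) = 2 ^ i + 1 :=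
        pord_eq htopne hlow
      have hTgne : translatePoly 1 1 g ≠ 0 := by
        intro h0
        rw [h0, mul_zero] at hTeq
        exact ne_zero_of_hc_ne_zero' htopne hTeq.symm
      have hchain : pord (translatePoly 1 1 (fpoly (2 ^ i * ℓ))) =
          pord (X 0 + X 1 + C ((1 : Kbar) + 1)) + pord (X 0 + C ((1 : Kbar) + 1))
            + pord (X 1 + C ((1 : Kbar) + 1)) + pord (translatePoly 1 1 g) := by
        rw [← hTeq, pord_mul (mul_ne_zero (mul_ne_zero hL1ne hL2ne) hL3ne) hTgne,
          pord_mul (mul_ne_zero hL1ne hL2ne) hL3ne, pord_mul hL1ne hL2ne]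
      have e1 : pord (X 0 + X 1 + C ((1 : Kbar) + 1)) = 1 := by
        rw [hC0, add_zero]; exact pord_X01
      have e2 : pord (X 0 + C ((1 : Kbar) + 1)) = 1 := by
        rw [hC0, add_zero]; exact pord_X 0
      have e3 : pord (X 1 + C ((1 : Kbar) + 1)) = 1 := by
        rw [hC0, add_zero]; exact pord_X 1
      rw [hpTf, e1, e2, e3] at hchain
      show pord (translatePoly 1 1 g) = 2 ^ i - 2
      omega
    · -- Type II
      intro hPne hor
      have hne11 : ¬(α = 1 ∧ β = 1) := by
        rintro ⟨rfl, rfl⟩; exact hPne rfl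
      -- pord Tf = 2^i
      have hTfQne : hc (2 ^ i) (translatePoly α β (fpoly (2 ^ i * ℓ))) ≠ 0 := by
        rw [hTfQ]
        by_cases hα1 : α = 1
        · have hβ1 : β ≠ 1 := fun h => hne11 ⟨hα1, h⟩
          intro h
          have h2 := congrArg (coeff (Finsupp.single 0 (2 ^ i))) h
          rw [coeff_single0Q _ _ _ _ _ hQ0, coeff_zero] at h2
          exact mul_ne_zero (fun h3 => hβ1 (add_one_eq_zero_iff.mp h3))
            (pow_ne_zero _ (pow_ne_zero _ hα0)) h2
        · intro h
          have h2 := congrArg (coeff (Finsupp.single 1 (2 ^ i))) h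
          rw [coeff_single1Q _ _ _ _ _ hQ0, coeff_zero] at h2
          exact mul_ne_zero (fun h3 => hα1 (add_one_eq_zero_iff.mp h3))
            (pow_ne_zero _ (pow_ne_zero _ hβ0)) h2
      have hpTf : pord (translatePoly α β (fpoly (2 ^ i * ℓ))) = 2 ^ i :=
        pord_eq hTfQne hTflow
      have hTgne : translatePoly α β g ≠ 0 := by
        intro h0
        rw [h0, mul_zero] at hTeq
        exact ne_zero_of_hc_ne_zero' hTfQne hTeq.symm
      have hchain : pord (translatePoly α β (fpoly (2 ^ i * ℓ))) =
          pord (X 0 + X 1 + C (α + β)) + pord (X 0 + C (α + 1))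
            + pord (X 1 + C (β + 1)) + pord (translatePoly α β g) := by
        rw [← hTeq, pord_mul (mul_ne_zero (mul_ne_zero hL1ne hL2ne) hL3ne) hTgne,
          pord_mul (mul_ne_zero hL1ne hL2ne) hL3ne, pord_mul hL1ne hL2ne]
      have hsum : pord (X 0 + X 1 + C (α + β)) + pord (X 0 + C (α + 1))
          + pord (X 1 + C (β + 1)) = 1 := by
        rcases hor with hα1 | hβ1 | hαβ
        · have hβ1 : β ≠ 1 := fun h => hne11 ⟨hα1, h⟩
          have e1 : pord (X 0 + X 1 + C (α + β)) = 0 := by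
            apply pord_X01C_of_ne
            intro h; exact hβ1 (hα1 ▸ add_eq_zero_iff_eq.mp h).symm
          have e2 : pord (X 0 + C (α + 1)) = 1 := by
            rw [hα1, one_add_one_Kbar, C_0, add_zero]; exact pord_X 0
          have e3 : pord (X 1 + C (β + 1)) = 0 :=
            pord_XC_of_ne 1 (fun h => hβ1 (add_one_eq_zero_iff.mp h))
          rw [e1, e2, e3]
        · have hα1 : α ≠ 1 := fun h => hne11 ⟨h, hβ1⟩
          have e1 : pord (X 0 + X 1 + C (α + β)) = 0 := by
            apply pord_X01C_of_ne
            intro h; exact hα1 (hβ1 ▸ add_eq_zero_iff_eq.mp h)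
          have e2 : pord (X 0 + C (α + 1)) = 0 :=
            pord_XC_of_ne 0 (fun h => hα1 (add_one_eq_zero_iff.mp h))
          have e3 : pord (X 1 + C (β + 1)) = 1 := by
            rw [hβ1, one_add_one_Kbar, C_0, add_zero]; exact pord_X 1
          rw [e1, e2, e3]
        · have hα1 : α ≠ 1 := by
            rintro rfl; exact hne11 ⟨rfl, hαβ.symm ▸ rfl⟩
          have hβ1 : β ≠ 1 := fun h => hα1 (hαβ.trans h)
          have e1 : pord (X 0 + X 1 + C (α + β)) = 1 := by
            rw [hαβ, add_self_Kbar, C_0, add_zero]; exact pord_X01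
          have e2 : pord (X 0 + C (α + 1)) = 0 :=
            pord_XC_of_ne 0 (fun h => hα1 (add_one_eq_zero_iff.mp h))
          have e3 : pord (X 1 + C (β + 1)) = 0 :=
            pord_XC_of_ne 1 (fun h => hβ1 (add_one_eq_zero_iff.mp h))
          rw [e1, e2, e3]
      rw [hpTf] at hchain
      show pord (translatePoly α β g) = 2 ^ i - 1
      omega
    · -- Type III
      intro hαβ hα1 hβ1
      have hTfQne : hc (2 ^ i) (translatePoly α β (fpoly (2 ^ i * ℓ))) ≠ 0 := by
        rw [hTfQ]
        intro h
        have h2 := congrArg (coeff (Finsupp.single 1 (2 ^ i))) h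
        rw [coeff_single1Q _ _ _ _ _ hQ0, coeff_zero] at h2
        exact mul_ne_zero (fun h3 => hα1 (add_one_eq_zero_iff.mp h3))
          (pow_ne_zero _ (pow_ne_zero _ hβ0)) h2
      have hpTf : pord (translatePoly α β (fpoly (2 ^ i * ℓ))) = 2 ^ i :=
        pord_eq hTfQne hTflow
      have hTgne : translatePoly α β g ≠ 0 := by
        intro h0
        rw [h0, mul_zero] at hTeq
        exact ne_zero_of_hc_ne_zero' hTfQne hTeq.symm
      have hchain : pord (translatePoly α β (fpoly (2 ^ i * ℓ))) =
          pord (X 0 + X 1 + C (α + β)) + pord (X 0 + C (α + 1))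
            + pord (X 1 + C (β + 1)) + pord (translatePoly α β g) := by
        rw [← hTeq, pord_mul (mul_ne_zero (mul_ne_zero hL1ne hL2ne) hL3ne) hTgne,
          pord_mul (mul_ne_zero hL1ne hL2ne) hL3ne, pord_mul hL1ne hL2ne]
      have e1 : pord (X 0 + X 1 + C (α + β)) = 0 :=
        pord_X01C_of_ne (fun h => hαβ (add_eq_zero_iff_eq.mp h))
      have e2 : pord (X 0 + C (α + 1)) = 0 :=
        pord_XC_of_ne 0 (fun h => hα1 (add_one_eq_zero_iff.mp h))
      have e3 : pord (X 1 + C (β + 1)) = 0 :=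
        pord_XC_of_ne 1 (fun h => hβ1 (add_one_eq_zero_iff.mp h))
      rw [hpTf, e1, e2, e3] at hchain
      show pord (translatePoly α β g) = 2 ^ i
      omega
  · exact (counting_lemma ℓ hℓ).1
  · exact (counting_lemma ℓ hℓ).2
end

section
/- Let k = 2^i·ℓ be an even positive integer with ℓ odd and i ≥ 1, let K be an algebraic closure of 𝔽₂, let f_k(x,y) = x·y^k + y·x^k + x^k + y^k + x + y, and let (α, β) ∈ K² satisfy α^ℓ = β^ℓ = 1. Then the degree-2^i homogeneous component F_{2^i}(x,y) of f_k(x+α, y+β) equals (β+1)·α^{−2^i}·x^{2^i} + (α+1)·β^{−2^i}·y^{2^i}, which is the 2^i-th power (σ·x + τ·y)^{2^i} of a linear form, where σ, τ ∈ K are the (unique) elements with σ^{2^i} = α^{2^i(ℓ−1)}(β+1) and τ^{2^i} = β^{2^i(ℓ−1)}(α+1). -/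
open MvPolynomial

/-- In `Kbar` (char 2), an odd natural number casts to `1`. -/
lemma odd_cast_eq_one {ℓ : ℕ} (hℓ : Odd ℓ) : (ℓ : Kbar) = 1 := by
  obtain ⟨m, rfl⟩ := hℓ
  have h2 : (2 : Kbar) = 0 := by
    have := CharP.cast_eq_zero Kbar 2
    exact_mod_cast this
  push_cast
  rw [h2]
  ring

/-- Binomial-type expansion of `(X v + C c) ^ (2^i * ℓ)` in char 2. -/
lemma pow_expand (i ℓ : ℕ) (c : Kbar) (v : Fin 2) :
    (X v + C c : MvPolynomial (Fin 2) Kbar) ^ (2 ^ i * ℓ) =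
      ∑ j ∈ Finset.range (ℓ + 1),
        C (c ^ (2 ^ i * (ℓ - j)) * (ℓ.choose j : Kbar)) * X v ^ (2 ^ i * j) := by
  rw [pow_mul, add_pow_char_pow, ← C_pow, add_pow]
  refine Finset.sum_congr rfl fun j hj => ?_
  rw [← pow_mul, ← C_pow, ← pow_mul, map_mul, C_eq_coe_nat]
  ring

lemma hc_of_C_mul_X_pow (m n : ℕ) (c : Kbar) (v : Fin 2) :
    homogeneousComponent m (C c * X v ^ n : MvPolynomial (Fin 2) Kbar) =
      if m = n then C c * X v ^ n else 0 :=
  homogeneousComponent_of_mem (isHomogeneous_C_mul_X_pow c v n)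

/-- Degree `2^i` homogeneous component of `(X v + C c)^(2^i·ℓ)` for odd `ℓ`. -/
lemma hc_pow (i ℓ : ℕ) (hℓ : Odd ℓ) (c : Kbar) (v : Fin 2) :
    homogeneousComponent (2 ^ i) ((X v + C c : MvPolynomial (Fin 2) Kbar) ^ (2 ^ i * ℓ)) =
      C (c ^ (2 ^ i * (ℓ - 1))) * X v ^ 2 ^ i := by
  have hℓ1 : 1 ≤ ℓ := hℓ.pos
  rw [pow_expand, map_sum]
  have key : ∀ j ∈ Finset.range (ℓ + 1),
      homogeneousComponent (2 ^ i)
        (C (c ^ (2 ^ i * (ℓ - j)) * (ℓ.choose j : Kbar)) * X v ^ (2 ^ i * j)) =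
      if j = 1 then C (c ^ (2 ^ i * (ℓ - 1))) * X v ^ 2 ^ i else 0 := by
    intro j _
    rw [hc_of_C_mul_X_pow]
    have h2i : 2 ^ i ≠ 0 := pow_ne_zero _ two_ne_zero
    by_cases hj : j = 1
    · subst hj
      simp only [mul_one, if_pos rfl]
      rw [if_pos trivial, if_pos trivial]
      congr 1
      rw [Nat.choose_one_right, odd_cast_eq_one hℓ, mul_one]
    · rw [if_neg hj, if_neg]
      intro h
      exact hj (Nat.eq_of_mul_eq_mul_left (Nat.pos_of_ne_zero h2i)
        (by omega)).symm
  rw [Finset.sum_congr rfl key, Finset.sum_ite_eq' (Finset.range (ℓ + 1)) 1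
    (fun _ => C (c ^ (2 ^ i * (ℓ - 1))) * X v ^ 2 ^ i)]
  rw [if_pos (Finset.mem_range.mpr (by omega))]

/-- Degree `2^i` (with `i ≥ 1`) homogeneous component of `X u * (X v + C c)^(2^i·ℓ)` is `0`. -/
lemma hc_X_mul_pow (i ℓ : ℕ) (hi : 1 ≤ i) (c : Kbar) (u v : Fin 2) :
    homogeneousComponent (2 ^ i) (X u * (X v + C c : MvPolynomial (Fin 2) Kbar) ^ (2 ^ i * ℓ)) =
      0 := by
  rw [pow_expand, Finset.mul_sum, map_sum]
  refine Finset.sum_eq_zero fun j _ => ?_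
  have hhom : (X u * (C (c ^ (2 ^ i * (ℓ - j)) * (ℓ.choose j : Kbar)) * X v ^ (2 ^ i * j)) :
      MvPolynomial (Fin 2) Kbar).IsHomogeneous (1 + 2 ^ i * j) :=
    (isHomogeneous_X _ _).mul (isHomogeneous_C_mul_X_pow _ _ _)
  rw [homogeneousComponent_of_mem hhom, if_neg]
  intro h
  have h1 : 2 ∣ 2 ^ i := dvd_pow_self 2 (by omega)
  have h2 : 2 ∣ 2 ^ i * j := h1.mul_right j
  omega

/-- Degree `2^i` (with `i ≥ 1`) homogeneous component of `X v + C c` is `0`. -/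
lemma hc_lin (i : ℕ) (hi : 1 ≤ i) (c : Kbar) (v : Fin 2) :
    homogeneousComponent (2 ^ i) (X v + C c : MvPolynomial (Fin 2) Kbar) = 0 := by
  have h2 : 2 ≤ 2 ^ i := by
    calc 2 = 2 ^ 1 := (pow_one 2).symm
    _ ≤ 2 ^ i := Nat.pow_le_pow_right (by omega) hi
  rw [map_add, homogeneousComponent_of_mem (isHomogeneous_X Kbar v),
    homogeneousComponent_of_mem (isHomogeneous_C (Fin 2) c)]
  rw [if_neg (by omega), if_neg (by omega), add_zero]

lemma pow_eq_inv_pow {i ℓ : ℕ} (hℓ : Odd ℓ) {α : Kbar} (hα : α ^ ℓ = 1) :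
    α ^ (2 ^ i * (ℓ - 1)) = α⁻¹ ^ 2 ^ i := by
  have hℓ1 : 1 ≤ ℓ := hℓ.pos
  have hne : α ≠ 0 := by
    intro h; rw [h, zero_pow (by omega)] at hα; exact one_ne_zero hα.symm
  have hmul : α ^ (2 ^ i * (ℓ - 1)) * α ^ 2 ^ i = 1 := by
    rw [← pow_add]
    have h : 2 ^ i * (ℓ - 1) + 2 ^ i = 2 ^ i * ℓ := by
      rw [← Nat.mul_succ]; congr 1; omega
    rw [h, mul_comm, pow_mul, hα, one_pow]
  rw [inv_pow]
  exact eq_inv_of_mul_eq_one_left hmul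

/-- For `k = 2^i·ℓ` (`ℓ` odd, `i ≥ 1`) and `α^ℓ = β^ℓ = 1`, the degree-`2^i`
homogeneous component of `f_k(x+α, y+β)` equals
`(β+1)·α^{-2^i}·x^{2^i} + (α+1)·β^{-2^i}·y^{2^i}`, which is the `2^i`-th power
`(σx + τy)^{2^i}` of a linear form, where `σ, τ` are the unique elements of `Kbar` with
`σ^{2^i} = α^{2^i(ℓ-1)}(β+1)` and `τ^{2^i} = β^{2^i(ℓ-1)}(α+1)`. -/
theorem homogeneous_component_is_power_of_linear_form
    (i ℓ k : ℕ) (hi : 1 ≤ i) (hℓ : Odd ℓ) (hk : k = 2 ^ i * ℓ)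
    (α β : Kbar) (hα : α ^ ℓ = 1) (hβ : β ^ ℓ = 1) :
    homogeneousComponent (2 ^ i) (translatePoly α β (fpoly k)) =
      C ((β + 1) * α⁻¹ ^ 2 ^ i) * X 0 ^ 2 ^ i + C ((α + 1) * β⁻¹ ^ 2 ^ i) * X 1 ^ 2 ^ i ∧
    (∃! σ : Kbar, σ ^ 2 ^ i = α ^ (2 ^ i * (ℓ - 1)) * (β + 1)) ∧
    (∃! τ : Kbar, τ ^ 2 ^ i = β ^ (2 ^ i * (ℓ - 1)) * (α + 1)) ∧
    ∀ σ τ : Kbar, σ ^ 2 ^ i = α ^ (2 ^ i * (ℓ - 1)) * (β + 1) →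
      τ ^ 2 ^ i = β ^ (2 ^ i * (ℓ - 1)) * (α + 1) →
      homogeneousComponent (2 ^ i) (translatePoly α β (fpoly k)) =
        (C σ * X 0 + C τ * X 1) ^ 2 ^ i := by
  have hT : translatePoly α β (fpoly k) =
      (X 0 + C α) * (X 1 + C β) ^ k + (X 1 + C β) * (X 0 + C α) ^ k
        + (X 0 + C α) ^ k + (X 1 + C β) ^ k + (X 0 + C α) + (X 1 + C β) := by
    simp [translatePoly, fpoly, map_add, map_mul, map_pow, aeval_X]
  have hchar2 : ∀ x : Kbar, x + x = 0 := fun x =>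
    by rw [← two_mul]; simp [CharTwo.two_eq_zero]
  have hmain : homogeneousComponent (2 ^ i) (translatePoly α β (fpoly k)) =
      C ((β + 1) * α⁻¹ ^ 2 ^ i) * X 0 ^ 2 ^ i + C ((α + 1) * β⁻¹ ^ 2 ^ i) * X 1 ^ 2 ^ i := by
    rw [hT, hk]
    have e1 : ((X 0 + C α) * (X 1 + C β) ^ (2 ^ i * ℓ) : MvPolynomial (Fin 2) Kbar) =
        X 0 * (X 1 + C β) ^ (2 ^ i * ℓ) + C α * (X 1 + C β) ^ (2 ^ i * ℓ) := by ring
    have e2 : ((X 1 + C β) * (X 0 + C α) ^ (2 ^ i * ℓ) : MvPolynomial (Fin 2) Kbar) =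
        X 1 * (X 0 + C α) ^ (2 ^ i * ℓ) + C β * (X 0 + C α) ^ (2 ^ i * ℓ) := by ring
    rw [e1, e2]
    simp only [map_add, homogeneousComponent_C_mul,
      hc_X_mul_pow i ℓ hi β 0 1, hc_X_mul_pow i ℓ hi α 1 0,
      hc_pow i ℓ hℓ β 1, hc_pow i ℓ hℓ α 0,
      hc_lin i hi α 0, hc_lin i hi β 1,
      pow_eq_inv_pow hℓ hα, pow_eq_inv_pow hℓ hβ]
    simp only [C_add, C_mul, C_1]
    ring
  have key : ∀ a : Kbar, ∃! σ : Kbar, σ ^ 2 ^ i = a := by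
    intro a
    refine ⟨(iterateFrobeniusEquiv Kbar 2 i).symm a, ?_, fun y hy => ?_⟩
    · have h := (iterateFrobeniusEquiv Kbar 2 i).apply_symm_apply a
      rwa [show ∀ x : Kbar, iterateFrobeniusEquiv Kbar 2 i x = x ^ 2 ^ i from fun _ => rfl] at h
    · apply (iterateFrobeniusEquiv Kbar 2 i).injective
      rw [show ∀ x : Kbar, iterateFrobeniusEquiv Kbar 2 i x = x ^ 2 ^ i from fun _ => rfl, hy,
        (iterateFrobeniusEquiv Kbar 2 i).apply_symm_apply]
  refine ⟨hmain, key _, key _, fun σ τ hσ hτ => ?_⟩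
  rw [hmain, add_pow_char_pow, mul_pow, mul_pow, ← C_pow, ← C_pow, hσ, hτ,
    pow_eq_inv_pow hℓ hα, pow_eq_inv_pow hℓ hβ, mul_comm (α⁻¹ ^ 2 ^ i) (β + 1),
    mul_comm (β⁻¹ ^ 2 ^ i) (α + 1)]
end

section
/- Let k = 2^i·ℓ be an even positive integer with ℓ odd and i ≥ 1, let K be an algebraic closure of 𝔽₂, let f_k(x,y) = x·y^k + y·x^k + x^k + y^k + x + y, and let (α, β) ∈ K² satisfy α^ℓ = β^ℓ = 1. Then the degree-(2^i + 1) homogeneous component of f_k(x+α, y+β) equals F_{2^i+1}(x,y) = α^{−2^i}·x^{2^i}·y + β^{−2^i}·y^{2^i}·x, and this homogeneous polynomial is squarefree, i.e., it is a product of 2^i + 1 pairwise non-proportional linear forms over K. -/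
open MvPolynomial

/-! ### Auxiliary material -/

local notation "MvP" => MvPolynomial (Fin 2) Kbar

lemma odd_cast_one {n : ℕ} (h : Odd n) : (n : Kbar) = 1 := by
  obtain ⟨t, rfl⟩ := h
  push_cast
  have h2 : (2 : Kbar) = 0 := CharTwo.two_eq_zero
  rw [h2, zero_mul, zero_add]

lemma nat_cast_isHomogeneous (n : ℕ) : ((n : MvP)).IsHomogeneous 0 := by
  rw [← map_natCast (C : Kbar →+* MvP) n]
  exact isHomogeneous_C _ _

lemma isHom_pure_term (v : Fin 2) (b : Kbar) (q j n cn : ℕ) :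
    (((X v ^ q : MvP)) ^ j * C b ^ n * (cn : MvP)).IsHomogeneous (q * j) := by
  have h2 : ((X v ^ q : MvP) ^ j).IsHomogeneous (q * j) := by
    simpa using ((isHomogeneous_X Kbar v).pow q).pow j
  have h3 : ((C b : MvP) ^ n).IsHomogeneous 0 := by
    simpa using (isHomogeneous_C (Fin 2) b).pow n
  simpa using (h2.mul h3).mul (nat_cast_isHomogeneous cn)

lemma nat_aux {q : ℕ} (hq : 2 ≤ q) (j : ℕ) : q + 1 ≠ q * j := by
  intro h
  rcases j with _ | j
  · simp at h
  · rw [Nat.mul_succ] at h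
    have h1 : q * j = 1 := by omega
    have : q ≤ 1 := Nat.le_of_dvd one_pos ⟨j, h1.symm⟩
    omega

lemma hc_pure (q l : ℕ) (hq : 2 ≤ q) (v : Fin 2) (a : Kbar) :
    homogeneousComponent (q + 1) ((X v ^ q + C a) ^ l : MvP) = 0 := by
  rw [add_pow, map_sum]
  apply Finset.sum_eq_zero
  intro j _
  rw [homogeneousComponent_of_mem ((mem_homogeneousSubmodule _ _).mpr
    (isHom_pure_term v a q j (l - j) (l.choose j))), if_neg (nat_aux hq j)]

lemma hc_mixed (q l : ℕ) (hq : 2 ≤ q) (hl : 1 ≤ l) (u v : Fin 2) (a b : Kbar) :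
    homogeneousComponent (q + 1) ((X u + C a) * (X v ^ q + C b) ^ l : MvP)
      = C (b ^ (l - 1) * (l : Kbar)) * X v ^ q * X u := by
  have hq0 : 0 < q := by omega
  rw [add_mul, map_add, homogeneousComponent_C_mul, hc_pure q l hq v b, mul_zero, add_zero,
    add_pow, Finset.mul_sum, map_sum]
  have hterm : ∀ j : ℕ, ((X u : MvP) * ((X v ^ q) ^ j * C b ^ (l - j)
      * (l.choose j : MvP))).IsHomogeneous (1 + q * j) :=
    fun j => (isHomogeneous_X Kbar u).mul (isHom_pure_term v b q j (l - j) (l.choose j))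
  rw [Finset.sum_eq_single 1]
  · rw [homogeneousComponent_of_mem ((mem_homogeneousSubmodule _ _).mpr (hterm 1)),
      if_pos (by ring)]
    rw [pow_one, Nat.choose_one_right, ← map_natCast (C : Kbar →+* MvP) l, C_mul, map_pow]
    ring
  · intro j _ hj
    rw [homogeneousComponent_of_mem ((mem_homogeneousSubmodule _ _).mpr (hterm j)), if_neg]
    intro h
    have : q * 1 = q * j := by omega
    exact hj ((Nat.eq_of_mul_eq_mul_left hq0 this).symm)
  · intro h
    exact absurd (Finset.mem_range.mpr (by omega)) h

/-- Part 1: computation of the degree-`(2^i+1)` homogeneous component. -/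
lemma component_eq (i l k : ℕ) (hi : 1 ≤ i) (hl : Odd l) (hk : k = 2 ^ i * l) (α β : Kbar)
    (hα : α ^ l = 1) (hβ : β ^ l = 1) :
    homogeneousComponent (2 ^ i + 1) (translatePoly α β (fpoly k)) =
      C (α⁻¹ ^ 2 ^ i) * X 0 ^ 2 ^ i * X 1 + C (β⁻¹ ^ 2 ^ i) * X 1 ^ 2 ^ i * X 0 := by
  set q := 2 ^ i with hqdef
  have hq : 2 ≤ q := by
    calc 2 = 2 ^ 1 := by norm_num
    _ ≤ 2 ^ i := Nat.pow_le_pow_right (by norm_num) hi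
  have hl1 : 1 ≤ l := hl.pos
  have hpow : ∀ (f : MvP) (c : Kbar), (f + C c) ^ k = (f ^ q + C (c ^ q)) ^ l := by
    intro f c
    rw [hk, pow_mul, add_pow_char_pow, ← map_pow]
  have hT : translatePoly α β (fpoly k) =
      (X 0 + C α) * (X 1 ^ q + C (β ^ q)) ^ l + (X 1 + C β) * (X 0 ^ q + C (α ^ q)) ^ l
      + (X 0 ^ q + C (α ^ q)) ^ l + (X 1 ^ q + C (β ^ q)) ^ l
      + ((X 0 + C α) + (X 1 + C β)) := by
    simp only [translatePoly, fpoly, map_add, map_mul, map_pow, aeval_X, Matrix.cons_val_zero,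
      Matrix.cons_val_one, Matrix.head_cons]
    rw [hpow (X 0) α, hpow (X 1) β]
    simp only [map_pow]
    ring
  have h5 : homogeneousComponent (q + 1) ((X 0 + C α) + (X 1 + C β) : MvP) = 0 := by
    apply homogeneousComponent_eq_zero
    have h01 : ((X 0 + C α : MvP)).totalDegree ≤ 1 :=
      le_trans (totalDegree_add _ _) (by simp [totalDegree_X, totalDegree_C])
    have h02 : ((X 1 + C β : MvP)).totalDegree ≤ 1 :=
      le_trans (totalDegree_add _ _) (by simp [totalDegree_X, totalDegree_C])
    have := le_trans (totalDegree_add (X 0 + C α : MvP) (X 1 + C β)) (max_le h01 h02)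
    omega
  rw [hT, map_add, map_add, map_add, map_add,
    hc_mixed q l hq hl1 0 1 α (β ^ q), hc_mixed q l hq hl1 1 0 β (α ^ q),
    hc_pure q l hq 0 (α ^ q), hc_pure q l hq 1 (β ^ q), h5]
  have hcast : ((l : Kbar)) = 1 := odd_cast_one hl
  have key : ∀ γ : Kbar, γ ^ l = 1 → (γ ^ q) ^ (l - 1) = γ⁻¹ ^ q := by
    intro γ hγ
    rw [← pow_mul, mul_comm, pow_mul]
    congr 1
    apply eq_inv_of_mul_eq_one_left
    rw [← pow_succ, Nat.sub_add_cancel hl1, hγ]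
  rw [hcast, key α hα, key β hβ, mul_one, mul_one]
  ring

/-! ### Primality of linear forms -/

lemma prime_X_zero : Prime (X 0 : MvP) := by
  rw [← MulEquiv.prime_iff ((MvPolynomial.finSuccEquiv Kbar 1).toRingEquiv.toMulEquiv)]
  have h : ((MvPolynomial.finSuccEquiv Kbar 1).toRingEquiv.toMulEquiv) (X 0 : MvP)
      = Polynomial.X := by
    show (MvPolynomial.finSuccEquiv Kbar 1) (X 0 : MvP) = Polynomial.X
    exact MvPolynomial.finSuccEquiv_X_zero
  rw [h]
  exact Polynomial.prime_X

lemma prime_X_one : Prime (X 1 : MvP) := by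
  have h := (MulEquiv.prime_iff
    ((renameEquiv Kbar (Equiv.swap (0 : Fin 2) 1)).toRingEquiv.toMulEquiv)).mpr prime_X_zero
  have he : ((renameEquiv Kbar (Equiv.swap (0 : Fin 2) 1)).toRingEquiv.toMulEquiv) (X 0 : MvP)
      = X 1 := by
    show (renameEquiv Kbar (Equiv.swap (0 : Fin 2) 1)) (X 0 : MvP) = X 1
    simp [renameEquiv_apply, rename_X]
  rwa [he] at h

noncomputable def shearHom (ζ : Kbar) : MvP →ₐ[Kbar] MvP :=
  aeval ![X 0 + C ζ * X 1, X 1]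

lemma shear_invol (ζ : Kbar) : (shearHom ζ).comp (shearHom ζ) = AlgHom.id Kbar MvP := by
  apply MvPolynomial.algHom_ext
  intro j
  fin_cases j
  · show shearHom ζ (shearHom ζ (X 0)) = X 0
    simp only [shearHom, aeval_X, Matrix.cons_val_zero, map_add, map_mul, aeval_C,
      Matrix.cons_val_one, Matrix.head_cons, MvPolynomial.algebraMap_eq]
    rw [add_assoc, CharTwo.add_self_eq_zero, add_zero]
  · show shearHom ζ (shearHom ζ (X 1)) = X 1
    simp [shearHom]

noncomputable def shearEquiv (ζ : Kbar) : MvP ≃ₐ[Kbar] MvP :=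
  AlgEquiv.ofAlgHom (shearHom ζ) (shearHom ζ) (shear_invol ζ) (shear_invol ζ)

lemma prime_linear (ζ : Kbar) : Prime (X 0 + C ζ * X 1 : MvP) := by
  have h := (MulEquiv.prime_iff ((shearEquiv ζ).toRingEquiv.toMulEquiv)).mpr prime_X_zero
  have he : ((shearEquiv ζ).toRingEquiv.toMulEquiv) (X 0 : MvP) = X 0 + C ζ * X 1 := by
    show (shearEquiv ζ) (X 0) = X 0 + C ζ * X 1
    simp [shearEquiv, shearHom]
  rwa [he] at h

/-! ### Squarefreeness machinery -/

lemma squarefree_list_prod_primes {R : Type*} [CommMonoidWithZero R] [IsCancelMulZero R]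
    [DecompositionMonoid R] :
    ∀ l : List R, (∀ a ∈ l, Prime a) → l.Pairwise (fun a b => ¬ a ∣ b) → Squarefree l.prod
  | [], _, _ => by simpa using squarefree_one
  | a :: l, hp, hpw => by
    rw [List.prod_cons, squarefree_mul_iff]
    have hpa : Prime a := hp a (List.mem_cons_self (a := a) (l := l))
    have hrest := squarefree_list_prod_primes l
      (fun b hb => hp b (List.mem_cons_of_mem _ hb)) hpw.of_cons
    refine ⟨?_, hpa.squarefree, hrest⟩
    intro d hda hdl
    obtain ⟨e, he⟩ := hda
    rcases hpa.irreducible.isUnit_or_isUnit he with hu | hu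
    · exact hu
    · exfalso
      have had : a ∣ d := (he ▸ associated_mul_unit_left d e hu).dvd
      have hprod : a ∣ (↑l : Multiset R).prod := by
        rw [Multiset.prod_coe]; exact had.trans hdl
      obtain ⟨b, hb, hab⟩ := hpa.exists_mem_multiset_dvd hprod
      exact (List.pairwise_cons.mp hpw).1 b (by simpa using hb) hab

lemma not_dvd_of_eval {f g : MvP} (x : Fin 2 → Kbar)
    (hf : eval x f = 0) (hg : eval x g ≠ 0) : ¬ f ∣ g := by
  rintro ⟨t, rfl⟩
  apply hg
  rw [map_mul, hf, zero_mul]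

/-- Pointwise factorization of `a^m - e·b^m` via the roots of `X^m - e`. -/
lemma scalar_factor (m : ℕ) (hm : m ≠ 0) (e : Kbar) (he : e ≠ 0)
    (a b : Kbar) :
    a ^ m - e * b ^ m =
      (((Polynomial.X ^ m - Polynomial.C e : Polynomial Kbar).roots).map
        (fun ζ => a + ζ * b)).prod := by
  set p : Polynomial Kbar := Polynomial.X ^ m - Polynomial.C e with hp
  have hmonic : p.Monic := Polynomial.monic_X_pow_sub_C e hm
  have hsplits : p.Splits := IsAlgClosed.splits p
  have hdeg : p.natDegree = m := Polynomial.natDegree_X_pow_sub_C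
  have hcard : Multiset.card p.roots = m := by
    rw [(Polynomial.splits_iff_card_roots).mp hsplits, hdeg]
  have hfac : p = (p.roots.map fun ζ => Polynomial.X - Polynomial.C ζ).prod :=
    hsplits.eq_prod_roots_of_monic hmonic
  by_cases hb : b = 0
  · subst hb
    simp only [mul_zero, add_zero]
    rw [Multiset.map_const', Multiset.prod_replicate, hcard, zero_pow hm, mul_zero, sub_zero]
  · set s : Kbar := a * b⁻¹ with hs
    have hstep : p.roots.map (fun ζ => a + ζ * b) = p.roots.map (fun ζ => b * (s - ζ)) := by
      apply Multiset.map_congr rfl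
      intro ζ _
      rw [CharTwo.sub_eq_add, hs]
      field_simp
    rw [hstep]
    have hprodmul : (p.roots.map (fun ζ => b * (s - ζ))).prod =
        (p.roots.map (fun _ => b)).prod * (p.roots.map (fun ζ => s - ζ)).prod := by
      rw [← Multiset.prod_map_mul]
    rw [hprodmul, Multiset.map_const', Multiset.prod_replicate, hcard]
    have heval : (p.roots.map (fun ζ => s - ζ)).prod = p.eval s := by
      conv_rhs => rw [hfac]
      rw [Polynomial.eval_multiset_prod, Multiset.map_map]
      simp [Function.comp]
    rw [heval]
    have hpe : p.eval s = s ^ m - e := by simp [hp]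
    rw [hpe, hs]
    have hbm : b ^ m ≠ 0 := pow_ne_zero _ hb
    field_simp
    rw [mul_sub, div_pow, mul_div_assoc', mul_div_cancel_left₀ _ hbm]
    ring

lemma mv_factor (m : ℕ) (hm : m ≠ 0) (c d : Kbar) (hc : c ≠ 0)
    (hd : d ≠ 0) :
    (C c * X 0 ^ m + C d * X 1 ^ m : MvP)
      = C c * (((Polynomial.X ^ m - Polynomial.C (d / c) : Polynomial Kbar).roots).map
          (fun ζ => (X 0 + C ζ * X 1 : MvP))).prod := by
  apply MvPolynomial.funext
  intro x
  rw [map_add, map_mul, map_mul, map_mul, map_pow, map_pow, eval_C, eval_C, eval_X, eval_X,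
    map_multiset_prod, Multiset.map_map]
  have hcomp : ((eval x) ∘ fun ζ => (X 0 + C ζ * X 1 : MvP)) = fun ζ => x 0 + ζ * x 1 := by
    funext ζ
    simp [Function.comp]
  rw [hcomp, ← scalar_factor m hm (d / c) (div_ne_zero hd hc) (x 0) (x 1),
    CharTwo.sub_eq_add]
  field_simp

lemma squarefree_main (m : ℕ) (hm : m ≠ 0) (hmodd : Odd m) (c d : Kbar) (hc : c ≠ 0)
    (hd : d ≠ 0) :
    Squarefree (C c * X 0 ^ (m + 1) * X 1 + C d * X 1 ^ (m + 1) * X 0 : MvP) := by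
  set p : Polynomial Kbar := Polynomial.X ^ m - Polynomial.C (d / c) with hp
  have he : d / c ≠ 0 := div_ne_zero hd hc
  have hm1 : ((m : Kbar)) ≠ 0 := by
    rw [odd_cast_one hmodd]; exact one_ne_zero
  have hsep : p.Separable := Polynomial.separable_X_pow_sub_C _ hm1 he
  have hnodup : p.roots.Nodup := Polynomial.nodup_roots hsep
  have hroot0 : ∀ ζ ∈ p.roots, ζ ≠ 0 := by
    intro ζ hζ hζ0
    have hp0 : p ≠ 0 := (Polynomial.monic_X_pow_sub_C (d / c) hm).ne_zero
    have hr := (Polynomial.mem_roots hp0).mp hζ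
    rw [Polynomial.IsRoot, hp] at hr
    simp only [Polynomial.eval_sub, Polynomial.eval_pow, Polynomial.eval_X,
      Polynomial.eval_C, hζ0, zero_pow hm, zero_sub, neg_eq_zero] at hr
    exact he hr
  obtain ⟨lr, hlr⟩ : ∃ lr : List Kbar, (↑lr : Multiset Kbar) = p.roots :=
    Quotient.exists_rep p.roots
  have hlrnodup : lr.Nodup := Multiset.coe_nodup.mp (hlr ▸ hnodup)
  set f : Kbar → MvP := fun ζ => X 0 + C ζ * X 1 with hf
  set L : List MvP := X 0 :: X 1 :: lr.map f with hL
  have hlist : ((lr.map f).prod : MvP) = (p.roots.map f).prod := by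
    rw [← Multiset.prod_coe, ← Multiset.map_coe, hlr]
  have hroots := mv_factor m hm c d hc hd
  rw [← hp] at hroots
  have key : (C c * X 0 ^ (m + 1) * X 1 + C d * X 1 ^ (m + 1) * X 0 : MvP)
      = C c * L.prod := by
    rw [hL, List.prod_cons, List.prod_cons, hlist]
    calc (C c * X 0 ^ (m + 1) * X 1 + C d * X 1 ^ (m + 1) * X 0 : MvP)
        = X 0 * X 1 * (C c * X 0 ^ m + C d * X 1 ^ m) := by ring
      _ = X 0 * X 1 * (C c * (p.roots.map f).prod) := by rw [hroots]
      _ = C c * (X 0 * (X 1 * (p.roots.map f).prod)) := by ring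
  rw [key]
  have hsq : Squarefree (L.prod) := by
    apply squarefree_list_prod_primes
    · intro a ha
      rw [hL] at ha
      simp only [List.mem_cons, List.mem_map] at ha
      rcases ha with rfl | rfl | ⟨ζ, hζ, rfl⟩
      · exact prime_X_zero
      · exact prime_X_one
      · exact prime_linear ζ
    · rw [hL]
      refine List.Pairwise.cons ?_ (List.Pairwise.cons ?_ ?_)
      · intro b hb
        simp only [List.mem_cons, List.mem_map] at hb
        rcases hb with rfl | ⟨ζ, hζ, rfl⟩
        · exact not_dvd_of_eval ![0, 1] (by simp) (by simp)
        · have hζ0 : ζ ≠ 0 := hroot0 ζ (by rw [← hlr]; exact Multiset.mem_coe.mpr hζ)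
          exact not_dvd_of_eval ![0, 1] (by simp) (by simp [hf, hζ0])
      · intro b hb
        simp only [List.mem_map] at hb
        obtain ⟨ζ, hζ, rfl⟩ := hb
        exact not_dvd_of_eval ![1, 0] (by simp) (by simp [hf])
      · refine List.Pairwise.map f ?_ hlrnodup
        intro a b hab
        refine not_dvd_of_eval ![a, 1] (by simp [hf, CharTwo.add_self_eq_zero]) ?_
        simp only [hf, map_add, map_mul, eval_X, eval_C, Matrix.cons_val_zero,
          Matrix.cons_val_one, Matrix.head_cons, mul_one]
        intro h0
        rw [← CharTwo.sub_eq_add, sub_eq_zero] at h0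
        exact hab h0
  have hdvd : (C c * L.prod : MvP) ∣ L.prod := by
    refine ⟨C c⁻¹, ?_⟩
    rw [mul_right_comm, ← C_mul, mul_inv_cancel₀ hc, C_1, one_mul]
  exact Squarefree.squarefree_of_dvd hdvd hsq

/-- For `k = 2^i·ℓ` (`ℓ` odd, `i ≥ 1`) and `α^ℓ = β^ℓ = 1`, the
degree-`(2^i + 1)` homogeneous component of `f_k(x+α, y+β)` equals
`α^{-2^i}·x^{2^i}·y + β^{-2^i}·y^{2^i}·x`, and this homogeneous polynomial is squarefree
(a product of `2^i + 1` pairwise non-proportional linear forms). -/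
theorem next_homogeneous_component_squarefree
    (i ℓ k : ℕ) (hi : 1 ≤ i) (hℓ : Odd ℓ) (hk : k = 2 ^ i * ℓ)
    (α β : Kbar) (hα : α ^ ℓ = 1) (hβ : β ^ ℓ = 1) :
    homogeneousComponent (2 ^ i + 1) (translatePoly α β (fpoly k)) =
      C (α⁻¹ ^ 2 ^ i) * X 0 ^ 2 ^ i * X 1 + C (β⁻¹ ^ 2 ^ i) * X 1 ^ 2 ^ i * X 0 ∧
    Squarefree (homogeneousComponent (2 ^ i + 1) (translatePoly α β (fpoly k))) := by
  have h1 := component_eq i ℓ k hi hℓ hk α β hα hβ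
  refine ⟨h1, ?_⟩
  rw [h1]
  have hl1 : 1 ≤ ℓ := hℓ.pos
  have hα0 : α ≠ 0 := by
    intro h; rw [h, zero_pow (by omega)] at hα; exact zero_ne_one hα
  have hβ0 : β ≠ 0 := by
    intro h; rw [h, zero_pow (by omega)] at hβ; exact zero_ne_one hβ
  set q := 2 ^ i with hq
  have hq2 : 2 ≤ q := by
    calc 2 = 2 ^ 1 := by norm_num
    _ ≤ 2 ^ i := Nat.pow_le_pow_right (by norm_num) hi
  have hm : q - 1 ≠ 0 := by omega
  have h2i : q = 2 * 2 ^ (i - 1) := by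
    rw [hq, ← pow_succ']
    congr 1
    omega
  have hmodd : Odd (q - 1) := ⟨2 ^ (i - 1) - 1, by
    have h1 : 1 ≤ 2 ^ (i - 1) := Nat.one_le_two_pow
    omega⟩
  have := squarefree_main (q - 1) hm hmodd (α⁻¹ ^ q) (β⁻¹ ^ q)
    (pow_ne_zero _ (inv_ne_zero hα0)) (pow_ne_zero _ (inv_ne_zero hβ0))
  rwa [Nat.sub_add_cancel (by omega : 1 ≤ q)] at this
end

section
/- Let k = 2^i with i ≥ 1 and let g_k(x,y) ∈ 𝔽₂[x,y] be the polynomial of degree k−2 with (x+y)(x+1)(y+1)·g_k(x,y) = x·y^k + y·x^k + x^k + y^k + x + y. Then in GF(2^i)[x,y] one has the factorization g_k(x,y) = ∏_{γ ∈ GF(2^i) \ {0,1}} (x + γ·y + γ + 1). -/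
set_option maxHeartbeats 1000000


open MvPolynomial

noncomputable instance (i : ℕ) : Fintype (GaloisField 2 i) := Fintype.ofFinite _

open Polynomial in
lemma aux_prod_X_sub_C (F : Type*) [Field F] [Fintype F] :
    ∏ a : F, (Polynomial.X - Polynomial.C a) =
      Polynomial.X ^ Fintype.card F - Polynomial.X := by
  classical
  have hq : 1 < Fintype.card F := Fintype.one_lt_card
  have hm : (Polynomial.X ^ Fintype.card F - Polynomial.X : F[X]).Monic := by
    apply (monic_X_pow _).sub_of_left
    rw [degree_X_pow, degree_X]
    exact_mod_cast hq
  have hroots := FiniteField.roots_X_pow_card_sub_X F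
  have hcard : Multiset.card (Polynomial.X ^ Fintype.card F - Polynomial.X : F[X]).roots =
      (Polynomial.X ^ Fintype.card F - Polynomial.X : F[X]).natDegree := by
    rw [hroots, FiniteField.X_pow_card_sub_X_natDegree_eq F hq]
    simp
  have := prod_multiset_X_sub_C_of_monic_of_roots_card_eq hm hcard
  rw [hroots] at this
  rw [← this]
  rfl

lemma aux_prod_lin {F K : Type*} [Field F] [Fintype F] [Field K] (f : F →+* K)
    (U V : K) (hV : V ≠ 0) (m : ℕ) (hm : Fintype.card F = m + 1) :
    ∏ a : F, (U - f a * V) = U ^ (m + 1) - U * V ^ m := by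
  have key : ∀ a : F, U - f a * V = V * (U / V - f a) := fun a => by field_simp
  calc ∏ a : F, (U - f a * V) = ∏ a : F, V * (U / V - f a) := by simp_rw [key]
    _ = V ^ (m + 1) * ∏ a : F, (U / V - f a) := by
        rw [Finset.prod_mul_distrib, Finset.prod_const, Finset.card_univ, hm]
    _ = V ^ (m + 1) * ((U / V) ^ (m + 1) - U / V) := by
        congr 1
        have h := congrArg (Polynomial.eval₂ f (U / V)) (aux_prod_X_sub_C F)
        rw [hm] at h
        simpa [Polynomial.eval₂_finset_prod] using h
    _ = U ^ (m + 1) - U * V ^ m := by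
        rw [div_pow, mul_sub, mul_div_cancel₀ _ (pow_ne_zero _ hV), pow_succ V m]; field_simp

open scoped Classical in
/-- For `k = 2^i` (`i ≥ 1`) and `g_k ∈ 𝔽₂[x,y]` of degree `k-2` with
`(x+y)(x+1)(y+1)·g_k = x·y^k + y·x^k + x^k + y^k + x + y`, over `GF(2^i)` one has
`g_k(x,y) = ∏_{γ ∈ GF(2^i) \ {0,1}} (x + γ·y + γ + 1)`. -/
theorem factorization_of_g_for_two_power
    (i k : ℕ) (hi : 1 ≤ i) (hk : k = 2 ^ i)
    (g : MvPolynomial (Fin 2) (ZMod 2)) (hdeg : g.totalDegree = k - 2)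
    (hg : (X 0 + X 1) * (X 0 + 1) * (X 1 + 1) * g =
        X 0 * X 1 ^ k + X 1 * X 0 ^ k + X 0 ^ k + X 1 ^ k + X 0 + X 1) :
    MvPolynomial.map (algebraMap (ZMod 2) (GaloisField 2 i)) g =
      ∏ γ ∈ Finset.univ.filter (fun γ : GaloisField 2 i => γ ≠ 0 ∧ γ ≠ 1),
        (X 0 + C γ * X 1 + C γ + 1) := by
  classical
  let F := GaloisField 2 i
  let R := MvPolynomial (Fin 2) (GaloisField 2 i)
  let K := FractionRing R
  have hι : Function.Injective (algebraMap R K) := IsFractionRing.injective R K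
  haveI : CharP K 2 := charP_of_injective_ringHom hι 2
  have hk2 : 2 ≤ k := by
    rw [hk]; calc 2 = 2 ^ 1 := by norm_num
    _ ≤ 2 ^ i := Nat.pow_le_pow_right (by norm_num) hi
  have hcard : Fintype.card F = k := by
    rw [← Nat.card_eq_fintype_card, GaloisField.card 2 i (by omega), hk]
  have hcard' : Fintype.card F = (k - 1) + 1 := by omega
  have h2R : (2 : R) = 0 := by exact_mod_cast CharP.cast_eq_zero R 2
  -- nonzero factors
  have hx01 : (X 0 + X 1 : R) ≠ 0 := fun h => by
    have := congrArg (eval (fun j : Fin 2 => if j = 0 then 1 else 0)) h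
    simp at this
  have hx0 : (X 0 + 1 : R) ≠ 0 := fun h => by
    have := congrArg (eval (fun _ : Fin 2 => 0)) h
    simp at this
  have hx1 : (X 1 + 1 : R) ≠ 0 := fun h => by
    have := congrArg (eval (fun _ : Fin 2 => 0)) h
    simp at this
  -- main product identity in R
  have hprod : (∏ γ : F, ((X 0 + 1) + C γ * (X 1 + 1) : R))
      = (X 0 + 1) ^ k + (X 0 + 1) * (X 1 + 1) ^ (k - 1) := by
    apply hι
    have hV : algebraMap R K (X 1 + 1) ≠ 0 := fun h => hx1 (hι (by simpa using h))
    have := aux_prod_lin ((algebraMap R K).comp (C : F →+* R))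
      (algebraMap R K (X 0 + 1)) (algebraMap R K (X 1 + 1)) hV (k - 1) hcard'
    rw [map_prod, map_add, map_pow, map_mul, map_pow]
    calc ∏ γ : F, algebraMap R K ((X 0 + 1) + C γ * (X 1 + 1))
        = ∏ γ : F, (algebraMap R K (X 0 + 1) -
            ((algebraMap R K).comp (C : F →+* R)) γ * algebraMap R K (X 1 + 1)) := by
          apply Finset.prod_congr rfl
          intro γ _
          rw [CharTwo.sub_eq_add]
          simp [map_add, map_mul]
      _ = algebraMap R K (X 0 + 1) ^ ((k-1)+1) -
            algebraMap R K (X 0 + 1) * algebraMap R K (X 1 + 1) ^ (k-1) := this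
      _ = algebraMap R K (X 0 + 1) ^ k + algebraMap R K (X 0 + 1) *
            algebraMap R K (X 1 + 1) ^ (k-1) := by
          have hkk : (k - 1) + 1 = k := by omega
          rw [CharTwo.sub_eq_add, hkk]
  -- split the full product
  have hsplit : (∏ γ : F, (X 0 + C γ * X 1 + C γ + 1 : R))
      = (∏ γ ∈ Finset.univ.filter (fun γ : F => γ ≠ 0 ∧ γ ≠ 1),
          (X 0 + C γ * X 1 + C γ + 1)) * ((X 0 + 1) * (X 0 + X 1)) := by
    rw [← Finset.prod_filter_mul_prod_filter_not Finset.univ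
      (fun γ : F => γ ≠ 0 ∧ γ ≠ 1) (fun γ => (X 0 + C γ * X 1 + C γ + 1 : R))]
    congr 1
    have hset : Finset.filter (fun γ : F => ¬(γ ≠ 0 ∧ γ ≠ 1)) Finset.univ = {0, 1} := by
      ext γ; simp; tauto
    rw [hset, Finset.prod_pair (zero_ne_one)]
    simp only [map_zero, map_one]
    linear_combination (X 0 + 1 : R) * h2R
  -- Frobenius
  have hfrob0 : ((X 0 + 1 : R)) ^ k = X 0 ^ k + 1 := by
    rw [hk, add_pow_char_pow, one_pow]
  have hfrob1 : ((X 1 + 1 : R)) ^ k = X 1 ^ k + 1 := by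
    rw [hk, add_pow_char_pow, one_pow]
  -- map hg to F
  have hmap := congrArg (MvPolynomial.map (algebraMap (ZMod 2) F)) hg
  simp only [map_mul, map_add, map_pow, MvPolynomial.map_X, map_one] at hmap
  -- key computation
  have key : (X 0 + X 1) * (X 0 + 1) * (X 1 + 1) *
      (∏ γ ∈ Finset.univ.filter (fun γ : F => γ ≠ 0 ∧ γ ≠ 1),
        (X 0 + C γ * X 1 + C γ + 1)) =
      (X 0 * X 1 ^ k + X 1 * X 0 ^ k + X 0 ^ k + X 1 ^ k + X 0 + X 1 : R) := by
    have e1 : (X 0 + X 1) * (X 0 + 1) * (X 1 + 1) *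
        (∏ γ ∈ Finset.univ.filter (fun γ : F => γ ≠ 0 ∧ γ ≠ 1),
          (X 0 + C γ * X 1 + C γ + 1 : R)) =
        (X 1 + 1) * ((∏ γ ∈ Finset.univ.filter (fun γ : F => γ ≠ 0 ∧ γ ≠ 1),
          (X 0 + C γ * X 1 + C γ + 1)) * ((X 0 + 1) * (X 0 + X 1))) := by ring
    rw [e1, ← hsplit]
    have e2 : (∏ γ : F, (X 0 + C γ * X 1 + C γ + 1 : R))
        = ∏ γ : F, ((X 0 + 1) + C γ * (X 1 + 1) : R) := by
      apply Finset.prod_congr rfl; intro γ _; ring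
    rw [e2, hprod, mul_add, ← mul_assoc]
    have e3 : (X 1 + 1 : R) * (X 0 + 1) * (X 1 + 1) ^ (k - 1)
        = (X 0 + 1) * (X 1 + 1) ^ k := by
      have : (X 1 + 1 : R) * (X 1 + 1) ^ (k - 1) = (X 1 + 1) ^ k := by
        rw [← pow_succ']
        congr 1
        omega
      calc (X 1 + 1 : R) * (X 0 + 1) * (X 1 + 1) ^ (k - 1)
          = (X 0 + 1) * ((X 1 + 1) * (X 1 + 1) ^ (k - 1)) := by ring
        _ = (X 0 + 1) * (X 1 + 1) ^ k := by rw [this]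
    rw [e3, hfrob0, hfrob1]
    linear_combination h2R
  have hne : ((X 0 + X 1) * (X 0 + 1) * (X 1 + 1) : R) ≠ 0 :=
    mul_ne_zero (mul_ne_zero hx01 hx0) hx1
  exact mul_left_cancel₀ hne (hmap.trans key.symm)
end

section
/- (Segre) Let k = 6 and let e ≥ 1. Then D(x⁶) is a hyperoval in PG(2, 2^e) if and only if e is odd; equivalently, the determinant x·y⁶ + y·x⁶ + x·z⁶ + z·x⁶ + y·z⁶ + z·y⁶ is nonzero for all pairwise distinct x, y, z ∈ GF(2^e) if and only if e is odd. -/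
private lemma pow_two_mod_three (e : ℕ) : 2 ^ e % 3 = if e % 2 = 0 then 1 else 2 := by
  induction e with
  | zero => rfl
  | succ n ih =>
    rw [pow_succ, Nat.mul_mod, ih]
    rcases Nat.even_or_odd n with h | h
    · have h0 : n % 2 = 0 := Nat.even_iff.mp h
      simp [h0, Nat.succ_mod_two_eq_one_iff.mpr h0]
    · have h1 : n % 2 = 1 := Nat.odd_iff.mp h
      simp [h1, Nat.succ_mod_two_eq_zero_iff.mpr h1]

private lemma no_root_of_odd' {e : ℕ} (he : 1 ≤ e) (hodd : Odd e)
    (a : GaloisField 2 e) : a ^ 2 + a + 1 ≠ 0 := by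
  intro ha
  have hane : a ≠ 0 := by rintro rfl; simp at ha
  have h2 : (2 : GaloisField 2 e) = 0 := by
    have := CharP.cast_eq_zero (GaloisField 2 e) 2; simpa using this
  have hane1 : a ≠ 1 := by
    rintro rfl
    have h1 : (1 : GaloisField 2 e) = 0 := by linear_combination ha - h2
    exact one_ne_zero h1
  have ha3 : a ^ 3 = 1 := by linear_combination (a - 1) * ha
  set u : (GaloisField 2 e)ˣ := Units.mk0 a hane with hu
  have hu3 : u ^ 3 = 1 := by ext; push_cast; exact ha3
  have hune : u ≠ 1 := by
    intro h
    exact hane1 (by simpa [hu] using congrArg Units.val h)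
  have hord : orderOf u = 3 := by
    have hdvd : orderOf u ∣ 3 := orderOf_dvd_of_pow_eq_one hu3
    rcases (Nat.dvd_prime Nat.prime_three).mp hdvd with h | h
    · exact absurd (orderOf_eq_one_iff.mp h) hune
    · exact h
  have hcard : Nat.card (GaloisField 2 e)ˣ = 2 ^ e - 1 := by
    rw [Nat.card_units, GaloisField.card 2 e (by omega)]
  have h3dvd : 3 ∣ 2 ^ e - 1 := by
    rw [← hcard, ← hord]; exact orderOf_dvd_natCard u
  have h1 := pow_two_mod_three e
  have hodd' : e % 2 = 1 := Nat.odd_iff.mp hodd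
  rw [if_neg (by omega)] at h1
  have h2' : 1 ≤ 2 ^ e := Nat.one_le_two_pow
  omega

private lemma exists_root_of_even' {e : ℕ} (he : 1 ≤ e) (heven : ¬ Odd e) :
    ∃ a : GaloisField 2 e, a ^ 2 + a + 1 = 0 := by
  have h2 : (2 : GaloisField 2 e) = 0 := by
    have := CharP.cast_eq_zero (GaloisField 2 e) 2; simpa using this
  haveI : Fintype (GaloisField 2 e)ˣ := Fintype.ofFinite _
  have hcard : Fintype.card (GaloisField 2 e)ˣ = 2 ^ e - 1 := by
    rw [← Nat.card_eq_fintype_card, Nat.card_units, GaloisField.card 2 e (by omega)]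
  have h3dvd : 3 ∣ Fintype.card (GaloisField 2 e)ˣ := by
    rw [hcard]
    have h1 := pow_two_mod_three e
    have hev : e % 2 = 0 := Nat.even_iff.mp (Nat.not_odd_iff_even.mp heven)
    rw [if_pos hev] at h1
    have h2' : 1 ≤ 2 ^ e := Nat.one_le_two_pow
    omega
  haveI : Fact (Nat.Prime 3) := ⟨Nat.prime_three⟩
  obtain ⟨u, hu⟩ := exists_prime_orderOf_dvd_card 3 h3dvd
  have hu3 : u ^ 3 = 1 := by rw [← hu]; exact pow_orderOf_eq_one u
  have hune : u ≠ 1 := by intro h; rw [h, orderOf_one] at hu; omega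
  refine ⟨(u : GaloisField 2 e), ?_⟩
  have ha3 : (u : GaloisField 2 e) ^ 3 = 1 := by
    have := congrArg Units.val hu3; push_cast at this; exact this
  have hane1 : (u : GaloisField 2 e) ≠ 1 := fun h => hune (Units.ext h)
  have hfac : ((u : GaloisField 2 e) - 1) * ((u : GaloisField 2 e) ^ 2 + (u : GaloisField 2 e) + 1) = 0 := by
    linear_combination ha3
  rcases mul_eq_zero.mp hfac with h | h
  · exact absurd (by linear_combination h) hane1
  · exact h

/-- The key factorization in characteristic 2. -/
private lemma det_factor' {K : Type*} [Field K] (h2 : (2 : K) = 0) (x y z : K) :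
    x * y ^ 6 + y * x ^ 6 + x * z ^ 6 + z * x ^ 6 + y * z ^ 6 + z * y ^ 6 =
    (x + y) * (y + z) * (z + x) *
      (((x + y + z) ^ 2) ^ 2 + (x + y + z) ^ 2 * (x * y + y * z + z * x)
        + (x * y + y * z + z * x) ^ 2) := by
  linear_combination
    ((-3) * y^2*z^5 + (-7) * y^3*z^4 + (-7) * y^4*z^3 + (-3) * y^5*z^2
      + (-6) * x*y*z^5 + (-22) * x*y^2*z^4 + (-33) * x*y^3*z^3 + (-22) * x*y^4*z^2
      + (-6) * x*y^5*z + (-3) * x^2*z^5 + (-22) * x^2*y*z^4 + (-52) * x^2*y^2*z^3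
      + (-52) * x^2*y^3*z^2 + (-22) * x^2*y^4*z + (-3) * x^2*y^5 + (-7) * x^3*z^4
      + (-33) * x^3*y*z^3 + (-52) * x^3*y^2*z^2 + (-33) * x^3*y^3*z + (-7) * x^3*y^4
      + (-7) * x^4*z^3 + (-22) * x^4*y*z^2 + (-22) * x^4*y^2*z + (-7) * x^4*y^3
      + (-3) * x^5*z^2 + (-6) * x^5*y*z + (-3) * x^5*y^2) * h2

/-- `A² + AB + B² = 0` forces `A = B = 0` when `t² + t + 1` has no root. -/
private lemma ab_zero' {K : Type*} [Field K]
    (hnr : ∀ t : K, t ^ 2 + t + 1 ≠ 0) {A B : K}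
    (h : A ^ 2 + A * B + B ^ 2 = 0) : A = 0 ∧ B = 0 := by
  have hB : B = 0 := by
    by_contra hB
    apply hnr (A / B)
    have key : ((A / B) ^ 2 + A / B + 1) * B ^ 2 = A ^ 2 + A * B + B ^ 2 := by
      field_simp
    have : ((A / B) ^ 2 + A / B + 1) * B ^ 2 = 0 := by rw [key, h]
    rcases mul_eq_zero.mp this with h' | h'
    · exact h'
    · exact absurd (pow_eq_zero_iff (n := 2) (by norm_num) |>.mp h') hB
  refine ⟨?_, hB⟩
  rw [hB] at h
  have hA2 : A ^ 2 = 0 := by linear_combination h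
  exact pow_eq_zero_iff (n := 2) (by norm_num) |>.mp hA2

/-- Segre: For `k = 6` and `e ≥ 1`, the set `D(x⁶)` is a hyperoval in
`PG(2, 2^e)` — equivalently, the determinant
`x·y⁶ + y·x⁶ + x·z⁶ + z·x⁶ + y·z⁶ + z·y⁶` is nonzero for all pairwise distinct
`x, y, z ∈ GF(2^e)` — if and only if `e` is odd. -/
theorem segre_six_hyperoval (e : ℕ) (he : 1 ≤ e) :
    (∀ x y z : GaloisField 2 e, x ≠ y → x ≠ z → y ≠ z →
      x * y ^ 6 + y * x ^ 6 + x * z ^ 6 + z * x ^ 6 + y * z ^ 6 + z * y ^ 6 ≠ 0) ↔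
    Odd e := by
  have h2 : (2 : GaloisField 2 e) = 0 := by
    have := CharP.cast_eq_zero (GaloisField 2 e) 2; simpa using this
  have hadd : ∀ u v : GaloisField 2 e, u + v = 0 → u = v := by
    intro u v h
    linear_combination h - v * h2
  constructor
  · -- hyperoval ⇒ e odd
    intro hyp
    by_contra heven
    obtain ⟨ω, hω⟩ := exists_root_of_even' he heven
    have hω0 : ω ≠ 0 := by rintro rfl; simp at hω
    have hω1 : ω ≠ 1 := by
      rintro rfl
      have h1 : (1 : GaloisField 2 e) = 0 := by linear_combination hω - h2
      exact one_ne_zero h1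
    have d1 : (1 : GaloisField 2 e) ≠ ω := fun h => hω1 h.symm
    have d2 : (1 : GaloisField 2 e) ≠ ω ^ 2 := by
      intro h
      exact hω0 (by linear_combination hω + h - h2)
    have d3 : ω ≠ ω ^ 2 := by
      intro h
      have h1 : (1 : GaloisField 2 e) = 0 := by linear_combination hω + h - ω * h2
      exact one_ne_zero h1
    apply hyp 1 ω (ω ^ 2) d1 d2 d3
    linear_combination (ω^11 - ω^9 + ω^8 + ω^4 - ω^3 + ω) * hω
  · -- e odd ⇒ hyperoval
    intro hodd x y z hxy hxz hyz hF
    have hnr : ∀ t : GaloisField 2 e, t ^ 2 + t + 1 ≠ 0 := no_root_of_odd' he hodd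
    rw [det_factor' h2 x y z] at hF
    have hxy' : x + y ≠ 0 := fun h => hxy (hadd x y h)
    have hyz' : y + z ≠ 0 := fun h => hyz (hadd y z h)
    have hzx' : z + x ≠ 0 := fun h => hxz (hadd z x h).symm
    have hQ : ((x + y + z) ^ 2) ^ 2 + (x + y + z) ^ 2 * (x * y + y * z + z * x)
        + (x * y + y * z + z * x) ^ 2 = 0 := by
      rcases mul_eq_zero.mp hF with h | h
      · rcases mul_eq_zero.mp h with h' | h'
        · rcases mul_eq_zero.mp h' with h'' | h''
          · exact absurd h'' hxy'
          · exact absurd h'' hyz'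
        · exact absurd h' hzx'
      · exact h
    obtain ⟨hA, hB⟩ := ab_zero' hnr hQ
    have he1 : x + y + z = 0 :=
      pow_eq_zero_iff (n := 2) (by norm_num) |>.mp hA
    have hz : z = x + y := (hadd (x + y) z (by linear_combination he1)).symm
    rw [hz] at hB
    have hB' : x ^ 2 + x * y + y ^ 2 = 0 := by
      linear_combination hB - (x * y) * h2
    obtain ⟨hx0, hy0⟩ := ab_zero' hnr hB'
    exact hxy (by rw [hx0, hy0])
end

section
/- Let p(x₁,…,x_n) ∈ 𝔽_q[x₁,…,x_n] be irreducible of total degree t. Then there exists a divisor r of t and an absolutely irreducible polynomial h(x₁,…,x_n) ∈ 𝔽_{q^r}[x₁,…,x_n] of total degree t/r such that p = c·∏_{σ ∈ Gal(𝔽_{q^r}/𝔽_q)} σ(h), where σ acts on polynomials by applying σ to each coefficient and c ∈ 𝔽_q. Furthermore, if p is homogeneous, then h may be taken homogeneous. -/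
open MvPolynomial


namespace AuxMv

variable {σ R : Type*} [CommRing R]

lemma td_eq (f : MvPolynomial σ R) : f.totalDegree = f.support.sup Finsupp.degree := rfl

lemma exists_top {f : MvPolynomial σ R} (hf : f ≠ 0) :
    ∃ d ∈ f.support, Finsupp.degree d = f.totalDegree :=
  have : f.support.Nonempty := MvPolynomial.support_nonempty.mpr hf
  let ⟨d, hd, he⟩ := f.support.exists_mem_eq_sup this Finsupp.degree
  ⟨d, hd, he.symm⟩

/-- The minimal degree of a monomial of `f` (0 if `f = 0`). -/
noncomputable def botDeg (f : MvPolynomial σ R) : ℕ :=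
  sInf (Finsupp.degree '' (f.support : Set (σ →₀ ℕ)))

lemma exists_bot {f : MvPolynomial σ R} (hf : f ≠ 0) :
    ∃ d ∈ f.support, Finsupp.degree d = botDeg f := by
  have hne : (Finsupp.degree '' (f.support : Set (σ →₀ ℕ))).Nonempty := by
    obtain ⟨d, hd⟩ := MvPolynomial.support_nonempty.mpr hf
    exact ⟨_, ⟨d, hd, rfl⟩⟩
  obtain ⟨d, hd, he⟩ := Nat.sInf_mem hne
  exact ⟨d, hd, he⟩

lemma botDeg_le {f : MvPolynomial σ R} {e : σ →₀ ℕ} (he : e ∈ f.support) :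
    botDeg f ≤ Finsupp.degree e :=
  Nat.sInf_le ⟨e, he, rfl⟩

lemma degree_add (u v : σ →₀ ℕ) : Finsupp.degree (u + v) = u.degree + v.degree := by
  simp [Finsupp.degree_eq_weight_one, map_add]

lemma coeff_mul_eq_zero_of_forall {f g : MvPolynomial σ R} {d : σ →₀ ℕ}
    (H : ∀ u ∈ f.support, ∀ v ∈ g.support, u.degree + v.degree ≠ d.degree) :
    MvPolynomial.coeff d (f * g) = 0 := by
  classical
  rw [MvPolynomial.coeff_mul]
  apply Finset.sum_eq_zero
  rintro ⟨u, v⟩ huv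
  rw [Finset.HasAntidiagonal.mem_antidiagonal] at huv
  by_contra hne
  have hu : u ∈ f.support := by
    rw [MvPolynomial.mem_support_iff]; intro h0; apply hne; simp [h0]
  have hv : v ∈ g.support := by
    rw [MvPolynomial.mem_support_iff]; intro h0; apply hne; simp [h0]
  exact H u hu v hv (by rw [← degree_add, huv])

lemma support_hc (n : ℕ) (f : MvPolynomial σ R) :
    ∀ e ∈ (homogeneousComponent n f).support, e.degree = n ∧ MvPolynomial.coeff e f ≠ 0 := by
  intro e he
  rw [MvPolynomial.mem_support_iff, coeff_homogeneousComponent] at he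
  by_cases hd : e.degree = n
  · refine ⟨hd, ?_⟩
    rwa [if_pos (by simpa [Finsupp.degree] using hd)] at he
  · rw [if_neg (by simpa [Finsupp.degree] using hd)] at he
    exact absurd rfl he

lemma support_sub_hc (n : ℕ) (f : MvPolynomial σ R) :
    ∀ e ∈ (f - homogeneousComponent n f).support,
      e.degree ≠ n ∧ MvPolynomial.coeff e f ≠ 0 := by
  intro e he
  rw [MvPolynomial.mem_support_iff, MvPolynomial.coeff_sub, coeff_homogeneousComponent] at he
  by_cases hd : e.degree = n
  · rw [if_pos (by simpa [Finsupp.degree] using hd), sub_self] at he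
    exact absurd rfl he
  · rw [if_neg (by simpa [Finsupp.degree] using hd), sub_zero] at he
    exact ⟨hd, he⟩

lemma hc_ne_zero_top {f : MvPolynomial σ R} (hf : f ≠ 0) :
    homogeneousComponent f.totalDegree f ≠ 0 := by
  obtain ⟨d, hd, he⟩ := exists_top hf
  intro h0
  have : MvPolynomial.coeff d (homogeneousComponent f.totalDegree f) = MvPolynomial.coeff d f := by
    rw [coeff_homogeneousComponent, if_pos (by simpa [Finsupp.degree] using he)]
  rw [h0, MvPolynomial.coeff_zero] at this
  exact MvPolynomial.mem_support_iff.mp hd this.symm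

lemma hc_ne_zero_bot {f : MvPolynomial σ R} (hf : f ≠ 0) :
    homogeneousComponent (botDeg f) f ≠ 0 := by
  obtain ⟨d, hd, he⟩ := exists_bot hf
  intro h0
  have : MvPolynomial.coeff d (homogeneousComponent (botDeg f) f)
      = MvPolynomial.coeff d f := by
    rw [coeff_homogeneousComponent, if_pos (by simpa [Finsupp.degree] using he)]
  rw [h0, MvPolynomial.coeff_zero] at this
  exact MvPolynomial.mem_support_iff.mp hd this.symm

lemma degree_of_isHomogeneous {f : MvPolynomial σ R} {n : ℕ} (hf : f.IsHomogeneous n)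
    {d : σ →₀ ℕ} (hd : MvPolynomial.coeff d f ≠ 0) : d.degree = n := by
  have := hf hd
  rwa [Pi.one_def, ← Finsupp.degree_eq_weight_one] at this

end AuxMv

namespace AuxMv

open MvPolynomial

variable {σ R : Type*} [CommRing R] [IsDomain R]

lemma key_coeff_bot {f g : MvPolynomial σ R} (hf : f ≠ 0) (hg : g ≠ 0) :
    ∃ d : σ →₀ ℕ, Finsupp.degree d = botDeg f + botDeg g ∧
      MvPolynomial.coeff d (f * g) ≠ 0 := by
  classical
  set a := botDeg f
  set b := botDeg g
  set fb := homogeneousComponent a f with hfb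
  set gb := homogeneousComponent b g with hgb
  set fr := f - fb with hfr
  set gr := g - gb with hgr
  have hfb0 : fb ≠ 0 := hc_ne_zero_bot hf
  have hgb0 : gb ≠ 0 := hc_ne_zero_bot hg
  have hsplit : ∀ d : σ →₀ ℕ, Finsupp.degree d = a + b →
      MvPolynomial.coeff d (f * g) = MvPolynomial.coeff d (fb * gb) := by
    intro d hd
    have hexp : f * g = fb * gb + (fb * gr + (fr * gb + fr * gr)) := by
      rw [hfr, hgr]; ring
    rw [hexp, MvPolynomial.coeff_add, MvPolynomial.coeff_add, MvPolynomial.coeff_add]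
    have h1 : MvPolynomial.coeff d (fb * gr) = 0 := by
      apply coeff_mul_eq_zero_of_forall
      intro u hu v hv
      have hu' := (support_hc a f u hu).1
      obtain ⟨hv1, hv2⟩ := support_sub_hc b g v hv
      have : b ≤ v.degree := botDeg_le (MvPolynomial.mem_support_iff.mpr hv2)
      omega
    have h2 : MvPolynomial.coeff d (fr * gb) = 0 := by
      apply coeff_mul_eq_zero_of_forall
      intro u hu v hv
      obtain ⟨hu1, hu2⟩ := support_sub_hc a f u hu
      have : a ≤ u.degree := botDeg_le (MvPolynomial.mem_support_iff.mpr hu2)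
      have hv' := (support_hc b g v hv).1
      omega
    have h3 : MvPolynomial.coeff d (fr * gr) = 0 := by
      apply coeff_mul_eq_zero_of_forall
      intro u hu v hv
      obtain ⟨hu1, hu2⟩ := support_sub_hc a f u hu
      have : a ≤ u.degree := botDeg_le (MvPolynomial.mem_support_iff.mpr hu2)
      obtain ⟨hv1, hv2⟩ := support_sub_hc b g v hv
      have : b ≤ v.degree := botDeg_le (MvPolynomial.mem_support_iff.mpr hv2)
      omega
    rw [h1, h2, h3]; ring
  have hmul0 : fb * gb ≠ 0 := mul_ne_zero hfb0 hgb0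
  obtain ⟨d, hd⟩ := MvPolynomial.exists_coeff_ne_zero hmul0
  have hhom : (fb * gb).IsHomogeneous (a + b) :=
    (homogeneousComponent_isHomogeneous a f).mul (homogeneousComponent_isHomogeneous b g)
  have hdeg : d.degree = a + b := degree_of_isHomogeneous hhom hd
  exact ⟨d, hdeg, by rw [hsplit d hdeg]; exact hd⟩

lemma key_coeff_top {f g : MvPolynomial σ R} (hf : f ≠ 0) (hg : g ≠ 0) :
    ∃ d : σ →₀ ℕ, Finsupp.degree d = f.totalDegree + g.totalDegree ∧
      MvPolynomial.coeff d (f * g) ≠ 0 := by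
  classical
  set a := f.totalDegree
  set b := g.totalDegree
  set fb := homogeneousComponent a f with hfb
  set gb := homogeneousComponent b g with hgb
  set fr := f - fb with hfr
  set gr := g - gb with hgr
  have hfb0 : fb ≠ 0 := hc_ne_zero_top hf
  have hgb0 : gb ≠ 0 := hc_ne_zero_top hg
  have hle : ∀ (h : MvPolynomial σ R), ∀ e ∈ h.support, Finsupp.degree e ≤ h.totalDegree := by
    intro h e he
    exact MvPolynomial.le_totalDegree he
  have hsplit : ∀ d : σ →₀ ℕ, Finsupp.degree d = a + b →
      MvPolynomial.coeff d (f * g) = MvPolynomial.coeff d (fb * gb) := by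
    intro d hd
    have hexp : f * g = fb * gb + (fb * gr + (fr * gb + fr * gr)) := by
      rw [hfr, hgr]; ring
    rw [hexp, MvPolynomial.coeff_add, MvPolynomial.coeff_add, MvPolynomial.coeff_add]
    have h1 : MvPolynomial.coeff d (fb * gr) = 0 := by
      apply coeff_mul_eq_zero_of_forall
      intro u hu v hv
      have hu' := (support_hc a f u hu).1
      obtain ⟨hv1, hv2⟩ := support_sub_hc b g v hv
      have : Finsupp.degree v ≤ b := hle g v (MvPolynomial.mem_support_iff.mpr hv2)
      omega
    have h2 : MvPolynomial.coeff d (fr * gb) = 0 := by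
      apply coeff_mul_eq_zero_of_forall
      intro u hu v hv
      obtain ⟨hu1, hu2⟩ := support_sub_hc a f u hu
      have : Finsupp.degree u ≤ a := hle f u (MvPolynomial.mem_support_iff.mpr hu2)
      have hv' := (support_hc b g v hv).1
      omega
    have h3 : MvPolynomial.coeff d (fr * gr) = 0 := by
      apply coeff_mul_eq_zero_of_forall
      intro u hu v hv
      obtain ⟨hu1, hu2⟩ := support_sub_hc a f u hu
      have : Finsupp.degree u ≤ a := hle f u (MvPolynomial.mem_support_iff.mpr hu2)
      obtain ⟨hv1, hv2⟩ := support_sub_hc b g v hv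
      have : Finsupp.degree v ≤ b := hle g v (MvPolynomial.mem_support_iff.mpr hv2)
      omega
    rw [h1, h2, h3]; ring
  have hmul0 : fb * gb ≠ 0 := mul_ne_zero hfb0 hgb0
  obtain ⟨d, hd⟩ := MvPolynomial.exists_coeff_ne_zero hmul0
  have hhom : (fb * gb).IsHomogeneous (a + b) :=
    (homogeneousComponent_isHomogeneous a f).mul (homogeneousComponent_isHomogeneous b g)
  have hdeg : d.degree = a + b := degree_of_isHomogeneous hhom hd
  exact ⟨d, hdeg, by rw [hsplit d hdeg]; exact hd⟩

lemma totalDegree_mul_eq {f g : MvPolynomial σ R} (hf : f ≠ 0) (hg : g ≠ 0) :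
    (f * g).totalDegree = f.totalDegree + g.totalDegree := by
  refine le_antisymm (MvPolynomial.totalDegree_mul f g) ?_
  obtain ⟨d, hd, hne⟩ := key_coeff_top hf hg
  calc f.totalDegree + g.totalDegree = Finsupp.degree d := hd.symm
    _ ≤ (f * g).totalDegree := MvPolynomial.le_totalDegree (MvPolynomial.mem_support_iff.mpr hne)

lemma isHomogeneous_of_mul_eq {f g w : MvPolynomial σ R} {T : ℕ}
    (hfg : f = g * w) (hf : f.IsHomogeneous T) (hg : g ≠ 0) (hw : w ≠ 0) :
    g.IsHomogeneous g.totalDegree := by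
  have hT1 : g.totalDegree + w.totalDegree = T := by
    obtain ⟨d, hd, hne⟩ := key_coeff_top hg hw
    rw [← hfg] at hne
    rw [← hd]
    exact (degree_of_isHomogeneous hf hne)
  have hT2 : botDeg g + botDeg w = T := by
    obtain ⟨d, hd, hne⟩ := key_coeff_bot hg hw
    rw [← hfg] at hne
    rw [← hd]
    exact (degree_of_isHomogeneous hf hne)
  have hg1 : botDeg g ≤ g.totalDegree := by
    obtain ⟨d, hd, he⟩ := exists_bot hg
    rw [← he]
    exact (le_of_eq rfl).trans (MvPolynomial.le_totalDegree hd)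
  have hw1 : botDeg w ≤ w.totalDegree := by
    obtain ⟨d, hd, he⟩ := exists_bot hw
    rw [← he]
    exact (le_of_eq rfl).trans (MvPolynomial.le_totalDegree hd)
  have hbg : botDeg g = g.totalDegree := by omega
  intro d hd
  rw [Pi.one_def, ← Finsupp.degree_eq_weight_one]
  have h1 : Finsupp.degree d ≤ g.totalDegree :=
    MvPolynomial.le_totalDegree (MvPolynomial.mem_support_iff.mpr hd)
  have h2 : botDeg g ≤ Finsupp.degree d := botDeg_le (MvPolynomial.mem_support_iff.mpr hd)
  omega

end AuxMv

namespace AuxMv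

open MvPolynomial

variable {σ R S : Type*} [CommRing R]

lemma eq_C_of_totalDegree_eq_zero {f : MvPolynomial σ R} (hf : f.totalDegree = 0) :
    f = MvPolynomial.C (MvPolynomial.coeff 0 f) := by
  classical
  apply MvPolynomial.ext
  intro d
  rw [MvPolynomial.coeff_C]
  by_cases hd : d = 0
  · rw [if_pos (by rw [hd]), hd]
  · rw [if_neg (Ne.symm hd)]
    by_contra hne
    have hd' : d ∈ f.support := MvPolynomial.mem_support_iff.mpr hne
    have := (MvPolynomial.totalDegree_eq_zero_iff σ f).mp hf d hd'
    exact hd (Finsupp.ext fun x => this x)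

lemma totalDegree_eq_zero_of_isUnit [IsDomain R] {f : MvPolynomial σ R} (hf : IsUnit f) :
    f.totalDegree = 0 := by
  obtain ⟨u, rfl⟩ := hf
  have h1 : (u : MvPolynomial σ R) * ↑u⁻¹ = 1 := u.mul_inv
  have hu0 : (u : MvPolynomial σ R) ≠ 0 := u.ne_zero
  have hv0 : (↑u⁻¹ : MvPolynomial σ R) ≠ 0 := u⁻¹.ne_zero
  have := totalDegree_mul_eq hu0 hv0
  rw [h1, MvPolynomial.totalDegree_one] at this
  omega

lemma isUnit_eq_C [IsDomain R] {f : MvPolynomial σ R} (hf : IsUnit f) :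
    f = MvPolynomial.C (MvPolynomial.coeff 0 f) :=
  eq_C_of_totalDegree_eq_zero (totalDegree_eq_zero_of_isUnit hf)

lemma totalDegree_prod_eq [IsDomain R] {ι : Type*} (s : Finset ι) (f : ι → MvPolynomial σ R)
    (h : ∀ i ∈ s, f i ≠ 0) :
    (∏ i ∈ s, f i).totalDegree = ∑ i ∈ s, (f i).totalDegree := by
  classical
  induction s using Finset.induction_on with
  | empty => simp
  | insert a s hnotmem ih =>
    rw [Finset.prod_insert hnotmem, Finset.sum_insert hnotmem,
      totalDegree_mul_eq (h a (Finset.mem_insert_self a s))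
        (Finset.prod_ne_zero_iff.mpr fun i hi => h i (Finset.mem_insert_of_mem hi)),
      ih fun i hi => h i (Finset.mem_insert_of_mem hi)]

lemma exists_preimage_map [CommRing S] (f : R →+* S) (g : MvPolynomial σ S)
    (h : ∀ d : σ →₀ ℕ, g.coeff d ∈ Set.range f) :
    ∃ G : MvPolynomial σ R, MvPolynomial.map f G = g := by
  classical
  choose c hc using h
  refine ⟨∑ d ∈ g.support, MvPolynomial.monomial d (c d), ?_⟩
  rw [map_sum]
  have : ∀ d ∈ g.support,
      MvPolynomial.map f (MvPolynomial.monomial d (c d))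
        = MvPolynomial.monomial d (g.coeff d) := by
    intro d _
    rw [MvPolynomial.map_monomial, hc d]
  rw [Finset.sum_congr rfl this, MvPolynomial.support_sum_monomial_coeff]

lemma associated_of_map_associated {A : Type*} [CommRing A] (Φ : A ≃+* A) {a b : A}
    (h : Associated (Φ a) (Φ b)) : Associated a b := by
  obtain ⟨u, hu⟩ := h
  refine ⟨Units.map Φ.symm.toRingHom.toMonoidHom u, ?_⟩
  have := congrArg Φ.symm hu
  rw [map_mul, RingEquiv.symm_apply_apply, RingEquiv.symm_apply_apply] at this
  rw [← this]
  rfl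

lemma associated_of_iterate_associated {A : Type*} [CommRing A] (Φ : A ≃+* A) {a b : A} (i : ℕ)
    (h : Associated (Φ^[i] a) (Φ^[i] b)) : Associated a b := by
  induction i with
  | zero => simpa using h
  | succ k ih =>
    apply ih
    rw [Function.iterate_succ_apply', Function.iterate_succ_apply'] at h
    exact associated_of_map_associated Φ h

end AuxMv

/-- Let `𝔽_q` be the finite field with `q = p^m` elements and let
`P ∈ 𝔽_q[x₁,…,xₙ]` be irreducible of total degree `t`.  Then there is a divisor `r` of `t`
and an absolutely irreducible polynomial `h` of total degree `t/r`, with coefficients in the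
subfield `𝔽_{q^r}` of the algebraic closure (i.e. fixed by the `q^r`-power Frobenius), such
that `P = c · ∏_{σ ∈ Gal(𝔽_{q^r}/𝔽_q)} σ(h)` with `c ∈ 𝔽_q`, where the Galois group consists
of the maps `x ↦ x^{q^j} = x^{p^{mj}}`, `0 ≤ j < r`, acting coefficientwise.  Moreover if `P`
is homogeneous then `h` may be taken homogeneous. -/
theorem irreducible_eq_prod_of_conjugates_of_absolutely_irreducible
    (p m q n t : ℕ) [Fact p.Prime] (hm : 0 < m) (hq : q = p ^ m)
    (F : Type) [Field F] [Fintype F] (hcard : Fintype.card F = q)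
    [ExpChar (AlgebraicClosure F) p]
    (P : MvPolynomial (Fin n) F) (hP : Irreducible P) (ht : P.totalDegree = t) :
    ∃ r : ℕ, r ∣ t ∧
      ∃ (h : MvPolynomial (Fin n) (AlgebraicClosure F)) (c : F),
        Irreducible h ∧
        h.totalDegree = t / r ∧
        (∀ d : Fin n →₀ ℕ, h.coeff d ^ q ^ r = h.coeff d) ∧
        MvPolynomial.map (algebraMap F (AlgebraicClosure F)) P =
          C (algebraMap F (AlgebraicClosure F) c) *
            ∏ j ∈ Finset.range r,
              MvPolynomial.map (iterateFrobenius (AlgebraicClosure F) p (m * j)) h ∧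
        (P.IsHomogeneous t → h.IsHomogeneous (t / r)) := by
  classical
  have hp : p.Prime := Fact.out
  have hq1 : 1 < q := by
    rw [hq]
    exact Nat.one_lt_pow (by omega) hp.one_lt
  have hqp : ∀ x : F, x ^ q = x := fun x => by rw [← hcard]; exact FiniteField.pow_card x
  set emb : F →+* AlgebraicClosure F := algebraMap F (AlgebraicClosure F) with hemb
  have hembInj : Function.Injective emb := emb.injective
  have hP0 : P ≠ 0 := hP.ne_zero
  -- t is positive
  have htpos : 0 < t := by
    rcases Nat.eq_zero_or_pos t with h0 | h; swap; · exact h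
    exfalso
    apply hP.not_isUnit
    have hPC : P = MvPolynomial.C (MvPolynomial.coeff 0 P) :=
      AuxMv.eq_C_of_totalDegree_eq_zero (by rw [ht, h0])
    have hc0 : MvPolynomial.coeff 0 P ≠ 0 := by
      intro hcc
      apply hP0
      rw [hPC, hcc, map_zero]
    rw [hPC]
    exact (isUnit_iff_ne_zero.mpr hc0).map (MvPolynomial.C : F →+* MvPolynomial (Fin n) F)
  set Q := MvPolynomial.map emb P with hQdef
  have hQ0 : Q ≠ 0 := fun h0 =>
    hP0 (MvPolynomial.map_injective emb hembInj (by rw [← hQdef, h0, map_zero]))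
  have hQtd : Q.totalDegree = t := by
    rw [hQdef, AuxMv.td_eq, MvPolynomial.support_map_of_injective _ hembInj, ← AuxMv.td_eq, ht]
  -- Frobenius setup
  set frob : AlgebraicClosure F →+* AlgebraicClosure F :=
    iterateFrobenius (AlgebraicClosure F) p m with hfrobdef
  have hfrob : ∀ x : AlgebraicClosure F, frob x = x ^ q := fun x => by
    rw [hfrobdef, iterateFrobenius_def, hq]
  set Φ : MvPolynomial (Fin n) (AlgebraicClosure F) ≃+*
      MvPolynomial (Fin n) (AlgebraicClosure F) :=
    MvPolynomial.mapEquiv (Fin n) (iterateFrobeniusEquiv (AlgebraicClosure F) p m) with hΦdef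
  have hΦapply : ∀ f : MvPolynomial (Fin n) (AlgebraicClosure F),
      Φ f = MvPolynomial.map frob f := by
    intro f
    rw [hΦdef, MvPolynomial.mapEquiv_apply]
    congr 1
  have hΦiter : ∀ (j : ℕ) (f : MvPolynomial (Fin n) (AlgebraicClosure F)),
      Φ^[j] f = MvPolynomial.map (iterateFrobenius (AlgebraicClosure F) p (m * j)) f := by
    intro j
    induction j with
    | zero =>
      intro f
      simp only [Function.iterate_zero_apply, Nat.mul_zero, iterateFrobenius_zero,
        MvPolynomial.map_id]
    | succ k ih =>
      intro f
      rw [Function.iterate_succ_apply', ih, hΦapply, MvPolynomial.map_map, hfrobdef]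
      have hcomp : (iterateFrobenius (AlgebraicClosure F) p m).comp
          (iterateFrobenius (AlgebraicClosure F) p (m * k)) =
          iterateFrobenius (AlgebraicClosure F) p (m * (k + 1)) := by
        rw [← iterateFrobenius_add]
        congr 1
        ring
      rw [hcomp]
  have hΦcoeff : ∀ (j : ℕ) (f : MvPolynomial (Fin n) (AlgebraicClosure F)) (d : Fin n →₀ ℕ),
      MvPolynomial.coeff d (Φ^[j] f) = (MvPolynomial.coeff d f) ^ q ^ j := by
    intro j f d
    rw [hΦiter, MvPolynomial.coeff_map, iterateFrobenius_def, hq, ← pow_mul]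
  have hfixF : ∀ x : F, frob (emb x) = emb x := by
    intro x
    rw [hfrob, ← map_pow, hqp]
  have hΦQ : Φ Q = Q := by
    apply MvPolynomial.ext
    intro d
    rw [hΦapply, MvPolynomial.coeff_map, hQdef, MvPolynomial.coeff_map, hfixF]
  have hΦiterQ : ∀ j : ℕ, Φ^[j] Q = Q := by
    intro j
    induction j with
    | zero => simp
    | succ k ih => rw [Function.iterate_succ_apply', ih, hΦQ]
  -- an irreducible factor, normalized
  have hQnu : ¬ IsUnit Q := fun hu => by
    have := AuxMv.totalDegree_eq_zero_of_isUnit hu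
    omega
  obtain ⟨h₁, hh₁irr, hh₁dvd⟩ := WfDvdMonoid.exists_irreducible_factor hQnu hQ0
  have hh₁0 : h₁ ≠ 0 := hh₁irr.ne_zero
  obtain ⟨d₀, hd₀⟩ := MvPolynomial.support_nonempty.mpr hh₁0
  set c₀ := MvPolynomial.coeff d₀ h₁ with hc₀def
  have hc₀ : c₀ ≠ 0 := MvPolynomial.mem_support_iff.mp hd₀
  have hcu : IsUnit (MvPolynomial.C c₀⁻¹ : MvPolynomial (Fin n) (AlgebraicClosure F)) :=
    (isUnit_iff_ne_zero.mpr (inv_ne_zero hc₀)).map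
      (MvPolynomial.C : AlgebraicClosure F →+* MvPolynomial (Fin n) (AlgebraicClosure F))
  set h : MvPolynomial (Fin n) (AlgebraicClosure F) := MvPolynomial.C c₀⁻¹ * h₁ with hhdef
  have hhirr : Irreducible h := (irreducible_isUnit_mul hcu).mpr hh₁irr
  have hh0 : h ≠ 0 := hhirr.ne_zero
  have hhd₀ : MvPolynomial.coeff d₀ h = 1 := by
    rw [hhdef, MvPolynomial.coeff_C_mul, ← hc₀def, inv_mul_cancel₀ hc₀]
  have hhdvd : h ∣ Q := (Associated.dvd_iff_dvd_left
    (associated_unit_mul_left h₁ _ hcu)).mpr hh₁dvd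
  -- iterates of h
  have hiterIrr : ∀ j : ℕ, Irreducible (Φ^[j] h) := by
    intro j
    induction j with
    | zero => simpa using hhirr
    | succ k ih => rw [Function.iterate_succ_apply']; exact ih.map Φ
  have hiterDvd : ∀ j : ℕ, Φ^[j] h ∣ Q := by
    intro j
    have h1 : Φ^[j] h ∣ Φ^[j] Q := by
      rw [hΦiter j h, hΦiter j Q]
      exact map_dvd _ hhdvd
    rwa [hΦiterQ j] at h1
  -- pigeonhole on irreducible factors of Q
  set facs := UniqueFactorizationMonoid.factors Q with hfacs
  have hchoice : ∀ j : ℕ, ∃ qf, qf ∈ facs ∧ Associated (Φ^[j] h) qf := fun j =>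
    UniqueFactorizationMonoid.exists_mem_factors_of_dvd hQ0 (hiterIrr j) (hiterDvd j)
  choose qf hqfmem hqfassoc using hchoice
  have hpig : ∃ i ∈ Finset.range (facs.toFinset.card + 1),
      ∃ j ∈ Finset.range (facs.toFinset.card + 1), i ≠ j ∧ qf i = qf j := by
    exact Finset.exists_ne_map_eq_of_card_lt_of_maps_to
      (t := facs.toFinset) (by rw [Finset.card_range]; omega)
      (fun i _ => Multiset.mem_toFinset.mpr (hqfmem i))
  obtain ⟨i, -, j, -, hij, hqeq⟩ := hpig
  have hstrip : ∀ i j : ℕ, i < j → Associated (Φ^[i] h) (Φ^[j] h) →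
      Associated (Φ^[j - i] h) h := by
    intro i j hlt hassoc
    apply (AuxMv.associated_of_iterate_associated Φ i _).symm
    have : Φ^[i] (Φ^[j - i] h) = Φ^[j] h := by
      rw [← Function.iterate_add_apply]
      congr 1
      omega
    rw [this]
    exact hassoc
  have hex : ∃ rr : ℕ, 0 < rr ∧ Associated (Φ^[rr] h) h := by
    rcases Nat.lt_or_ge i j with hlt | hge
    · refine ⟨j - i, by omega, hstrip i j hlt ((hqfassoc i).trans ?_)⟩
      rw [hqeq]
      exact (hqfassoc j).symm
    · have hlt : j < i := by omega
      refine ⟨i - j, by omega, hstrip j i hlt ((hqfassoc j).trans ?_)⟩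
      rw [← hqeq]
      exact (hqfassoc i).symm
  set r := Nat.find hex with hrdef
  obtain ⟨hrpos, hrassoc⟩ : 0 < r ∧ Associated (Φ^[r] h) h := Nat.find_spec hex
  -- the r-th Frobenius iterate fixes h exactly
  obtain ⟨u, hu⟩ := hrassoc
  have huC : (↑u : MvPolynomial (Fin n) (AlgebraicClosure F)) =
      MvPolynomial.C (MvPolynomial.coeff 0 (↑u : MvPolynomial (Fin n) (AlgebraicClosure F))) :=
    AuxMv.isUnit_eq_C u.isUnit
  set e := MvPolynomial.coeff 0 (↑u : MvPolynomial (Fin n) (AlgebraicClosure F)) with hedef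
  have hfixr : Φ^[r] h = h := by
    have hco : MvPolynomial.coeff d₀ (Φ^[r] h) = 1 := by
      rw [hΦcoeff r h d₀, hhd₀, one_pow]
    have he1 : e = 1 := by
      have h2 := congrArg (MvPolynomial.coeff d₀) hu
      rw [huC, mul_comm, MvPolynomial.coeff_C_mul, hco, mul_one, hhd₀] at h2
      exact h2
    have h3 := hu
    rw [huC, he1, map_one, mul_one] at h3
    exact h3
  have hcoefix : ∀ d : Fin n →₀ ℕ, MvPolynomial.coeff d h ^ q ^ r = MvPolynomial.coeff d h := by
    intro d
    rw [← hΦcoeff r h d, hfixr]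
  -- the conjugates are pairwise non-associated
  have hdist : ∀ i ∈ Finset.range r, ∀ j ∈ Finset.range r, i ≠ j →
      Associates.mk (Φ^[i] h) ≠ Associates.mk (Φ^[j] h) := by
    have key : ∀ i j : ℕ, i < j → j < r → Associates.mk (Φ^[i] h) ≠ Associates.mk (Φ^[j] h) := by
      intro i j hlt hjr heq
      have hassoc := hstrip i j hlt (Associates.mk_eq_mk_iff_associated.mp heq)
      exact Nat.find_min hex (m := j - i) (by omega) ⟨by omega, hassoc⟩
    intro i hi j hj hij
    rw [Finset.mem_range] at hi hj
    rcases Nat.lt_or_ge i j with hlt | hge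
    · exact key i j hlt hj
    · exact fun heq => key j i (by omega) hi heq.symm
  -- the product of the conjugates divides Q
  set g := ∏ jj ∈ Finset.range r, Φ^[jj] h with hgdef
  have hgne : ∀ jj ∈ Finset.range r, Φ^[jj] h ≠ 0 := fun jj _ => (hiterIrr jj).ne_zero
  have hg0 : g ≠ 0 := by
    rw [hgdef]
    exact Finset.prod_ne_zero_iff.mpr hgne
  have hgdvd : g ∣ Q := by
    rw [← Associates.mk_dvd_mk]
    have hmk : Associates.mk g = ∏ jj ∈ Finset.range r, Associates.mk (Φ^[jj] h) := by
      rw [hgdef]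
      exact map_prod Associates.mkMonoidHom _ _
    have himage : ∏ x ∈ (Finset.range r).image (fun jj => Associates.mk (Φ^[jj] h)), x =
        ∏ jj ∈ Finset.range r, Associates.mk (Φ^[jj] h) :=
      Finset.prod_image fun i hi j hj hne => by_contra fun hc => hdist i hi j hj hc hne
    rw [hmk, ← himage]
    apply Finset.prod_primes_dvd
    · intro a ha
      obtain ⟨jj, -, rfl⟩ := Finset.mem_image.mp ha
      exact Associates.prime_mk.mpr
        ((UniqueFactorizationMonoid.irreducible_iff_prime.mp (hiterIrr jj)))
    · intro a ha
      obtain ⟨jj, -, rfl⟩ := Finset.mem_image.mp ha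
      exact Associates.mk_dvd_mk.mpr (hiterDvd jj)
  obtain ⟨w, hw⟩ := hgdvd
  have hw0 : w ≠ 0 := by
    intro h0
    rw [h0, mul_zero] at hw
    exact hQ0 hw
  -- g and w are Frobenius-fixed
  have hΦg : Φ g = g := by
    have e1 : ∏ jj ∈ Finset.range (r + 1), Φ^[jj] h = g * Φ^[r] h := by
      rw [hgdef]
      exact Finset.prod_range_succ _ r
    have e3 : Φ g = ∏ jj ∈ Finset.range r, Φ^[jj + 1] h := by
      rw [hgdef, map_prod]
      exact Finset.prod_congr rfl fun jj _ => (Function.iterate_succ_apply' Φ jj h).symm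
    have e2 : ∏ jj ∈ Finset.range (r + 1), Φ^[jj] h = h * Φ g := by
      rw [Finset.prod_range_succ' _ r, e3, mul_comm, Function.iterate_zero_apply]
    have h1 : g * h = h * Φ g := by
      rw [← hfixr, ← e1, e2, hfixr]
    apply mul_left_cancel₀ hh0
    rw [← h1, mul_comm]
  have hΦw : Φ w = w := by
    apply mul_left_cancel₀ hg0
    have hQ2 := hΦQ
    rw [hw, map_mul, hΦg] at hQ2
    rw [hQ2]
  -- Frobenius-fixed elements lie in the base field
  have hrange : ∀ x : AlgebraicClosure F, x ^ q = x → ∃ y : F, emb y = x := by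
    intro x hx
    set fpoly : Polynomial (AlgebraicClosure F) := Polynomial.X ^ q - Polynomial.X with hfp
    have hfp0 : fpoly ≠ 0 := by
      intro h0
      have hcf : fpoly.coeff q = 1 := by
        rw [hfp, Polynomial.coeff_sub, Polynomial.coeff_X_pow, if_pos rfl,
          Polynomial.coeff_X, if_neg (by omega), sub_zero]
      rw [h0, Polynomial.coeff_zero] at hcf
      exact one_ne_zero hcf.symm
    have hroot : ∀ y : F, emb y ∈ fpoly.roots := by
      intro y
      rw [Polynomial.mem_roots hfp0]
      show fpoly.eval (emb y) = 0
      rw [hfp, Polynomial.eval_sub, Polynomial.eval_pow, Polynomial.eval_X, ← map_pow, hqp,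
        sub_self]
    set T : Finset (AlgebraicClosure F) := Finset.univ.image emb with hT
    have hTsub : T ⊆ fpoly.roots.toFinset := by
      intro z hz
      obtain ⟨y, -, rfl⟩ := Finset.mem_image.mp hz
      exact Multiset.mem_toFinset.mpr (hroot y)
    have hTcard : T.card = q := by
      rw [hT, Finset.card_image_of_injective _ hembInj, Finset.card_univ, hcard]
    have hdegle : fpoly.natDegree ≤ q := by
      apply le_trans (Polynomial.natDegree_sub_le _ _)
      simp [Polynomial.natDegree_X_pow, Polynomial.natDegree_X]
      omega
    have hrc : fpoly.roots.toFinset.card ≤ q :=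
      le_trans (Multiset.toFinset_card_le _) (le_trans (Polynomial.card_roots' fpoly) hdegle)
    have hTeq : T = fpoly.roots.toFinset :=
      Finset.eq_of_subset_of_card_le hTsub (by omega)
    have hxmem : x ∈ fpoly.roots.toFinset := by
      apply Multiset.mem_toFinset.mpr
      rw [Polynomial.mem_roots hfp0]
      show fpoly.eval x = 0
      rw [hfp, Polynomial.eval_sub, Polynomial.eval_pow, Polynomial.eval_X, hx, sub_self]
    rw [← hTeq] at hxmem
    obtain ⟨y, -, hy⟩ := Finset.mem_image.mp hxmem
    exact ⟨y, hy⟩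
  -- descend g and w to F
  have hfixed_coeff : ∀ (v : MvPolynomial (Fin n) (AlgebraicClosure F)), Φ v = v →
      ∀ d : Fin n →₀ ℕ, MvPolynomial.coeff d v ∈ Set.range emb := by
    intro v hv d
    have h1 : frob (MvPolynomial.coeff d v) = MvPolynomial.coeff d v := by
      conv_rhs => rw [← hv]
      rw [hΦapply, MvPolynomial.coeff_map]
    rw [hfrob] at h1
    obtain ⟨y, hy⟩ := hrange _ h1
    exact ⟨y, hy⟩
  obtain ⟨G, hG⟩ := AuxMv.exists_preimage_map emb g (hfixed_coeff g hΦg)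
  obtain ⟨W, hW⟩ := AuxMv.exists_preimage_map emb w (hfixed_coeff w hΦw)
  have hPGW : P = G * W := by
    apply MvPolynomial.map_injective emb hembInj
    rw [map_mul (MvPolynomial.map emb) G W, hG, hW, ← hw, ← hQdef]
  -- G is not a unit, so W is
  have hUW : IsUnit W := by
    rcases hP.isUnit_or_isUnit hPGW with hUG | hUW
    · exfalso
      have hUg : IsUnit g := by
        rw [← hG]
        exact hUG.map (MvPolynomial.map emb)
      have hhdvdg : h ∣ g := by
        have := Finset.dvd_prod_of_mem (fun jj => Φ^[jj] h)
          (Finset.mem_range.mpr hrpos : 0 ∈ Finset.range r)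
        simpa using this
      exact hhirr.not_isUnit (isUnit_of_dvd_unit hhdvdg hUg)
    · exact hUW
  have hWC : W = MvPolynomial.C (MvPolynomial.coeff 0 W) := AuxMv.isUnit_eq_C hUW
  set c := MvPolynomial.coeff 0 W with hcdef
  -- degrees
  have htdh : ∀ jj : ℕ, (Φ^[jj] h).totalDegree = h.totalDegree := by
    intro jj
    rw [hΦiter, AuxMv.td_eq,
      MvPolynomial.support_map_of_injective _
        (iterateFrobenius (AlgebraicClosure F) p (m * jj)).injective,
      ← AuxMv.td_eq]
  have htg : g.totalDegree = r * h.totalDegree := by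
    rw [hgdef, AuxMv.totalDegree_prod_eq _ _ hgne]
    rw [Finset.sum_congr rfl fun jj _ => htdh jj, Finset.sum_const, Finset.card_range,
      smul_eq_mul]
  have hwtd : w.totalDegree = 0 := by
    rw [← hW, hWC, MvPolynomial.map_C, MvPolynomial.totalDegree_C]
  have htQ : t = r * h.totalDegree := by
    have h1 : Q.totalDegree = g.totalDegree + w.totalDegree :=
      hw ▸ AuxMv.totalDegree_mul_eq hg0 hw0
    rw [hQtd, hwtd, Nat.add_zero, htg] at h1
    exact h1
  have hrdvd : r ∣ t := Dvd.intro _ htQ.symm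
  have htdiv : h.totalDegree = t / r := by
    rw [htQ, Nat.mul_div_cancel_left _ hrpos]
  -- assemble
  refine ⟨r, hrdvd, h, c, hhirr, htdiv, hcoefix, ?_, ?_⟩
  · have hwc : w = MvPolynomial.C (emb c) := by
      rw [← hW, hWC, MvPolynomial.map_C, hcdef]
    calc MvPolynomial.map emb P = Q := by rw [hQdef]
      _ = g * w := hw
      _ = MvPolynomial.C (emb c) * g := by rw [hwc, mul_comm]
      _ = MvPolynomial.C (emb c) *
          ∏ jj ∈ Finset.range r,
            MvPolynomial.map (iterateFrobenius (AlgebraicClosure F) p (m * jj)) h := by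
        rw [hgdef]
        exact congrArg _ (Finset.prod_congr rfl fun jj _ => hΦiter jj h)
  · intro hPhom
    have hQhom : Q.IsHomogeneous t := by
      rw [hQdef]
      exact hPhom.map emb
    obtain ⟨w2, hw2⟩ := hhdvd
    have hw20 : w2 ≠ 0 := by
      intro h0
      rw [h0, mul_zero] at hw2
      exact hQ0 hw2
    have := AuxMv.isHomogeneous_of_mul_eq hw2 hQhom hh0 hw20
    rwa [htdiv] at this
end
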